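/- arXiv:1311.0738 — 7 statements merged into one kernel-verified Lean document; each statement's English description precedes it below -/
import Mathlib

section
/- Let G be a countable group containing a subgroup isomorphic to the free group F₂ on two generators. Then for every probability-measure-preserving Borel action of G on a standard probability space (X, μ), there is a G-invariant Borel probability measure ν on the Bernoulli shift 2^G = {1,2}^G (with the left shift action) such that G ⟶ (2^G, ν) factors onto G ⟶ (X, μ), i.e. there is a ν-almost-everywhere defined G-equivariant Borel map φ : 2^G → X with φ_*ν = μ. -/
open MeasureTheory

/-- The left shift action of `G` on the Bernoulli shift `K^G`. -/
def bshift {G : Type*} [Group G] (K : Type*) (g : G) (x : G → K) : G → K :=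
  fun h => x (g⁻¹ * h)

/-!
`F₂ = ⟨a, b⟩` contains the free group on `yₙ = aⁿ b a⁻ⁿ` (`n ∈ ℤ`), hence so does `G`. Embed `X`
Borel-injectively into `2^ℤ` by `b`; then `Ψ x = (g ↦ b (g⁻¹ • x))` is an equivariant embedding of
`X` into `(2^ℤ)^G`. The edge-difference map `D : 2^G → (2^ℤ)^G`, `D ω g n = ω (g yₙ) - ω g`, is a
continuous equivariant homomorphism, and it has a Borel section `s`: the `yₙ` act freely on `G`,
so every coset of `⟨yₙ⟩` is a tree, on which edge labels integrate uniquely once a root is fixed.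
Its kernel `K` is a compact shift-invariant subgroup. Let `ν` be the law of `s (Ψ x) + k`, with
`x ∼ μ` and `k` Haar-distributed on `K`. It is shift-invariant because `g • s (Ψ x)` and
`s (Ψ (g • x))` differ by an element of `K`, and `x` is read off from `ω` as `b⁻¹ (D ω 1)`.
-/

namespace BernoulliFactor

open FreeGroup (of lift freeGroupCongr)

section FreeSubgroup

noncomputable def shiftAut : Multiplicative ℤ →* MulAut (FreeGroup ℤ) where
  toFun k := freeGroupCongr (Equiv.addRight k.toAdd)
  map_one' := by ext; simp
  map_mul' a b := by
    rw [MulAut.mul_def, FreeGroup.freeGroupCongr_trans]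
    congr 1
    ext
    simp only [Equiv.coe_addRight, Equiv.trans_apply, toAdd_mul]
    abel

lemma shiftAut_of (k : Multiplicative ℤ) (m : ℤ) : shiftAut k (of m) = of (m + k.toAdd) := by
  simp [shiftAut]

noncomputable def conjPowHom : FreeGroup ℤ →* FreeGroup (Fin 2) :=
  lift fun n => of 0 ^ n * of 1 * of 0 ^ (-n)

noncomputable def conjPowDetector :
    FreeGroup (Fin 2) →* FreeGroup ℤ ⋊[shiftAut] Multiplicative ℤ :=
  lift ![SemidirectProduct.inr (.ofAdd 1), SemidirectProduct.inl (of 0)]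

lemma conjPowDetector_comp_conjPowHom :
    conjPowDetector.comp conjPowHom = SemidirectProduct.inl := by
  refine FreeGroup.ext_hom _ _ fun n => ?_
  have hpow : conjPowDetector (of 0 ^ n) = SemidirectProduct.inr (.ofAdd n) := by
    rw [map_zpow]
    simp [conjPowDetector, ← map_zpow, ← ofAdd_zsmul]
  have hb : conjPowDetector (of 1) = SemidirectProduct.inl (of 0) := by simp [conjPowDetector]
  simp only [MonoidHom.comp_apply, conjPowHom, FreeGroup.lift_apply_of, map_mul, zpow_neg,
    map_inv, hpow, hb]
  rw [← map_inv, ← SemidirectProduct.inl_aut, shiftAut_of, zero_add, toAdd_ofAdd]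

lemma conjPowHom_injective : Function.Injective conjPowHom := by
  refine Function.Injective.of_comp (f := conjPowDetector) ?_
  rw [← MonoidHom.coe_comp, conjPowDetector_comp_conjPowHom]
  exact SemidirectProduct.inl_injective

end FreeSubgroup

section Shift

variable {G : Type*} [Group G] (K : Type*)

lemma bshift_bshift_inv (g : G) (x : G → K) : bshift K g (bshift K g⁻¹ x) = x := by
  ext; simp [bshift]

lemma bshift_inv_bshift (g : G) (x : G → K) : bshift K g⁻¹ (bshift K g x) = x := by
  simpa using bshift_bshift_inv K g⁻¹ x

lemma bshift_eq_zero_iff [Zero K] (g : G) (x : G → K) : bshift K g x = 0 ↔ x = 0 :=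
  ⟨fun h => by rw [← bshift_inv_bshift K g x, h]; rfl, fun h => by rw [h]; rfl⟩

def bshiftEquiv [Add K] [TopologicalSpace K] (g : G) : (G → K) ≃ₜ+ (G → K) where
  toFun := bshift K g
  invFun := bshift K g⁻¹
  left_inv := bshift_inv_bshift K g
  right_inv := bshift_bshift_inv K g
  map_add' _ _ := rfl
  continuous_toFun := continuous_pi fun _ => continuous_apply _
  continuous_invFun := continuous_pi fun _ => continuous_apply _

@[simp]
lemma bshiftEquiv_apply [Add K] [TopologicalSpace K] (g : G) (x : G → K) :
    bshiftEquiv K g x = bshift K g x := rfl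

end Shift

section TreeLift

variable {G α A : Type*} [Group G] [AddGroup A] (j : FreeGroup α →* G)

/-- The sum of the labels along the path from `t` spelled by `L`, where the edge
`g — g * j (of n)` carries the label `η g n`. -/
def pathSum (η : G → α → A) (t : G) : List (α × Bool) → A
  | [] => 0
  | (n, true) :: L => η t n + pathSum η (t * j (of n)) L
  | (n, false) :: L => -η (t * (j (of n))⁻¹) n + pathSum η (t * (j (of n))⁻¹) L

lemma pathSum_append (η : G → α → A) (t : G) (L₁ L₂ : List (α × Bool)) :
    pathSum j η t (L₁ ++ L₂) = pathSum j η t L₁ + pathSum j η (t * j (FreeGroup.mk L₁)) L₂ := by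
  induction L₁ generalizing t with
  | nil => simp [pathSum, ← FreeGroup.one_eq_mk]
  | cons p L ih =>
    have hmk : FreeGroup.mk (p :: L) = FreeGroup.mk [p] * FreeGroup.mk L := by
      rw [FreeGroup.mul_mk]; rfl
    obtain ⟨n, _ | _⟩ := p
    · have hinv : FreeGroup.mk [(n, false)] = (of n)⁻¹ := by
        simp [of, FreeGroup.inv_mk, FreeGroup.invRev]
      simp only [pathSum, List.cons_append, ih, hmk, hinv, map_mul, map_inv, mul_assoc, add_assoc]
    · simp only [pathSum, List.cons_append, ih, hmk, map_mul, mul_assoc, add_assoc]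
      rfl

lemma pathSum_cancel (η : G → α → A) (t : G) (n : α) (b : Bool) (L : List (α × Bool)) :
    pathSum j η t ((n, b) :: (n, !b) :: L) = pathSum j η t L := by
  cases b <;> simp [pathSum]

def wordSum (η : G → α → A) (t : G) : FreeGroup α → A :=
  Quot.lift (pathSum j η t) fun _ _ h => by
    cases h
    rw [pathSum_append, pathSum_append, pathSum_cancel]

lemma wordSum_mul_of (η : G → α → A) (t : G) (w : FreeGroup α) (n : α) :
    wordSum j η t (w * of n) = wordSum j η t w + η (t * j w) n := by
  induction w using Quot.ind with
  | mk L =>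
    change pathSum j η t (L ++ [(n, true)]) = pathSum j η t L + _
    simp [pathSum_append, pathSum]

lemma measurable_pathSum [MeasurableSpace A] [MeasurableAdd₂ A] [MeasurableNeg A] (t : G)
    (L : List (α × Bool)) : Measurable fun η : G → α → A => pathSum j η t L := by
  induction L generalizing t with
  | nil => exact measurable_const
  | cons p L ih => obtain ⟨n, _ | _⟩ := p <;> exact (by fun_prop : Measurable _).add (ih _)

lemma measurable_wordSum [MeasurableSpace A] [MeasurableAdd₂ A] [MeasurableNeg A] (t : G)
    (w : FreeGroup α) : Measurable fun η : G → α → A => wordSum j η t w := by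
  induction w using Quot.ind with
  | mk L => exact measurable_pathSum j t L

noncomputable def cosetRep (g : G) : G := (QuotientGroup.mk g : G ⧸ j.range).out

lemma cosetRep_mul (g : G) (u : FreeGroup α) : cosetRep j (g * j u) = cosetRep j g := by
  rw [cosetRep, cosetRep]
  congr 1
  exact QuotientGroup.eq.mpr (MonoidHom.mem_range.mpr ⟨u⁻¹, by simp⟩)

lemma exists_cosetRep_mul_eq (g : G) : ∃ w, cosetRep j g * j w = g := by
  obtain ⟨⟨_, w, rfl⟩, h⟩ := QuotientGroup.mk_out_eq_mul j.range g
  exact ⟨w⁻¹, by simp [cosetRep, h]⟩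

noncomputable def cosetWord (g : G) : FreeGroup α := (exists_cosetRep_mul_eq j g).choose

lemma cosetRep_mul_cosetWord (g : G) : cosetRep j g * j (cosetWord j g) = g :=
  (exists_cosetRep_mul_eq j g).choose_spec

lemma cosetWord_mul (hj : Function.Injective j) (g : G) (u : FreeGroup α) :
    cosetWord j (g * j u) = cosetWord j g * u := by
  apply hj
  apply mul_left_cancel (a := cosetRep j g)
  have h := cosetRep_mul_cosetWord j (g * j u)
  rw [cosetRep_mul] at h
  rw [h, map_mul, ← mul_assoc, cosetRep_mul_cosetWord]

/-- Integrates the edge labels `η` on every coset of `j.range`, starting from `0` at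
`cosetRep j g`. -/
noncomputable def treeLift (η : G → α → A) (g : G) : A :=
  wordSum j η (cosetRep j g) (cosetWord j g)

lemma treeLift_mul_of (hj : Function.Injective j) (η : G → α → A) (g : G) (n : α) :
    treeLift j η (g * j (of n)) = treeLift j η g + η g n := by
  rw [treeLift, cosetRep_mul, cosetWord_mul j hj, wordSum_mul_of,
    cosetRep_mul_cosetWord, treeLift]

lemma measurable_treeLift [MeasurableSpace A] [MeasurableAdd₂ A] [MeasurableNeg A] :
    Measurable (treeLift j : (G → α → A) → G → A) :=
  measurable_pi_iff.mpr fun _ => measurable_wordSum j _ _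

end TreeLift

section EdgeDiff

variable {G α A : Type*} [Group G] [AddCommGroup A] (j : FreeGroup α →* G)

def edgeDiff : (G → A) →+ (G → α → A) where
  toFun ω g n := ω (g * j (of n)) - ω g
  map_zero' := by ext; simp
  map_add' ω ω' := by ext; simp only [Pi.add_apply]; abel

lemma edgeDiff_apply (ω : G → A) (g : G) (n : α) :
    edgeDiff j ω g n = ω (g * j (of n)) - ω g := rfl

lemma edgeDiff_treeLift (hj : Function.Injective j) (η : G → α → A) :
    edgeDiff j (treeLift j η) = η := by
  ext g n
  rw [edgeDiff_apply, treeLift_mul_of j hj, add_sub_cancel_left]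

lemma edgeDiff_bshift (g : G) (ω : G → A) :
    edgeDiff j (bshift A g ω) = bshift (α → A) g (edgeDiff j ω) := by
  ext h n
  simp [edgeDiff_apply, bshift, mul_assoc]

lemma continuous_edgeDiff [TopologicalSpace A] [ContinuousSub A] :
    Continuous (edgeDiff j : (G → A) → G → α → A) :=
  continuous_pi fun _ => continuous_pi fun _ => (continuous_apply _).sub (continuous_apply _)

lemma measurable_edgeDiff [MeasurableSpace A] [MeasurableSub₂ A] :
    Measurable (edgeDiff j : (G → A) → G → α → A) :=
  measurable_pi_iff.mpr fun _ => measurable_pi_iff.mpr fun _ =>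
    (measurable_pi_apply _).sub (measurable_pi_apply _)

lemma bshift_mem_ker_edgeDiff_iff (g : G) (ω : G → A) :
    bshift A g ω ∈ (edgeDiff j).ker ↔ ω ∈ (edgeDiff j).ker := by
  simp only [AddMonoidHom.mem_ker, edgeDiff_bshift, bshift_eq_zero_iff]

end EdgeDiff

section HaarInvariance

variable {M : Type*} [AddGroup M] [TopologicalSpace M] [IsTopologicalAddGroup M]
  [MeasurableSpace M] [BorelSpace M]

lemma map_continuousAddEquiv_eq_self [LocallyCompactSpace M] (m : Measure M)
    [IsProbabilityMeasure m] [m.IsAddHaarMeasure] (e : M ≃ₜ+ M) : m.map e = m :=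
  have : IsProbabilityMeasure (m.map e) :=
    Measure.isProbabilityMeasure_map e.continuous.aemeasurable
  Measure.isAddHaarMeasure_eq_of_isProbabilityMeasure _ _

lemma isProbabilityMeasure_addHaarMeasure_top [CompactSpace M] [Nonempty M] :
    IsProbabilityMeasure (Measure.addHaarMeasure ⊤ : Measure M) :=
  ⟨by rw [← TopologicalSpace.PositiveCompacts.coe_top]; exact Measure.addHaarMeasure_self⟩

end HaarInvariance

def _root_.ContinuousAddEquiv.restrictAddSubgroup {A : Type*} [AddGroup A] [TopologicalSpace A]
    (S : A ≃ₜ+ A) (K : AddSubgroup A) (hSK : ∀ a, S a ∈ K ↔ a ∈ K) : K ≃ₜ+ K where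
  __ := S.toHomeomorph.subtype fun a => (hSK a).symm
  map_add' a b := Subtype.ext (map_add S (a : A) b)

section TranslateLaw

variable {Y A : Type*} [MeasurableSpace Y] [AddCommGroup A] [TopologicalSpace A]
  [IsTopologicalAddGroup A] [SecondCountableTopology A] [MeasurableSpace A] [BorelSpace A]
  {K : AddSubgroup A}

noncomputable def translateLaw (μ : Measure Y) (f : Y → A) (m : Measure K) : Measure A :=
  (μ.prod m).map fun p => f p.1 + p.2

variable {μ : Measure Y} {f : Y → A} (m : Measure K)

lemma measurable_translate (hf : Measurable f) : Measurable fun p : Y × K => f p.1 + p.2 :=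
  (hf.comp measurable_fst).add (measurable_subtype_coe.comp measurable_snd :
    Measurable fun p : Y × K => (p.2 : A))

lemma isProbabilityMeasure_translateLaw [IsProbabilityMeasure μ] [IsProbabilityMeasure m]
    (hf : Measurable f) : IsProbabilityMeasure (translateLaw μ f m) :=
  Measure.isProbabilityMeasure_map (measurable_translate hf).aemeasurable

lemma map_translateLaw_of_leftInverse [IsProbabilityMeasure m] (hf : Measurable f) {φ : A → Y}
    (hφ : Measurable φ) (hφf : ∀ y, ∀ k ∈ K, φ (f y + k) = y) :
    (translateLaw μ f m).map φ = μ := by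
  have hfst : φ ∘ (fun p : Y × K => f p.1 + p.2) = Prod.fst := funext fun p => hφf _ _ p.2.2
  rw [translateLaw, Measure.map_map hφ (measurable_translate hf), hfst, Measure.map_fst_prod,
    measure_univ, one_smul]

lemma ae_translateLaw (hf : Measurable f) {p : A → Prop} (hp : MeasurableSet {a | p a})
    (h : ∀ y, ∀ k ∈ K, p (f y + k)) : ∀ᵐ a ∂translateLaw μ f m, p a := by
  rw [translateLaw, ae_map_iff (measurable_translate hf).aemeasurable hp]
  exact ae_of_all _ fun q => h _ _ q.2.2

/-- Since `S (f y + k) = f (T y) + (S k + c y)` with `c y = S (f y) - f (T y) ∈ K`, the shift `S`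
is conjugate to the skew product `(y, k) ↦ (T y, S k + c y)`, which preserves `μ ⊗ m`. -/
lemma map_translateLaw_eq [CompactSpace K] [SFinite μ] [IsProbabilityMeasure m]
    [m.IsAddHaarMeasure] {T : Y → Y} (hT : MeasurePreserving T μ μ) (hf : Measurable f)
    (S : A ≃ₜ+ A) (hSK : ∀ a, S a ∈ K ↔ a ∈ K) (hfT : ∀ y, S (f y) - f (T y) ∈ K) :
    (translateLaw μ f m).map S = translateLaw μ f m := by
  let e := S.restrictAddSubgroup K hSK
  let c (y : Y) : K := ⟨S (f y) - f (T y), hfT y⟩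
  have hS : Measurable S := S.continuous.measurable
  have hskew_meas : Measurable fun p : Y × K => e p.2 + c p.1 := by
    refine Measurable.subtype_mk ?_
    exact (hS.comp (measurable_subtype_coe.comp measurable_snd)).add
      (((hS.comp hf).sub (hf.comp hT.measurable)).comp measurable_fst)
  have hfiber (y : Y) : m.map (fun k => e k + c y) = m := by
    rw [show (fun k => e k + c y) = (· + c y) ∘ e from rfl,
      ← Measure.map_map (measurable_add_const _) (map_continuous e).measurable,
      map_continuousAddEquiv_eq_self, map_add_right_eq_self]
  have hskew :
      MeasurePreserving (fun p : Y × K => (T p.1, e p.2 + c p.1)) (μ.prod m) (μ.prod m) :=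
    hT.skew_product hskew_meas (ae_of_all _ hfiber)
  have hconj : S ∘ (fun p : Y × K => f p.1 + p.2) =
      (fun p : Y × K => f p.1 + p.2) ∘ (fun p : Y × K => (T p.1, e p.2 + c p.1)) := by
    funext p
    simp only [Function.comp_apply, map_add]
    change S (f p.1) + S p.2 = f (T p.1) + (S p.2 + (S (f p.1) - f (T p.1)))
    abel
  rw [translateLaw, Measure.map_map hS (measurable_translate hf), hconj,
    ← Measure.map_map (measurable_translate hf) hskew.measurable, hskew.map_eq]

end TranslateLaw

lemma exists_measurable_leftInverse_of_not_countable {X Z : Type*} [MeasurableSpace X]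
    [StandardBorelSpace X] [Nonempty X] [MeasurableSpace Z] [StandardBorelSpace Z]
    (hZ : ¬ Countable Z) :
    ∃ (b : X → Z) (r : Z → X), Measurable b ∧ Measurable r ∧ Function.LeftInverse r b := by
  obtain ⟨f, hf⟩ := exists_measurableEmbedding_real X
  have hb :=
    (PolishSpace.measurableEquivOfNotCountable not_countable hZ).measurableEmbedding.comp hf
  obtain ⟨r, hr, hrb⟩ := hb.exists_measurable_extend measurable_id fun _ => inferInstance
  exact ⟨_, r, hb.measurable, hr, congrFun hrb⟩

lemma not_countable_int_to_fin_two : ¬ Countable (ℤ → Fin 2) := by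
  rw [← Cardinal.mk_le_aleph0_iff, not_le]
  simpa using Cardinal.cantor Cardinal.aleph0

lemma exists_equivariant_itinerary {G X Z : Type*} [Group G] [MeasurableSpace X]
    [StandardBorelSpace X] [Nonempty X] [MulAction G X] [MeasurableSpace Z] [StandardBorelSpace Z]
    (hZ : ¬ Countable Z) (hmeas : ∀ g : G, Measurable fun x : X => g • x) :
    ∃ (Ψ : X → G → Z) (r : Z → X), Measurable Ψ ∧ Measurable r ∧
      (∀ (g : G) x, Ψ (g • x) = bshift Z g (Ψ x)) ∧ ∀ x, r (Ψ x 1) = x := by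
  obtain ⟨b, r, hb, hr, hrb⟩ := exists_measurable_leftInverse_of_not_countable (X := X) hZ
  refine ⟨fun x g => b (g⁻¹ • x), r, measurable_pi_iff.mpr fun g => hb.comp (hmeas g⁻¹), hr,
    fun g x => ?_, fun x => by simp [hrb x]⟩
  ext h
  simp [bshift, mul_smul]

theorem exists_bernoulli_factor {G : Type*} [Group G] [Countable G] (j : FreeGroup ℤ →* G)
    (hj : Function.Injective j) {X : Type*} [MeasurableSpace X] [StandardBorelSpace X]
    [MulAction G X] (μ : Measure X) [IsProbabilityMeasure μ]
    (hmeas : ∀ g : G, Measurable fun x : X => g • x)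
    (hinv : ∀ g : G, μ.map (fun x : X => g • x) = μ) :
    ∃ ν : Measure (G → Fin 2), IsProbabilityMeasure ν ∧
      (∀ g : G, ν.map (bshift (Fin 2) g) = ν) ∧
      ∃ φ : (G → Fin 2) → X, Measurable φ ∧ ν.map φ = μ ∧
        ∀ g : G, ∀ᵐ x ∂ν, φ (bshift (Fin 2) g x) = g • φ x := by
  have := nonempty_of_isProbabilityMeasure μ
  obtain ⟨Ψ, r, hΨ, hr, hΨ_smul, hrΨ⟩ :=
    exists_equivariant_itinerary not_countable_int_to_fin_two hmeas
  let D := edgeDiff (A := Fin 2) j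
  have : CompactSpace D.ker := isCompact_iff_compactSpace.mp
    (isClosed_singleton.preimage (continuous_edgeDiff j)).isCompact
  let m : Measure D.ker := Measure.addHaarMeasure ⊤
  have : IsProbabilityMeasure m := isProbabilityMeasure_addHaarMeasure_top
  let f (x : X) : G → Fin 2 := treeLift j (Ψ x)
  have hf : Measurable f := (measurable_treeLift j).comp hΨ
  have hDf (x : X) (k) (hk : k ∈ D.ker) : D (f x + k) = Ψ x := by
    rw [map_add, AddMonoidHom.mem_ker.mp hk, add_zero, edgeDiff_treeLift j hj]
  let φ (ω : G → Fin 2) : X := r (D ω 1)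
  have hφ : Measurable φ := hr.comp ((measurable_pi_apply 1).comp (measurable_edgeDiff j))
  refine ⟨translateLaw μ f m, isProbabilityMeasure_translateLaw m hf, fun g => ?_, φ, hφ,
    map_translateLaw_of_leftInverse m hf hφ fun x k hk => by simp [φ, hDf x k hk, hrΨ],
    fun g => ?_⟩
  · refine map_translateLaw_eq m ⟨hmeas g, hinv g⟩ hf (bshiftEquiv (Fin 2) g)
      (bshift_mem_ker_edgeDiff_iff j g) fun x => ?_
    simp [AddMonoidHom.mem_ker, D, edgeDiff_bshift, edgeDiff_treeLift j hj, f, hΨ_smul]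
  · have hp := measurableSet_eq_fun (hφ.comp (bshiftEquiv (Fin 2) g).measurable) ((hmeas g).comp hφ)
    refine ae_translateLaw m hf hp fun x k hk => ?_
    simp [φ, D, edgeDiff_bshift, hDf x k hk, hrΨ, ← hΨ_smul]

end BernoulliFactor

theorem stmt1 (G : Type*) [Group G] [Countable G]
    (ι : FreeGroup (Fin 2) →* G) (hι : Function.Injective ι) :
    ∀ (X : Type) [MeasurableSpace X] [StandardBorelSpace X] [MulAction G X]
      (μ : Measure X) [IsProbabilityMeasure μ],
      (∀ g : G, Measurable fun x : X => g • x) →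
      (∀ g : G, μ.map (fun x : X => g • x) = μ) →
      ∃ ν : Measure (G → Fin 2), IsProbabilityMeasure ν ∧
        (∀ g : G, ν.map (bshift (Fin 2) g) = ν) ∧
        ∃ φ : (G → Fin 2) → X, Measurable φ ∧ ν.map φ = μ ∧
          ∀ g : G, ∀ᵐ x ∂ν, φ (bshift (Fin 2) g x) = g • φ x :=
  fun _ _ _ _ μ _ hmeas hinv => BernoulliFactor.exists_bernoulli_factor
    (ι.comp BernoulliFactor.conjPowHom) (hι.comp BernoulliFactor.conjPowHom_injective) μ hmeas hinv
end

section
/- Let G be a countable non-amenable group. Then there exists a positive integer n with the following property: for every continuous action of G on a compact metrizable space X, there is a G-invariant compact subset Y ⊆ n^G (with the shift action and product topology) and a continuous G-equivariant surjection from Y onto X. -/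
/-- A countable group is amenable if there is a left-invariant finitely additive
probability mean on its subsets. -/
def IsAmenable (G : Type*) [Group G] : Prop :=
  ∃ m : Set G → ℝ,
    (∀ A : Set G, 0 ≤ m A) ∧
    m Set.univ = 1 ∧
    (∀ A B : Set G, Disjoint A B → m (A ∪ B) = m A + m B) ∧
    (∀ (g : G) (A : Set G), m ((g * ·) '' A) = m A)

set_option maxHeartbeats 1000000

open Finset Filter Topology
open scoped Pointwise

section P1
variable {G : Type*} [Group G] [DecidableEq G]



lemma folner_step
    (hD : ∀ D : Finset G, (1:G) ∈ D → ∃ A : Finset G, (A * D).card < 2 * A.card)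
    (D : Finset G) (hone : (1:G) ∈ D) (k : ℕ) (hk : 0 < k) :
    ∃ B : Finset G, B.Nonempty ∧ k * ((B * D).card - B.card) < B.card := by
  obtain ⟨A, hA⟩ := hD (D ^ k) (one_mem_pow hone)
  have hAne : A.Nonempty := by
    rcases A.eq_empty_or_nonempty with rfl | h
    · simp at hA
    · exact h
  -- A_j := A * D ^ j
  set Aj : ℕ → Finset G := fun j => A * D ^ j with hAj
  have hmono : ∀ j, Aj j ⊆ Aj (j+1) := by
    intro j
    have : Aj (j+1) = Aj j * D := by simp only [hAj, pow_succ, mul_assoc]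
    rw [this]
    exact Finset.subset_mul_left _ hone
  have hsub : ∀ j, A ⊆ Aj j := by
    intro j
    induction j with
    | zero => simp [hAj]
    | succ n ih => exact ih.trans (hmono n)
  -- suppose for contradiction all increments are ≥ A.card / k -ish
  by_contra hcon
  push_neg at hcon
  -- hcon : ∀ B, B.Nonempty → B.card ≤ k * ((B * D).card - B.card)
  have key : ∀ j, A.card ≤ k * ((Aj (j+1)).card - (Aj j).card) := by
    intro j
    have hBne : (Aj j).Nonempty := hAne.mono (hsub j)
    have h1 := hcon (Aj j) hBne
    have h2 : (Aj j).card ≤ k * ((Aj j * D).card - (Aj j).card) := h1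
    have h3 : Aj j * D = Aj (j+1) := by simp only [hAj, pow_succ, mul_assoc]
    rw [h3] at h2
    exact le_trans (Finset.card_le_card (hsub j)) h2
  -- sum the increments: telescoping
  have tele : ∀ j, k * (Aj 0).card + j * A.card ≤ k * (Aj j).card := by
    intro j
    induction j with
    | zero => simp
    | succ n ih =>
      have hk1 := key n
      have hcle : (Aj n).card ≤ (Aj (n+1)).card := Finset.card_le_card (hmono n)
      have : k * (Aj n).card + A.card ≤ k * (Aj (n+1)).card := by
        calc k * (Aj n).card + A.card
            ≤ k * (Aj n).card + k * ((Aj (n+1)).card - (Aj n).card) := by omega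
          _ = k * ((Aj n).card + ((Aj (n+1)).card - (Aj n).card)) := by ring
          _ = k * (Aj (n+1)).card := by rw [Nat.add_sub_cancel' hcle]
      calc k * (Aj 0).card + (n+1) * A.card
          = (k * (Aj 0).card + n * A.card) + A.card := by ring
        _ ≤ k * (Aj n).card + A.card := by omega
        _ ≤ k * (Aj (n+1)).card := this
  have hA0 : Aj 0 = A := by simp [hAj]
  have hfin := tele k
  rw [hA0] at hfin
  -- so k * A.card + k * A.card ≤ k * (Aj k).card, i.e. 2*A.card ≤ (Aj k).card
  have h2 : k * (2 * A.card) ≤ k * (Aj k).card := by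
    calc k * (2 * A.card) = k * A.card + k * A.card := by ring
      _ ≤ k * (Aj k).card := by omega
  have h3 : 2 * A.card ≤ (Aj k).card := Nat.le_of_mul_le_mul_left h2 hk
  have heq : Aj k = A * D ^ k := rfl
  rw [heq] at h3
  omega

lemma filter_card_le_aux (s t : Finset G) (p : G → Prop) [DecidablePred p] :
    (s.filter p).card ≤ (t.filter p).card + (s \ t).card := by
  have hsub : s.filter p ⊆ t.filter p ∪ (s \ t) := by
    intro a ha
    rw [Finset.mem_filter] at ha
    by_cases hat : a ∈ t
    · exact Finset.mem_union_left _ (Finset.mem_filter.2 ⟨hat, ha.2⟩)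
    · exact Finset.mem_union_right _ (Finset.mem_sdiff.2 ⟨ha.1, hat⟩)
  exact le_trans (Finset.card_le_card hsub) (Finset.card_union_le _ _)

lemma exists_doubling [Countable G] (hG : ¬ IsAmenable G) :
    ∃ D : Finset G, (1:G) ∈ D ∧ ∀ A : Finset G, 2 * A.card ≤ (A * D).card := by
  classical
  letI : ∀ (S : Set G) (x : G), Decidable (x ∈ S) := fun S x => Classical.propDecidable _
  by_contra hcon
  push_neg at hcon
  -- hcon : ∀ D, 1 ∈ D → ∃ A, (A * D).card < 2 * A.card
  apply hG
  obtain ⟨e, he⟩ := exists_surjective_nat G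
  set Dn : ℕ → Finset G := fun n =>
    (((Finset.range (n+1)).image e) ∪ ((Finset.range (n+1)).image (fun i => (e i)⁻¹))) ∪ {1}
    with hDn
  have hDn1 : ∀ n, (1:G) ∈ Dn n := fun n => Finset.mem_union_right _ (Finset.mem_singleton_self 1)
  have hBex : ∀ n : ℕ, ∃ B : Finset G, B.Nonempty ∧
      (n+1) * ((B * Dn n).card - B.card) < B.card :=
    fun n => folner_step hcon (Dn n) (hDn1 n) (n+1) (Nat.succ_pos n)
  choose B hBne hBsm using hBex
  set f : Set G → ℕ → ℝ := fun S n => (((B n).filter (· ∈ S)).card : ℝ) / ((B n).card : ℝ)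
    with hf
  have hBpos : ∀ n, (0:ℝ) < ((B n).card : ℝ) := by
    intro n
    exact_mod_cast Finset.card_pos.2 (hBne n)
  have hfIcc : ∀ S n, f S n ∈ Set.Icc (0:ℝ) 1 := by
    intro S n
    constructor
    · positivity
    · rw [div_le_one (hBpos n)]
      exact_mod_cast Finset.card_le_card (Finset.filter_subset _ _)
  set U : Ultrafilter ℕ := Ultrafilter.of Filter.atTop with hU
  have hUle : (U : Filter ℕ) ≤ Filter.atTop := Ultrafilter.of_le _
  have hlim : ∀ S : Set G, ∃ r, r ∈ Set.Icc (0:ℝ) 1 ∧ Tendsto (f S) U (nhds r) := by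
    intro S
    have hle : (U.map (f S) : Filter ℝ) ≤ Filter.principal (Set.Icc 0 1) := by
      rw [le_principal_iff]
      exact Filter.eventually_map.2 (Filter.Eventually.of_forall (hfIcc S))
    obtain ⟨r, hr, hrle⟩ := isCompact_Icc.ultrafilter_le_nhds (U.map (f S)) hle
    exact ⟨r, hr, hrle⟩
  choose m₀ hm₀Icc hm₀T using hlim
  -- right invariance of m₀
  have hright : ∀ (g : G) (T : Set G), m₀ ((· * g) '' T) = m₀ T := by
    intro g T
    obtain ⟨N, heN⟩ : ∃ N, e N = g⁻¹ := he g⁻¹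
    have hbound : ∀ n, N ≤ n →
        |f ((· * g) '' T) n - f T n| ≤ 1 / ((n:ℝ)+1) := by
      intro n hn
      have hginv : g⁻¹ ∈ Dn n := by
        apply Finset.mem_union_left
        apply Finset.mem_union_left
        exact Finset.mem_image.2 ⟨N, Finset.mem_range.2 (Nat.lt_succ_of_le hn), heN⟩
      set Bn' : Finset G := (B n).image (· * g⁻¹) with hBn'
      -- card equalities
      have hcard1 : ((B n).filter (· ∈ (· * g) '' T)).card
          = (Bn'.filter (· ∈ T)).card := by
        have h1 : (B n).filter (· ∈ (· * g) '' T) = (B n).filter (fun b => b * g⁻¹ ∈ T) := by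
          apply Finset.filter_congr
          intro b _
          simp only [Set.mem_image, eq_iff_iff]
          constructor
          · rintro ⟨a, ha, rfl⟩; simpa using ha
          · intro hbT; exact ⟨b * g⁻¹, hbT, by group⟩
        have h2 : Bn'.filter (· ∈ T) = ((B n).filter (fun b => b * g⁻¹ ∈ T)).image (· * g⁻¹) := by
          rw [hBn', Finset.filter_image]
        rw [h1, h2, Finset.card_image_of_injective _ (mul_left_injective g⁻¹)]
      have hcards : Bn'.card = (B n).card :=
        Finset.card_image_of_injective _ (mul_left_injective g⁻¹)
      have hsub1 : Bn' ⊆ B n * Dn n := by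
        intro a ha
        rw [hBn', Finset.mem_image] at ha
        obtain ⟨b, hb, rfl⟩ := ha
        exact Finset.mul_mem_mul hb hginv
      have hsub2 : B n ⊆ B n * Dn n := Finset.subset_mul_left _ (hDn1 n)
      have hd1 : (Bn' \ B n).card ≤ (B n * Dn n).card - (B n).card := by
        have : Bn' \ B n ⊆ (B n * Dn n) \ B n := Finset.sdiff_subset_sdiff hsub1 (le_refl _)
        calc (Bn' \ B n).card ≤ ((B n * Dn n) \ B n).card := Finset.card_le_card this
          _ = (B n * Dn n).card - (B n).card := Finset.card_sdiff_of_subset hsub2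
      have hd2 : (B n \ Bn').card = (Bn' \ B n).card := Finset.card_sdiff_comm hcards.symm
      -- two-sided filter bounds
      have hle1 : (Bn'.filter (· ∈ T)).card ≤ ((B n).filter (· ∈ T)).card + (Bn' \ B n).card :=
        filter_card_le_aux _ _ _
      have hle2 : ((B n).filter (· ∈ T)).card ≤ (Bn'.filter (· ∈ T)).card + (B n \ Bn').card :=
        filter_card_le_aux _ _ _
      set c : ℕ := (B n * Dn n).card - (B n).card with hc
      have habs : |(((Bn'.filter (· ∈ T)).card : ℝ)) - (((B n).filter (· ∈ T)).card : ℝ)| ≤ (c:ℝ) := by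
        rw [abs_sub_le_iff]
        constructor
        · have := hle1
          have h' : (Bn' \ B n).card ≤ c := hd1
          push_cast
          have : ((Bn'.filter (· ∈ T)).card : ℝ) ≤ ((B n).filter (· ∈ T)).card + c := by
            exact_mod_cast le_trans hle1 (Nat.add_le_add_left h' _)
          linarith
        · have h' : (B n \ Bn').card ≤ c := by rw [hd2]; exact hd1
          have : (((B n).filter (· ∈ T)).card : ℝ) ≤ (Bn'.filter (· ∈ T)).card + c := by
            exact_mod_cast le_trans hle2 (Nat.add_le_add_left h' _)
          linarith
      have hratio : (c:ℝ) / ((B n).card : ℝ) ≤ 1 / ((n:ℝ)+1) := by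
        rw [div_le_div_iff₀ (hBpos n) (by positivity)]
        have := hBsm n
        rw [← hc] at this
        have hnc : (n+1) * c ≤ (B n).card := le_of_lt this
        have : ((n+1) * c : ℝ) ≤ ((B n).card : ℝ) := by exact_mod_cast hnc
        push_cast at this ⊢
        linarith
      calc |f ((· * g) '' T) n - f T n|
          = |(((Bn'.filter (· ∈ T)).card : ℝ) - ((B n).filter (· ∈ T)).card)| / ((B n).card : ℝ) := by
            rw [hf]
            simp only []
            rw [hcard1, ← abs_of_pos (hBpos n), ← abs_div]
            congr 1
            rw [abs_of_pos (hBpos n), sub_div]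
        _ ≤ (c:ℝ) / ((B n).card : ℝ) := by gcongr
        _ ≤ 1 / ((n:ℝ)+1) := hratio
    -- squeeze along the ultrafilter
    have hev : ∀ᶠ n in (U : Filter ℕ), ‖f ((· * g) '' T) n - f T n‖ ≤ 1 / ((n:ℝ)+1) := by
      apply Filter.Eventually.filter_mono hUle
      exact Filter.eventually_atTop.2 ⟨N, fun n hn => by simpa using hbound n hn⟩
    have hb0 : Tendsto (fun n : ℕ => 1 / ((n:ℝ)+1)) (U : Filter ℕ) (nhds 0) :=
      (tendsto_one_div_add_atTop_nhds_zero_nat).mono_left hUle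
    have hdiff : Tendsto (fun n => f ((· * g) '' T) n - f T n) (U : Filter ℕ) (nhds 0) :=
      squeeze_zero_norm' hev hb0
    have h2 : Tendsto (fun n => f ((· * g) '' T) n - f T n) (U : Filter ℕ)
        (nhds (m₀ ((· * g) '' T) - m₀ T)) := (hm₀T _).sub (hm₀T T)
    have := tendsto_nhds_unique h2 hdiff
    linarith [this]
  -- the left invariant mean
  refine ⟨fun S => m₀ S⁻¹, fun S => (hm₀Icc _).1, ?_, ?_, ?_⟩
  · -- univ
    show m₀ (Set.univ : Set G)⁻¹ = 1
    rw [(Set.inv_univ : (Set.univ : Set G)⁻¹ = Set.univ)]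
    have hconst : ∀ n, f Set.univ n = 1 := by
      intro n
      rw [hf]
      simp only [Set.mem_univ, Finset.filter_true]
      exact div_self (ne_of_gt (hBpos n))
    have h1 : Tendsto (f Set.univ) (U : Filter ℕ) (nhds 1) := by
      have : (f Set.univ) = fun _ => (1:ℝ) := funext hconst
      rw [this]; exact tendsto_const_nhds
    exact tendsto_nhds_unique (hm₀T _) h1
  · -- additivity
    intro A B' hdisj
    have hsets : (A ∪ B')⁻¹ = A⁻¹ ∪ B'⁻¹ := by
      ext x; simp [Set.mem_inv, Set.mem_union]
    have hdisj' : Disjoint (A⁻¹) (B'⁻¹) := by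
      rw [Set.disjoint_left] at hdisj ⊢
      intro x hx hxB
      exact hdisj (Set.mem_inv.1 hx) (Set.mem_inv.1 hxB)
    show m₀ (A ∪ B')⁻¹ = m₀ A⁻¹ + m₀ B'⁻¹
    rw [hsets]
    have hptw : ∀ n, f (A⁻¹ ∪ B'⁻¹) n = f A⁻¹ n + f B'⁻¹ n := by
      intro n
      simp only [hf]
      have hsplit : (B n).filter (· ∈ A⁻¹ ∪ B'⁻¹)
          = (B n).filter (· ∈ A⁻¹) ∪ (B n).filter (· ∈ B'⁻¹) := by
        rw [← Finset.filter_or]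
        apply Finset.filter_congr
        intro b _
        simp [Set.mem_union]
      have hdfin : Disjoint ((B n).filter (· ∈ A⁻¹)) ((B n).filter (· ∈ B'⁻¹)) := by
        rw [Finset.disjoint_left]
        intro a ha hb
        rw [Finset.mem_filter] at ha hb
        exact Set.disjoint_left.1 hdisj' ha.2 hb.2
      rw [hsplit, Finset.card_union_of_disjoint hdfin]
      push_cast
      rw [add_div]
    have h1 : Tendsto (f (A⁻¹ ∪ B'⁻¹)) (U : Filter ℕ) (nhds (m₀ A⁻¹ + m₀ B'⁻¹)) := by
      have : f (A⁻¹ ∪ B'⁻¹) = fun n => f A⁻¹ n + f B'⁻¹ n := funext hptw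
      rw [this]
      exact (hm₀T _).add (hm₀T _)
    exact tendsto_nhds_unique (hm₀T _) h1
  · -- left invariance
    intro g S
    have hsets : ((g * ·) '' S)⁻¹ = (· * g⁻¹) '' S⁻¹ := by
      ext x
      simp only [Set.mem_inv, Set.mem_image]
      constructor
      · intro hx
        obtain ⟨a, ha, hax⟩ := hx
        refine ⟨a⁻¹, by simpa using ha, ?_⟩
        have hx2 : x = (g * a)⁻¹ := by rw [hax, inv_inv]
        rw [hx2, mul_inv_rev]
      · rintro ⟨y, hy, rfl⟩
        refine ⟨y⁻¹, by simpa using hy, by group⟩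
    show m₀ ((g * ·) '' S)⁻¹ = m₀ S⁻¹
    rw [hsets, hright g⁻¹ (S⁻¹)]

end P1

section P2
variable {G : Type*} [Group G] [DecidableEq G]

lemma exists_pair_injection (D : Finset G) (hdbl : ∀ A : Finset G, 2 * A.card ≤ (A * D).card) :
    ∃ ψ : G × Bool → G, Function.Injective ψ ∧ ∀ p : G × Bool, p.1⁻¹ * ψ p ∈ D := by
  classical
  have hall := (Finset.all_card_le_biUnion_card_iff_exists_injective
    (fun p : G × Bool => (D.image (p.1 * ·)))).mp ?_
  · obtain ⟨ψ, hinj, hmem⟩ := hall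
    refine ⟨ψ, hinj, fun p => ?_⟩
    have := hmem p
    rw [Finset.mem_image] at this
    obtain ⟨d, hd, hdef⟩ := this
    rw [← hdef]
    simpa using hd
  · intro s
    set A : Finset G := s.image Prod.fst with hA
    have hsub : s ⊆ A ×ˢ (Finset.univ : Finset Bool) := by
      intro p hp
      rw [Finset.mem_product]
      exact ⟨Finset.mem_image_of_mem _ hp, Finset.mem_univ _⟩
    have h1 : s.card ≤ 2 * A.card := by
      calc s.card ≤ (A ×ˢ (Finset.univ : Finset Bool)).card := Finset.card_le_card hsub
        _ = 2 * A.card := by rw [Finset.card_product]; simp [mul_comm]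
    have h2 : A * D ⊆ s.biUnion (fun p => D.image (p.1 * ·)) := by
      intro x hx
      rw [Finset.mem_mul] at hx
      obtain ⟨a, ha, d, hd, rfl⟩ := hx
      rw [hA, Finset.mem_image] at ha
      obtain ⟨p, hp, hpa⟩ := ha
      apply Finset.mem_biUnion.2 ⟨p, hp, ?_⟩
      exact Finset.mem_image.2 ⟨d, hd, by rw [hpa]⟩
    calc s.card ≤ 2 * A.card := h1
      _ ≤ (A * D).card := hdbl A
      _ ≤ _ := Finset.card_le_card h2

end P2



section Machine

variable {G : Type*} [Group G] [DecidableEq G]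

abbrev Symb (D : Finset G) := Option {d : G // d ∈ D} × Bool

noncomputable local instance (D : Finset G) : LinearOrder {d : G // d ∈ D} :=
  LinearOrder.lift' (fun d => D.equivFin d) (fun a b hab => D.equivFin.injective hab)

variable {n : ℕ} (D : Finset G) (h1D : (1:G) ∈ D) (E : Fin n ≃ Symb D)

noncomputable def ptr (x : G → Fin n) (k : G) : Option {d : G // d ∈ D} := (E (x k)).1

noncomputable def bitOf (x : G → Fin n) (k : G) : Bool := (E (x k)).2

noncomputable def childF (x : G → Fin n) (h : G) : Finset {d : G // d ∈ D} :=
  Finset.univ.filter (fun d => ptr D E x (h * d.1) = some d)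

noncomputable def kids (x : G → Fin n) (h : G) : List {d : G // d ∈ D} :=
  (childF D E x h).sort (· ≤ ·)

noncomputable def c0 (x : G → Fin n) (h : G) : G :=
  h * ((kids D E x h).getD 0 ⟨1, h1D⟩).1

noncomputable def c1 (x : G → Fin n) (h : G) : G :=
  h * ((kids D E x h).getD 1 ⟨1, h1D⟩).1

noncomputable def node (x : G → Fin n) (h : G) : ℕ → G
  | 0 => c1 D h1D E x h
  | j+1 => c0 D h1D E x (node x h j)

noncomputable def bitAt (x : G → Fin n) (h : G) (j : ℕ) : Bool :=
  bitOf D E x (node D h1D E x h j)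

noncomputable def Phi (x : G → Fin n) : G → ℕ → Bool := fun h j => bitAt D h1D E x h j

-- Equivariance
lemma childF_shift (g : G) (x : G → Fin n) (h : G) :
    childF D E (bshift (Fin n) g x) h = childF D E x (g⁻¹ * h) := by
  unfold childF ptr bshift
  apply Finset.filter_congr
  intro d _
  rw [mul_assoc]

lemma c0_shift (g : G) (x : G → Fin n) (h : G) :
    c0 D h1D E (bshift (Fin n) g x) h = g * c0 D h1D E x (g⁻¹ * h) := by
  unfold c0 kids
  rw [childF_shift, ← mul_assoc, mul_inv_cancel_left]

lemma c1_shift (g : G) (x : G → Fin n) (h : G) :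
    c1 D h1D E (bshift (Fin n) g x) h = g * c1 D h1D E x (g⁻¹ * h) := by
  unfold c1 kids
  rw [childF_shift, ← mul_assoc, mul_inv_cancel_left]

lemma node_shift (g : G) (x : G → Fin n) (h : G) (j : ℕ) :
    node D h1D E (bshift (Fin n) g x) h j = g * node D h1D E x (g⁻¹ * h) j := by
  induction j with
  | zero => exact c1_shift D h1D E g x h
  | succ m ih =>
    show c0 D h1D E (bshift (Fin n) g x) (node D h1D E (bshift (Fin n) g x) h m) = _
    rw [ih, c0_shift, inv_mul_cancel_left]
    rfl

lemma Phi_shift (g : G) (x : G → Fin n) (h : G) (j : ℕ) :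
    Phi D h1D E (bshift (Fin n) g x) h j = Phi D h1D E x (g⁻¹ * h) j := by
  unfold Phi bitAt bitOf
  rw [node_shift]
  show (E (bshift (Fin n) g x (g * _))).2 = _
  unfold bshift
  rw [inv_mul_cancel_left]

-- window membership
include h1D in
lemma pow_subset_succ (j : ℕ) : (D ^ j : Finset G) ⊆ D ^ (j+1) := by
  rw [pow_succ]
  exact Finset.subset_mul_left _ h1D

include h1D in
lemma pow_subset_pow {a b : ℕ} (hab : a ≤ b) : (D ^ a : Finset G) ⊆ D ^ b := by
  induction b with
  | zero => simpa [Nat.le_zero.mp hab] using Finset.Subset.refl _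
  | succ m ih =>
    rcases Nat.lt_or_ge a (m+1) with hlt | hge
    · exact (ih (Nat.lt_succ_iff.mp hlt)).trans (pow_subset_succ D h1D m)
    · have : a = m + 1 := le_antisymm hab hge
      subst this
      exact Finset.Subset.refl _

lemma c0_mem (x : G → Fin n) (h : G) : ∃ d ∈ D, c0 D h1D E x h = h * d := by
  refine ⟨_, ?_, rfl⟩
  exact (((kids D E x h).getD 0 ⟨1, h1D⟩)).2

lemma c1_mem (x : G → Fin n) (h : G) : ∃ d ∈ D, c1 D h1D E x h = h * d := by
  refine ⟨_, ?_, rfl⟩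
  exact (((kids D E x h).getD 1 ⟨1, h1D⟩)).2

lemma node_mem (x : G → Fin n) (h : G) (j : ℕ) :
    ∃ d ∈ (D ^ (j+1) : Finset G), node D h1D E x h j = h * d := by
  induction j with
  | zero =>
    obtain ⟨d, hd, hdef⟩ := c1_mem D h1D E x h
    exact ⟨d, by simpa using hd, hdef⟩
  | succ m ih =>
    obtain ⟨d, hd, hdef⟩ := ih
    obtain ⟨d', hd', hdef'⟩ := c0_mem D h1D E x (node D h1D E x h m)
    refine ⟨d * d', ?_, ?_⟩
    · rw [pow_succ]; exact Finset.mul_mem_mul hd hd'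
    · show c0 D h1D E x (node D h1D E x h m) = h * (d * d')
      rw [hdef', hdef, mul_assoc]

-- locality
lemma childF_congr (x y : G → Fin n) (h : G)
    (hagree : ∀ d ∈ D, x (h * d) = y (h * d)) :
    childF D E x h = childF D E y h := by
  unfold childF ptr
  apply Finset.filter_congr
  intro d _
  rw [hagree d.1 d.2]

lemma node_congr (x y : G → Fin n) (h : G) (j : ℕ)
    (hagree : ∀ k ∈ ((D ^ (j+1) : Finset G)).image (h * ·), x k = y k) :
    node D h1D E x h j = node D h1D E y h j := by
  induction j with
  | zero =>
    show c1 D h1D E x h = c1 D h1D E y h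
    unfold c1 kids
    rw [childF_congr D E x y h]
    intro d hd
    apply hagree
    exact Finset.mem_image_of_mem _ (by simpa using hd)
  | succ m ih =>
    have hprev : node D h1D E x h m = node D h1D E y h m := by
      apply ih
      intro k hk
      refine hagree k (Finset.image_subset_image (pow_subset_pow D h1D ?_) hk)
      omega
    show c0 D h1D E x (node D h1D E x h m) = c0 D h1D E y (node D h1D E y h m)
    rw [hprev]
    unfold c0 kids
    rw [childF_congr D E x y (node D h1D E y h m)]
    intro d hd
    obtain ⟨p, hp, hpdef⟩ := node_mem D h1D E y h m
    apply hagree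
    apply Finset.mem_image.2
    refine ⟨p * d, ?_, by rw [hpdef, mul_assoc]⟩
    rw [pow_succ]
    exact Finset.mul_mem_mul hp hd

lemma bitAt_congr (x y : G → Fin n) (h : G) (j : ℕ)
    (hagree : ∀ k ∈ ((D ^ (j+2) : Finset G)).image (h * ·), x k = y k) :
    bitAt D h1D E x h j = bitAt D h1D E y h j := by
  unfold bitAt bitOf
  have hnode : node D h1D E x h j = node D h1D E y h j := by
    apply node_congr
    intro k hk
    exact hagree k (Finset.image_subset_image (pow_subset_succ D h1D (j+1)) hk)
  rw [hnode]
  obtain ⟨p, hp, hpdef⟩ := node_mem D h1D E y h j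
  rw [hagree _ (Finset.mem_image.2 ⟨p, pow_subset_succ D h1D (j+1) hp, hpdef.symm⟩)]

-- continuity
lemma continuous_bitAt (h : G) (j : ℕ) :
    Continuous (fun x : G → Fin n => bitAt D h1D E x h j) := by
  classical
  set W : Finset G := ((D ^ (j+2) : Finset G)).image (h * ·) with hW
  set dflt : Fin n := E.symm (none, false) with hdflt
  set F : (↥W → Fin n) → Bool :=
    fun r => bitAt D h1D E (fun k => if hk : k ∈ W then r ⟨k, hk⟩ else dflt) h j with hF
  have hfac : (fun x : G → Fin n => bitAt D h1D E x h j)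
      = F ∘ (fun (x : G → Fin n) (k : ↥W) => x k.1) := by
    funext x
    show bitAt D h1D E x h j = bitAt D h1D E _ h j
    apply bitAt_congr
    intro k hk
    rw [← hW] at hk
    simp [hk]
  rw [hfac]
  apply Continuous.comp
  · exact continuous_of_discreteTopology
  · exact continuous_pi (fun k => continuous_apply _)

-- injectivity of the address map
lemma theta_inj (a0 a1 : G → G) (h0 : Function.Injective a0)
    (h1 : Function.Injective a1) (h01 : ∀ h h', a0 h ≠ a1 h') :
    ∀ (j j' : ℕ) (h h' : G), a0^[j] (a1 h) = a0^[j'] (a1 h') → j = j' ∧ h = h' := by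
  intro j
  induction j with
  | zero =>
    intro j' h h' heq
    cases j' with
    | zero => exact ⟨rfl, h1 heq⟩
    | succ m =>
      rw [Function.iterate_succ_apply'] at heq
      exact absurd heq.symm (h01 _ _)
  | succ m ih =>
    intro j' h h' heq
    cases j' with
    | zero =>
      rw [Function.iterate_succ_apply'] at heq
      exact absurd heq (h01 _ _)
    | succ m' =>
      rw [Function.iterate_succ_apply', Function.iterate_succ_apply'] at heq
      obtain ⟨hjj, hhh⟩ := ih m' h h' (h0 heq)
      exact ⟨by omega, hhh⟩

lemma Phi_surjective (ψ : G × Bool → G) (hinj : Function.Injective ψ)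
    (hmem : ∀ p : G × Bool, p.1⁻¹ * ψ p ∈ D) :
    Function.Surjective (Phi D h1D E) := by
  classical
  intro y
  -- pointer layer
  set pa : G → Option {d : G // d ∈ D} := fun k =>
    if hk : ∃ p : G × Bool, ψ p = k then
      some ⟨(Classical.choose hk).1⁻¹ * k, by
        have hs := Classical.choose_spec hk
        have := hmem (Classical.choose hk)
        rwa [hs] at this⟩
    else none with hpa
  have hpa_some : ∀ (k : G) (hk : ∃ p : G × Bool, ψ p = k),
      ∃ hmemk, pa k = some ⟨(Classical.choose hk).1⁻¹ * k, hmemk⟩ := by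
    intro k hk
    simp only [hpa]
    rw [dif_pos hk]
    exact ⟨by
      have hs := Classical.choose_spec hk
      have hx := hmem (Classical.choose hk)
      rwa [hs] at hx, rfl⟩
  have hpa_none : ∀ k : G, (¬ ∃ p : G × Bool, ψ p = k) → pa k = none := by
    intro k hk
    simp only [hpa]
    rw [dif_neg hk]
  -- the two children of h, as subtype elements
  set dd : G → Bool → {d : G // d ∈ D} := fun h b => ⟨h⁻¹ * ψ (h, b), by
    have := hmem (h, b); exact this⟩ with hdd
  have hddval : ∀ h b, h * (dd h b).1 = ψ (h, b) := by
    intro h b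
    show h * (h⁻¹ * ψ (h, b)) = ψ (h, b)
    rw [mul_inv_cancel_left]
  have hddne : ∀ h, dd h false ≠ dd h true := by
    intro h hcontra
    have : ψ (h, false) = ψ (h, true) := by
      rw [← hddval h false, ← hddval h true, hcontra]
    simpa using hinj this
  have hpa_child : ∀ (h : G) (d : {d : G // d ∈ D}),
      (pa (h * d.1) = some d) ↔ (d = dd h false ∨ d = dd h true) := by
    intro h d
    constructor
    · intro hd
      by_cases hk : ∃ p : G × Bool, ψ p = h * d.1
      · obtain ⟨hmemk, hpe⟩ := hpa_some _ hk
        rw [hpe] at hd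
        have hdval : d.1 = (Classical.choose hk).1⁻¹ * (h * d.1) :=
          (congrArg Subtype.val (Option.some_injective _ hd)).symm
        have hs := Classical.choose_spec hk
        have hfst : (Classical.choose hk).1 = h := by
          have h2 : (Classical.choose hk).1⁻¹ * h * d.1 = d.1 := by
            rw [mul_assoc]; exact hdval.symm
          have h3 : (Classical.choose hk).1⁻¹ * h = 1 := mul_right_cancel (by rw [h2, one_mul])
          have h4 := congrArg (fun z => (Classical.choose hk).1 * z) h3
          simpa [← mul_assoc] using h4.symm
        have hmain : d = dd h (Classical.choose hk).2 := by
          have hpair : Classical.choose hk = (h, (Classical.choose hk).2) :=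
            Prod.ext_iff.mpr ⟨hfst, rfl⟩
          have hψval : ψ (h, (Classical.choose hk).2) = h * d.1 := by rw [← hpair, hs]
          apply Subtype.ext
          show d.1 = h⁻¹ * ψ (h, (Classical.choose hk).2)
          rw [hψval, inv_mul_cancel_left]
        rcases Bool.dichotomy (Classical.choose hk).2 with hb | hb
        · left; rw [hmain, hb]
        · right; rw [hmain, hb]
      · rw [hpa_none _ hk] at hd
        exact absurd hd (by simp)
    · intro hd
      have key : ∀ b : Bool, pa (h * (dd h b).1) = some (dd h b) := by
        intro b
        have hk : ∃ p : G × Bool, ψ p = h * (dd h b).1 := ⟨(h, b), (hddval h b).symm⟩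
        obtain ⟨hmemk, hpe⟩ := hpa_some _ hk
        rw [hpe]
        have hchoose : Classical.choose hk = (h, b) := by
          apply hinj
          rw [Classical.choose_spec hk, hddval]
        congr 1
        apply Subtype.ext
        show (Classical.choose hk).1⁻¹ * (h * (dd h b).1) = (dd h b).1
        rw [hchoose]
        show h⁻¹ * (h * (dd h b).1) = (dd h b).1
        rw [inv_mul_cancel_left]
      rcases hd with rfl | rfl
      · exact key false
      · exact key true
  -- pointer-only configuration
  set x0 : G → Fin n := fun k => E.symm (pa k, false) with hx0
  have hptr0 : ∀ k, ptr D E x0 k = pa k := by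
    intro k
    unfold ptr
    rw [hx0, Equiv.apply_symm_apply]
  have hchild0 : ∀ h, childF D E x0 h = {dd h false, dd h true} := by
    intro h
    unfold childF
    ext d
    rw [Finset.mem_filter]
    simp only [Finset.mem_univ, true_and, Finset.mem_insert, Finset.mem_singleton]
    rw [hptr0]
    exact hpa_child h d
  have hcard0 : ∀ h, (childF D E x0 h).card = 2 := by
    intro h
    rw [hchild0]
    exact Finset.card_pair (hddne h)
  have hlen : ∀ h, (kids D E x0 h).length = 2 := by
    intro h
    unfold kids
    rw [Finset.length_sort, hcard0]
  set a0 : G → G := fun h => c0 D h1D E x0 h with ha0def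
  set a1 : G → G := fun h => c1 D h1D E x0 h with ha1def
  have hkmem : ∀ (h : G) (i : ℕ) (hi : i < 2),
      (kids D E x0 h).getD i ⟨1, h1D⟩ ∈ ({dd h false, dd h true} : Finset {d : G // d ∈ D}) := by
    intro h i hi
    have hlt : i < (kids D E x0 h).length := by rw [hlen]; exact hi
    rw [List.getD_eq_getElem _ _ hlt]
    rw [← hchild0]
    have := List.getElem_mem hlt
    rwa [← Finset.mem_sort (α := {d : G // d ∈ D}) (· ≤ ·)]
  have hk01 : ∀ h : G, (kids D E x0 h).getD 0 ⟨1, h1D⟩ ≠ (kids D E x0 h).getD 1 ⟨1, h1D⟩ := by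
    intro h
    have h0 : (0:ℕ) < (kids D E x0 h).length := by rw [hlen]; omega
    have h1 : (1:ℕ) < (kids D E x0 h).length := by rw [hlen]; omega
    rw [List.getD_eq_getElem _ _ h0, List.getD_eq_getElem _ _ h1]
    intro hcontra
    have hnodup : (kids D E x0 h).Nodup := Finset.sort_nodup _ _
    have := (List.Nodup.getElem_inj_iff hnodup).mp hcontra
    omega
  have ha0 : ∀ h, ∃ b, a0 h = ψ (h, b) := by
    intro h
    have := hkmem h 0 (by omega)
    simp only [Finset.mem_insert, Finset.mem_singleton] at this
    rcases this with hb | hb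
    · exact ⟨false, by rw [ha0def]; show h * _ = _; rw [hb, hddval]⟩
    · exact ⟨true, by rw [ha0def]; show h * _ = _; rw [hb, hddval]⟩
  have ha1 : ∀ h, ∃ b, a1 h = ψ (h, b) := by
    intro h
    have := hkmem h 1 (by omega)
    simp only [Finset.mem_insert, Finset.mem_singleton] at this
    rcases this with hb | hb
    · exact ⟨false, by rw [ha1def]; show h * _ = _; rw [hb, hddval]⟩
    · exact ⟨true, by rw [ha1def]; show h * _ = _; rw [hb, hddval]⟩
  have hne : ∀ h, a0 h ≠ a1 h := by
    intro h hcontra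
    exact hk01 h (Subtype.ext (mul_left_cancel hcontra))
  have hinj0 : Function.Injective a0 := by
    intro h h' heq
    obtain ⟨b, hb⟩ := ha0 h
    obtain ⟨b', hb'⟩ := ha0 h'
    rw [hb, hb'] at heq
    exact congrArg Prod.fst (hinj heq)
  have hinj1 : Function.Injective a1 := by
    intro h h' heq
    obtain ⟨b, hb⟩ := ha1 h
    obtain ⟨b', hb'⟩ := ha1 h'
    rw [hb, hb'] at heq
    exact congrArg Prod.fst (hinj heq)
  have hdisj : ∀ h h', a0 h ≠ a1 h' := by
    intro h h' hcontra
    obtain ⟨b, hb⟩ := ha0 h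
    obtain ⟨b', hb'⟩ := ha1 h'
    rw [hb, hb'] at hcontra
    have := hinj hcontra
    have hh : h = h' := (Prod.ext_iff.mp this).1
    have hbb : b = b' := (Prod.ext_iff.mp this).2
    subst hh
    subst hbb
    exact hne h (by rw [hb, hb'])
  have hθ := theta_inj a0 a1 hinj0 hinj1 hdisj
  -- bits
  set bt : G → Bool := fun k =>
    if hk : ∃ q : G × ℕ, a0^[q.2] (a1 q.1) = k then
      y (Classical.choose hk).1 (Classical.choose hk).2
    else false with hbt
  have hbt_at : ∀ (h : G) (j : ℕ), bt (a0^[j] (a1 h)) = y h j := by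
    intro h j
    have hk : ∃ q : G × ℕ, a0^[q.2] (a1 q.1) = a0^[j] (a1 h) := ⟨(h, j), rfl⟩
    simp only [hbt]
    rw [dif_pos hk]
    obtain ⟨hj, hh⟩ := hθ (Classical.choose hk).2 j (Classical.choose hk).1 h
      (Classical.choose_spec hk)
    rw [hj, hh]
  -- the final configuration
  set x : G → Fin n := fun k => E.symm (pa k, bt k) with hx
  have hptrx : ∀ k, ptr D E x k = pa k := by
    intro k
    unfold ptr
    rw [hx, Equiv.apply_symm_apply]
  have hbitx : ∀ k, bitOf D E x k = bt k := by
    intro k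
    unfold bitOf
    rw [hx, Equiv.apply_symm_apply]
  have hchildx : ∀ h, childF D E x h = childF D E x0 h := by
    intro h
    unfold childF
    apply Finset.filter_congr
    intro d _
    rw [hptrx, hptr0]
  have hc0x : ∀ h, c0 D h1D E x h = a0 h := by
    intro h
    rw [ha0def]
    unfold c0 kids
    rw [hchildx]
  have hc1x : ∀ h, c1 D h1D E x h = a1 h := by
    intro h
    rw [ha1def]
    unfold c1 kids
    rw [hchildx]
  have hnode : ∀ (h : G) (j : ℕ), node D h1D E x h j = a0^[j] (a1 h) := by
    intro h j
    induction j with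
    | zero => exact hc1x h
    | succ m ih =>
      show c0 D h1D E x (node D h1D E x h m) = _
      rw [ih, hc0x, Function.iterate_succ_apply']
  refine ⟨x, ?_⟩
  funext h j
  show bitOf D E x (node D h1D E x h j) = y h j
  rw [hnode, hbitx, hbt_at]

end Machine


section P4

noncomputable def bexp (s : ℕ → Bool) : ℝ := ∑' i, (if s i then ((2:ℝ)⁻¹)^(i+1) else 0)

lemma summable_halfpow : Summable (fun i : ℕ => ((2:ℝ)⁻¹)^(i+1)) := by
  have h : Summable (fun i : ℕ => ((2:ℝ)⁻¹)^i) := by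
    have := summable_geometric_two
    simpa [one_div] using this
  simpa [pow_succ, mul_comm] using h.mul_left (2:ℝ)⁻¹

lemma continuous_bexp : Continuous bexp := by
  apply continuous_tsum (u := fun i : ℕ => ((2:ℝ)⁻¹)^(i+1))
  · intro i
    have heq : (fun s : ℕ → Bool => if s i then ((2:ℝ)⁻¹)^(i+1) else 0)
        = (fun b : Bool => if b then ((2:ℝ)⁻¹)^(i+1) else 0) ∘ (fun s => s i) := rfl
    rw [heq]
    exact Continuous.comp (continuous_of_discreteTopology) (continuous_apply i)
  · exact summable_halfpow
  · intro i s
    by_cases h : s i <;> simp [h, abs_of_nonneg, pow_nonneg]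

lemma bexp_nonneg (s : ℕ → Bool) : 0 ≤ bexp s := by
  apply tsum_nonneg
  intro i
  by_cases h : s i <;> simp [h, pow_nonneg]

lemma bexp_le_one (s : ℕ → Bool) : bexp s ≤ 1 := by
  have h1 : bexp s ≤ ∑' i : ℕ, ((2:ℝ)⁻¹)^(i+1) := by
    apply Summable.tsum_le_tsum _ _ summable_halfpow
    · intro i
      by_cases h : s i <;> simp [h, pow_nonneg]
    · apply Summable.of_nonneg_of_le _ _ summable_halfpow
      · intro i; by_cases h : s i <;> simp [h, pow_nonneg]
      · intro i; by_cases h : s i <;> simp [h, pow_nonneg]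
  have h2 : ∑' i : ℕ, ((2:ℝ)⁻¹)^(i+1) = 1 := by
    have hg : ∑' i : ℕ, ((2:ℝ)⁻¹)^i = 2 := by
      rw [tsum_geometric_of_lt_one (by norm_num) (by norm_num)]
      norm_num
    calc ∑' i : ℕ, ((2:ℝ)⁻¹)^(i+1) = ∑' i : ℕ, (2:ℝ)⁻¹ * ((2:ℝ)⁻¹)^i := by
          congr 1; funext i; rw [pow_succ, mul_comm]
      _ = (2:ℝ)⁻¹ * ∑' i : ℕ, ((2:ℝ)⁻¹)^i := by rw [tsum_mul_left]
      _ = 1 := by rw [hg]; norm_num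
  linarith

open scoped Classical in
noncomputable def bexpRem (t : ℝ) : ℕ → ℝ
  | 0 => t
  | (i+1) => bexpRem t i - (if ((2:ℝ)⁻¹)^(i+1) ≤ bexpRem t i then ((2:ℝ)⁻¹)^(i+1) else 0)

lemma bexp_surj {t : ℝ} (h0 : 0 ≤ t) (h1 : t ≤ 1) : ∃ s : ℕ → Bool, bexp s = t := by
  classical
  set R : ℕ → ℝ := bexpRem t with hR
  have hRsucc : ∀ i, R (i+1) = R i - (if ((2:ℝ)⁻¹)^(i+1) ≤ R i then ((2:ℝ)⁻¹)^(i+1) else 0) := by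
    intro i
    rw [hR]
    rw [bexpRem]
  have hR0 : R 0 = t := rfl
  set s : ℕ → Bool := fun i => decide (((2:ℝ)⁻¹)^(i+1) ≤ R i) with hs
  have hinv : ∀ i, 0 ≤ R i ∧ R i ≤ ((2:ℝ)⁻¹)^i := by
    intro i
    induction i with
    | zero => constructor <;> simpa [hR0]
    | succ m ih =>
      rw [hRsucc]
      by_cases hc : ((2:ℝ)⁻¹)^(m+1) ≤ R m
      · rw [if_pos hc]
        constructor
        · linarith [ih.1]
        · have : ((2:ℝ)⁻¹)^m - ((2:ℝ)⁻¹)^(m+1) = ((2:ℝ)⁻¹)^(m+1) := by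
            rw [pow_succ]; ring
          linarith [ih.2]
      · rw [if_neg hc]
        simp only [sub_zero]
        constructor
        · exact ih.1
        · linarith [not_le.mp hc]
  set f : ℕ → ℝ := fun i => if s i then ((2:ℝ)⁻¹)^(i+1) else 0 with hf
  have hfR : ∀ i, f i = (if ((2:ℝ)⁻¹)^(i+1) ≤ R i then ((2:ℝ)⁻¹)^(i+1) else 0) := by
    intro i
    simp only [hf, hs, decide_eq_true_eq]
  have hpartial : ∀ m, ∑ i ∈ Finset.range m, f i = t - R m := by
    intro m
    induction m with
    | zero => simp [hR0]
    | succ k ih =>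
      rw [Finset.sum_range_succ, ih, hfR, hRsucc]
      ring
  have hsummable : Summable f := by
    apply Summable.of_nonneg_of_le _ _ summable_halfpow
    · intro i; by_cases h : s i <;> simp [hf, h, pow_nonneg]
    · intro i; by_cases h : s i <;> simp [hf, h, pow_nonneg]
  have hRlim : Tendsto R atTop (nhds 0) := by
    apply squeeze_zero (fun i => (hinv i).1) (fun i => (hinv i).2)
    exact tendsto_pow_atTop_nhds_zero_of_lt_one (by norm_num) (by norm_num)
  have hplim : Tendsto (fun m => ∑ i ∈ Finset.range m, f i) atTop (nhds t) := by
    have : (fun m => ∑ i ∈ Finset.range m, f i) = fun m => t - R m := funext hpartial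
    rw [this]
    simpa using (tendsto_const_nhds (x := t)).sub hRlim
  have := hsummable.hasSum.tendsto_sum_nat
  have heq : ∑' i, f i = t := tendsto_nhds_unique this hplim
  exact ⟨s, heq⟩

lemma exists_coord_embedding (X : Type*) [TopologicalSpace X] [CompactSpace X]
    [TopologicalSpace.MetrizableSpace X] [Nonempty X] :
    ∃ jm : X → ℕ → ℝ, Continuous jm ∧ Function.Injective jm ∧
      ∀ x k, jm x k ∈ Set.Icc (0:ℝ) 1 := by
  letI := TopologicalSpace.metrizableSpaceMetric X
  obtain ⟨u, hu⟩ := TopologicalSpace.exists_dense_seq X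
  set jm : X → ℕ → ℝ := fun x k => dist x (u k) / (1 + dist x (u k)) with hjm
  have hcont : Continuous jm := by
    apply continuous_pi
    intro k
    apply Continuous.div
    · exact continuous_id.dist continuous_const
    · exact continuous_const.add (continuous_id.dist continuous_const)
    · intro x
      have := dist_nonneg (x := x) (y := u k)
      positivity
  have hmono : ∀ a b : ℝ, 0 ≤ a → 0 ≤ b → a / (1+a) = b / (1+b) → a = b := by
    intro a b ha hb hab
    have h1 : (0:ℝ) < 1 + a := by linarith
    have h2 : (0:ℝ) < 1 + b := by linarith
    field_simp at hab
    linarith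
  have hinj : Function.Injective jm := by
    intro x x' hxx
    have hdists : ∀ k, dist x (u k) = dist x' (u k) := by
      intro k
      have := congrFun hxx k
      exact hmono _ _ dist_nonneg dist_nonneg this
    -- x in closure of range u
    have hx_cl : x ∈ closure (Set.range u) := by
      rw [hu.closure_range]; trivial
    have hinf : Metric.infDist x (Set.range u) = 0 := Metric.infDist_zero_of_mem_closure hx_cl
    have hlt : ∀ ε : ℝ, 0 < ε → dist x x' < 2 * ε := by
      intro ε hε
      have : Metric.infDist x (Set.range u) < ε := by rw [hinf]; exact hε
      obtain ⟨y, hy, hdy⟩ := (Metric.infDist_lt_iff (Set.range_nonempty u)).mp this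
      obtain ⟨k, rfl⟩ := hy
      have htri : dist x x' ≤ dist x (u k) + dist (u k) x' := dist_triangle _ _ _
      rw [dist_comm (u k) x', ← hdists k] at htri
      linarith
    have : dist x x' ≤ 0 := by
      by_contra hpos
      push_neg at hpos
      have := hlt (dist x x' / 4) (by linarith)
      linarith
    exact dist_le_zero.mp this
  refine ⟨jm, hcont, hinj, ?_⟩
  intro x k
  constructor
  · have := dist_nonneg (x := x) (y := u k); positivity
  · have hd := dist_nonneg (x := x) (y := u k)
    rw [div_le_one (by positivity)]
    linarith

end P4

theorem stmt3 (G : Type*) [Group G] [Countable G] (hG : ¬ IsAmenable G) :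
    ∃ n : ℕ, 0 < n ∧
      ∀ (X : Type) [TopologicalSpace X] [CompactSpace X]
        [TopologicalSpace.MetrizableSpace X] [MulAction G X],
        (∀ g : G, Continuous fun x : X => g • x) →
        ∃ Y : Set (G → Fin n), IsCompact Y ∧
          (∀ (g : G) (x : G → Fin n), x ∈ Y → bshift (Fin n) g x ∈ Y) ∧
          ∃ φ : Y → X, Continuous φ ∧ Function.Surjective φ ∧
            ∀ (g : G) (x : G → Fin n) (hx : x ∈ Y) (hgx : bshift (Fin n) g x ∈ Y),
              φ ⟨bshift (Fin n) g x, hgx⟩ = g • φ ⟨x, hx⟩ := by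
  classical
  obtain ⟨D, h1D, hdbl⟩ := exists_doubling hG
  obtain ⟨ψ, hψinj, hψmem⟩ := exists_pair_injection D hdbl
  haveI : Nonempty (Symb D) := ⟨(none, false)⟩
  set n : ℕ := Fintype.card (Symb D) with hn
  have hnpos : 0 < n := Fintype.card_pos
  set E : Fin n ≃ Symb D := (Fintype.equivFin (Symb D)).symm with hE
  refine ⟨n, hnpos, ?_⟩
  intro X _ _ _ _ hXc
  rcases isEmpty_or_nonempty X with hXe | hXne
  · -- X empty
    refine ⟨∅, isCompact_empty, by simp, ?_⟩
    refine ⟨fun y => (Set.notMem_empty _ y.2).elim, ?_, ?_, ?_⟩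
    · constructor
      intro s hs
      have : ((fun y : (∅ : Set (G → Fin n)) => (Set.notMem_empty _ y.2).elim) ⁻¹' s) = ∅ :=
        Set.eq_empty_of_isEmpty _
      rw [this]
      exact isOpen_empty
    · intro x
      exact (hXe.false x).elim
    · intro g x hx hgx
      exact absurd hx (Set.notMem_empty x)
  · -- X nonempty
    obtain ⟨jm, hjmc, hjmi, hjmIcc⟩ := exists_coord_embedding X
    set e : X → G → ℕ → ℝ := fun x g => jm (g⁻¹ • x) with he
    have he_cont : Continuous e := by
      apply continuous_pi
      intro g
      exact hjmc.comp (hXc g⁻¹)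
    have he_inj : Function.Injective e := by
      intro x x' hxx
      have h1 := congrFun hxx 1
      simp only [he, inv_one, one_smul] at h1
      exact hjmi h1
    have he_equiv : ∀ (g : G) (x : X), e (g • x) = bshift (ℕ → ℝ) g (e x) := by
      intro g x
      funext h
      show jm (h⁻¹ • g • x) = jm ((g⁻¹ * h)⁻¹ • x)
      rw [mul_inv_rev, inv_inv, mul_smul]
    set ρ : (G → Fin n) → G → ℕ → ℝ :=
      fun x g m => bexp (fun i => Phi D h1D E x g (Nat.pairEquiv (m, i))) with hρ
    have hρ_cont : Continuous ρ := by
      apply continuous_pi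
      intro g
      apply continuous_pi
      intro m
      apply continuous_bexp.comp
      apply continuous_pi
      intro i
      exact continuous_bitAt D h1D E g (Nat.pairEquiv (m, i))
    have hρ_equiv : ∀ (g : G) (x : G → Fin n),
        ρ (bshift (Fin n) g x) = bshift (ℕ → ℝ) g (ρ x) := by
      intro g x
      funext h m
      show bexp _ = bexp _
      congr 1
      funext i
      exact Phi_shift D h1D E g x h (Nat.pairEquiv (m, i))
    have hρ_surj : ∀ w : G → ℕ → ℝ, (∀ g m, w g m ∈ Set.Icc (0:ℝ) 1) →
        ∃ x, ρ x = w := by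
      intro w hw
      have hsm : ∀ g m, ∃ s : ℕ → Bool, bexp s = w g m :=
        fun g m => bexp_surj (hw g m).1 (hw g m).2
      choose sb hsb using hsm
      set y : G → ℕ → Bool := fun g j =>
        sb g (Nat.pairEquiv.symm j).1 (Nat.pairEquiv.symm j).2 with hy
      obtain ⟨x, hx⟩ := Phi_surjective D h1D E ψ hψinj hψmem y
      refine ⟨x, ?_⟩
      funext g m
      show bexp (fun i => Phi D h1D E x g (Nat.pairEquiv (m, i))) = w g m
      rw [hx]
      have : (fun i => y g (Nat.pairEquiv (m, i))) = sb g m := by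
        funext i
        simp only [hy, Equiv.symm_apply_apply]
      rw [this, hsb]
    -- the subshift
    set Y : Set (G → Fin n) := ρ ⁻¹' (Set.range e) with hY
    have hrange_compact : IsCompact (Set.range e) := isCompact_range he_cont
    have hrange_closed : IsClosed (Set.range e) := hrange_compact.isClosed
    have hYclosed : IsClosed Y := hrange_closed.preimage hρ_cont
    have hYcompact : IsCompact Y := hYclosed.isCompact
    have hYinv : ∀ (g : G) (x : G → Fin n), x ∈ Y → bshift (Fin n) g x ∈ Y := by
      intro g x hx
      obtain ⟨xb, hxb⟩ := hx
      show ρ (bshift (Fin n) g x) ∈ Set.range e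
      rw [hρ_equiv, ← hxb, ← he_equiv]
      exact ⟨g • xb, rfl⟩
    -- the factor map
    set φ : Y → X := fun y => Function.invFun e (ρ y.1) with hφ
    have heφ : ∀ y : Y, e (φ y) = ρ y.1 := by
      intro y
      apply Function.invFun_eq
      obtain ⟨xb, hxb⟩ := y.2
      exact ⟨xb, hxb⟩
    have hce : Topology.IsClosedEmbedding e := he_cont.isClosedEmbedding he_inj
    have hφ_cont : Continuous φ := by
      rw [hce.toIsEmbedding.toIsInducing.continuous_iff]
      have : e ∘ φ = fun y : Y => ρ y.1 := funext heφ
      rw [this]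
      exact hρ_cont.comp continuous_subtype_val
    have hφ_surj : Function.Surjective φ := by
      intro xb
      obtain ⟨x, hx⟩ := hρ_surj (e xb) (fun g m => hjmIcc (g⁻¹ • xb) m)
      have hxY : x ∈ Y := ⟨xb, hx.symm⟩
      refine ⟨⟨x, hxY⟩, ?_⟩
      show Function.invFun e (ρ x) = xb
      rw [hx]
      exact Function.leftInverse_invFun he_inj xb
    refine ⟨Y, hYcompact, hYinv, φ, hφ_cont, hφ_surj, ?_⟩
    intro g x hx hgx
    apply he_inj
    rw [he_equiv]
    rw [heφ ⟨bshift (Fin n) g x, hgx⟩, heφ ⟨x, hx⟩]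
    exact hρ_equiv g x
end

section
/- Let G be a countable group containing a subgroup isomorphic to the free group F₂ on two generators. Then for every continuous action of G on a compact metrizable space X, there is a G-invariant compact subset Y ⊆ 2^G = {1,2}^G (with the shift action and product topology) and a continuous G-equivariant surjection from Y onto X. -/
/-!
By the Hausdorff–Alexandroff theorem there is a continuous surjection `c : 2^ℕ → X`. The points
`w ∈ (2^ℕ)^G` with `c (w g) = g⁻¹ • c (w 1)` for all `g` form a subshift, which maps equivariantly
onto `X` by `w ↦ c (w 1)`. It remains to see that `(2^ℕ)^G` is a factor of `2^G`. With `a, b` the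
images of the free generators and `Δₐ x g = x (g a) - x g`, the map
`x ↦ (g ↦ (n ↦ (Δ_b (Δₐ)ⁿ x) g))` is continuous and equivariant, and by compactness it is onto as
soon as `x ↦ (Δₐ x, Δ_b x)` is. That is, increments of `x` along the edges of the right Schreier
graph of `⟨a, b⟩` can be prescribed arbitrarily: this graph is a forest because `F₂` acts freely,
and a solution is read off an equivariant section of the skew-product action of `F₂` on `G × 2`.
-/

open Function

theorem MulAction.exists_section_of_free {H P Q : Type*} [Group H] [MulAction H P]
    [MulAction H Q] (π : P → Q) (hπ : ∀ (h : H) p, π (h • p) = h • π p)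
    (hπ_surj : Surjective π) (hfree : ∀ q : Q, Injective fun h : H => h • q) :
    ∃ s : Q → P, (∀ q, π (s q) = q) ∧ ∀ (h : H) q, s (h • q) = h • s q := by
  let r : Q → Q := fun q => (Quotient.mk (orbitRel H Q) q).out
  have hr_smul (h : H) (q : Q) : r (h • q) = r q :=
    congrArg Quotient.out (Quotient.sound (mem_orbit q h))
  have hr (q : Q) : ∃ h : H, h • r q = q := (orbitRel H Q).iseqv.symm (Quotient.mk_out q)
  choose t ht using hr
  choose p₀ hp₀ using hπ_surj
  refine ⟨fun q => t q • p₀ (r q), fun q => by rw [hπ, hp₀, ht], fun h q => ?_⟩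
  have ht_smul : t (h • q) = h * t q := hfree (r q) <| by
    change t (h • q) • r q = (h * t q) • r q
    rw [mul_smul, ht q, ← hr_smul h q, ht]
  simp only [hr_smul, ht_smul, mul_smul]

section SkewProduct

variable {α G M : Type*} [Group G] [AddGroup M]

def skewTranslate (c : G) (u : G → M) : Equiv.Perm (G × M) where
  toFun p := (p.1 * c, p.2 + u p.1)
  invFun p := (p.1 * c⁻¹, p.2 - u (p.1 * c⁻¹))
  left_inv p := by simp
  right_inv p := by simp

def skewProduct (ι : FreeGroup α →* G) (w : α → G → M) : FreeGroup α →* Equiv.Perm (G × M) :=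
  FreeGroup.lift fun i => (skewTranslate (ι (.of i)) (w i))⁻¹

lemma skewProduct_apply_fst (ι : FreeGroup α →* G) (w : α → G → M) (h : FreeGroup α)
    (p : G × M) : (skewProduct ι w h p).1 = p.1 * (ι h)⁻¹ := by
  induction h using FreeGroup.induction_on generalizing p with
  | C1 => simp
  | of i => rfl
  | inv_of i _ =>
    simp only [skewProduct, map_inv, FreeGroup.lift_apply_of, inv_inv]
    rfl
  | mul h k ihh ihk => simp [ihh, ihk, mul_assoc]

theorem exists_increments_of_injective (ι : FreeGroup α →* G) (hι : Injective ι)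
    (w : α → G → M) : ∃ x : G → M, ∀ i g, x (g * ι (.of i)) = x g + w i g := by
  let : MulAction (FreeGroup α) (G × M) := .compHom _ (skewProduct ι w)
  -- `h • g = g * (ι h)⁻¹`, through `Gᵐᵒᵖ` acting by right multiplication
  let : MulAction (FreeGroup α) G := .compHom _ ((MulEquiv.inv' G).toMonoidHom.comp ι)
  obtain ⟨s, hs_fst, hs_smul⟩ := MulAction.exists_section_of_free (H := FreeGroup α)
    (Prod.fst : G × M → G) (fun h p => skewProduct_apply_fst ι w h p) Prod.fst_surjective
    (fun g h k hhk => hι (inv_injective (mul_left_cancel (a := g) hhk)))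
  refine ⟨fun g => (s g).2, fun i g => ?_⟩
  have hs_gen : s (g * ι (.of i)) = skewTranslate (ι (.of i)) (w i) (s g) := by
    simpa [skewProduct, MulAction.compHom_smul_def] using hs_smul (.of i)⁻¹ g
  change (s _).2 = (s g).2 + w i g
  rw [hs_gen]
  exact congrArg ((s g).2 + w i ·) (hs_fst g)

end SkewProduct

section IterateCoding

variable {Z W : Type*} {T : Z → Z} {S : Z → W}

lemma exists_forall_le_iterate_eq [Nonempty Z] (hTS : ∀ z w, ∃ x, T x = z ∧ S x = w) (N : ℕ)
    (ω : ℕ → W) : ∃ x, ∀ k ≤ N, S (T^[k] x) = ω k := by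
  induction N generalizing ω with
  | zero =>
    obtain ⟨x, -, hx⟩ := hTS (Classical.arbitrary Z) (ω 0)
    exact ⟨x, fun k hk => by rwa [Nat.le_zero.mp hk]⟩
  | succ N ih =>
    obtain ⟨y, hy⟩ := ih (ω ·.succ)
    obtain ⟨x, rfl, hx⟩ := hTS y (ω 0)
    refine ⟨x, fun k hk => ?_⟩
    cases k with
    | zero => exact hx
    | succ k => exact hy k (Nat.succ_le_succ_iff.mp hk)

theorem surjective_iterate_coding [TopologicalSpace Z] [CompactSpace Z] [Nonempty Z]
    [TopologicalSpace W] [T2Space W] (hT : Continuous T) (hS : Continuous S)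
    (hTS : ∀ z w, ∃ x, T x = z ∧ S x = w) : Surjective fun x n => S (T^[n] x) := by
  intro ω
  let U : ℕ → Set Z := fun N => {x | ∀ k ≤ N, S (T^[k] x) = ω k}
  have hU_closed (N : ℕ) : IsClosed (U N) := by
    simp only [U, Set.ofPred_forall]
    exact isClosed_biInter fun k _ => isClosed_eq (hS.comp (hT.iterate k)) continuous_const
  obtain ⟨x, hx⟩ := IsCompact.nonempty_iInter_of_sequence_nonempty_isCompact_isClosed U
    (fun N x hx k hk => hx k (hk.trans N.le_succ)) (exists_forall_le_iterate_eq hTS · ω)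
    (hU_closed 0).isCompact hU_closed
  exact ⟨x, funext fun n => Set.mem_iInter.mp hx n n le_rfl⟩

end IterateCoding

section RightDifference

variable {G M : Type*} [Group G] [AddCommGroup M]

def rightDiff (a : G) (x : G → M) : G → M := fun g => x (g * a) - x g

def codeMap (a b : G) (x : G → M) : G → ℕ → M := fun g n => rightDiff b ((rightDiff a)^[n] x) g

lemma rightDiff_bshift (a g : G) (x : G → M) :
    rightDiff a (bshift M g x) = bshift M g (rightDiff a x) := by
  funext h
  simp only [rightDiff, bshift, mul_assoc]

lemma codeMap_bshift (a b g : G) (x : G → M) :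
    codeMap a b (bshift M g x) = bshift (ℕ → M) g (codeMap a b x) := by
  funext h n
  have hcomm : Function.Commute (rightDiff a) (bshift M g) := rightDiff_bshift a g
  simp only [codeMap, hcomm.iterate_left n x, rightDiff_bshift]
  rfl

variable [TopologicalSpace M] [ContinuousSub M]

lemma continuous_rightDiff (a : G) : Continuous (rightDiff (M := M) a) :=
  continuous_pi fun g => (continuous_apply (g * a)).sub (continuous_apply g)

lemma continuous_codeMap (a b : G) : Continuous (codeMap (M := M) a b) :=
  continuous_pi fun g => continuous_pi fun n =>
    (continuous_apply g).comp ((continuous_rightDiff b).comp ((continuous_rightDiff a).iterate n))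

theorem surjective_codeMap [CompactSpace M] [T2Space M] (ι : FreeGroup (Fin 2) →* G)
    (hι : Injective ι) : Surjective (codeMap (M := M) (ι (.of 0)) (ι (.of 1))) := by
  refine swap_bijective.surjective.comp <|
    surjective_iterate_coding (continuous_rightDiff _) (continuous_rightDiff _) fun u v => ?_
  obtain ⟨x, hx⟩ := exists_increments_of_injective ι hι ![u, v]
  exact ⟨x, funext fun g => sub_eq_of_eq_add' (hx 0 g),
    funext fun g => sub_eq_of_eq_add' (hx 1 g)⟩

end RightDifference

section OrbitLifts

variable {G K X : Type*} [Group G] [MulAction G X] {c : K → X} {w : G → K}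

def orbitLifts (c : K → X) : Set (G → K) := {w | ∀ g, c (w g) = g⁻¹ • c (w 1)}

lemma isClosed_orbitLifts [TopologicalSpace K] [TopologicalSpace X] [T2Space X]
    [ContinuousConstSMul G X] (hc : Continuous c) : IsClosed (orbitLifts (G := G) c) := by
  simp only [orbitLifts, Set.ofPred_forall]
  exact isClosed_iInter fun g =>
    isClosed_eq (hc.comp (continuous_apply g)) ((hc.comp (continuous_apply 1)).const_smul g⁻¹)

lemma bshift_mem_orbitLifts (hw : w ∈ orbitLifts c) (g : G) : bshift K g w ∈ orbitLifts c := by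
  intro h
  simp only [bshift, hw (g⁻¹ * _), hw g⁻¹, mul_one, mul_inv_rev, inv_inv, mul_smul]

lemma apply_bshift_one_of_mem_orbitLifts (hw : w ∈ orbitLifts c) (g : G) :
    c (bshift K g w 1) = g • c (w 1) := by
  simp only [bshift, mul_one, hw g⁻¹, inv_inv]

lemma exists_mem_orbitLifts (hc : Surjective c) (x : X) :
    ∃ w ∈ orbitLifts (G := G) c, c (w 1) = x := by
  choose σ hσ using hc
  exact ⟨fun g => σ (g⁻¹ • x), fun g => by simp only [hσ, inv_one, one_smul],
    by simp only [hσ, inv_one, one_smul]⟩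

end OrbitLifts

theorem stmt4_general (G : Type*) [Group G]
    (ι : FreeGroup (Fin 2) →* G) (hι : Function.Injective ι) :
    ∀ (X : Type) [TopologicalSpace X] [CompactSpace X]
      [TopologicalSpace.MetrizableSpace X] [MulAction G X],
      (∀ g : G, Continuous fun x : X => g • x) →
      ∃ Y : Set (G → Fin 2), IsCompact Y ∧
        (∀ (g : G) (x : G → Fin 2), x ∈ Y → bshift (Fin 2) g x ∈ Y) ∧
        ∃ φ : Y → X, Continuous φ ∧ Function.Surjective φ ∧
          ∀ (g : G) (x : G → Fin 2) (hx : x ∈ Y) (hgx : bshift (Fin 2) g x ∈ Y),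
            φ ⟨bshift (Fin 2) g x, hgx⟩ = g • φ ⟨x, hx⟩ := by
  intro X _ _ _ _ hcont
  have : ContinuousConstSMul G X := ⟨hcont⟩
  rcases isEmpty_or_nonempty X with _ | _
  · exact ⟨∅, isCompact_empty, fun _ _ h => h, fun y => y.2.elim, continuous_of_discreteTopology,
      isEmptyElim, fun _ _ h => h.elim⟩
  let := TopologicalSpace.metrizableSpaceMetric X
  obtain ⟨c, hc, hc_surj⟩ := exists_nat_bool_continuous_surjective_of_compact X
  let e : (ℕ → Fin 2) ≃ₜ (ℕ → Bool) := .piCongrRight fun _ => finTwoEquiv.toHomeomorphOfDiscrete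
  let Ψ := codeMap (M := Fin 2) (ι (.of 0)) (ι (.of 1))
  have hΨ : Continuous Ψ := continuous_codeMap _ _
  refine ⟨Ψ ⁻¹' orbitLifts (c ∘ e),
    ((isClosed_orbitLifts (hc.comp e.continuous)).preimage hΨ).isCompact,
    fun g x hx => by
      simpa only [Set.mem_preimage, Ψ, codeMap_bshift] using bshift_mem_orbitLifts hx g,
    fun y => c (e (Ψ y 1)), by fun_prop, fun x => ?_, fun g x hx hgx => ?_⟩
  · obtain ⟨w, hw, rfl⟩ := exists_mem_orbitLifts (G := G) (hc_surj.comp e.surjective) x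
    obtain ⟨y, rfl⟩ := surjective_codeMap ι hι w
    exact ⟨⟨y, hw⟩, rfl⟩
  · simpa only [Ψ, codeMap_bshift, comp_apply] using apply_bshift_one_of_mem_orbitLifts hx g

theorem stmt4 (G : Type*) [Group G] [Countable G]
    (ι : FreeGroup (Fin 2) →* G) (hι : Function.Injective ι) :
    ∀ (X : Type) [TopologicalSpace X] [CompactSpace X]
      [TopologicalSpace.MetrizableSpace X] [MulAction G X],
      (∀ g : G, Continuous fun x : X => g • x) →
      ∃ Y : Set (G → Fin 2), IsCompact Y ∧
        (∀ (g : G) (x : G → Fin 2), x ∈ Y → bshift (Fin 2) g x ∈ Y) ∧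
        ∃ φ : Y → X, Continuous φ ∧ Function.Surjective φ ∧
          ∀ (g : G) (x : G → Fin 2) (hx : x ∈ Y) (hgx : bshift (Fin 2) g x ∈ Y),
            φ ⟨bshift (Fin 2) g x, hgx⟩ = g • φ ⟨x, hx⟩ :=
  stmt4_general G ι hι
end

section
/- Let G be a countably infinite group. For every continuous action of G on a Polish space X, there is a G-invariant Polish subspace Y ⊆ 4^G = {1,2,3,4}^G (i.e. a G-invariant G_δ subset of the compact space 4^G with the shift action) and a continuous G-equivariant surjection from Y onto X. -/
/-!
Read each of the four symbols as two bits, a marker and a data bit. Let `Y` be the set of configurations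
with exactly one marked site `s` (the anchor) such that for every `m` the data bit is set at some
site `s * c (m, j)`, where `c : ℕ × ℕ ↪ G`; the least such `j` is `z m`, which defines `z ∈ ℕ^ℕ`
read off relative to the anchor. With `r : ℕ^ℕ → X` a continuous surjection (`X` is Polish), send
`y` to `s • r z`. Shifting by `g` moves the anchor to `g * s` and does not change `z`, so this map is
equivariant; the anchor and `z` are locally constant on `Y`, so it is continuous; `Y` is `G_δ`
because `G` is countable, and any `z` and anchor `1` can be written down, so the map is onto.
-/

open Set Topology

theorem continuousOn_sInf_setOf_mem {Z : Type*} [TopologicalSpace Z] {U : ℕ → Set Z}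
    (hU : ∀ j, IsClopen (U j)) : ContinuousOn (fun z => sInf {j | z ∈ U j}) (⋃ j, U j) := by
  intro z₀ hz₀
  set j₀ := sInf {j | z₀ ∈ U j}
  have hj₀ : z₀ ∈ U j₀ := Nat.sInf_mem (mem_iUnion.1 hz₀)
  set V := U j₀ ∩ ⋂ i ∈ Iio j₀, (U i)ᶜ
  have hV : IsOpen V :=
    (hU j₀).isOpen.inter ((finite_Iio j₀).isOpen_biInter fun i _ => (hU i).compl.isOpen)
  have hz₀V : z₀ ∈ V :=
    ⟨hj₀, mem_iInter₂.2 fun i hi => Nat.notMem_of_lt_sInf (s := {j | z₀ ∈ U j}) hi⟩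
  refine (continuousAt_const (y := j₀)).congr
    (Filter.eventuallyEq_of_mem (hV.mem_nhds hz₀V) ?_) |>.continuousWithinAt
  rintro z ⟨hz, hzlt⟩
  refine le_antisymm (le_csInf ⟨j₀, hz⟩ fun i hi => not_lt.1 fun hlt => ?_) (Nat.sInf_le hz)
  exact mem_iInter₂.1 hzlt i hlt hi

theorem isClopen_setOf_apply {ι K : Type*} [TopologicalSpace K] [DiscreteTopology K] (i : ι)
    (P : K → Prop) : IsClopen {y : ι → K | P (y i)} :=
  (isClopen_discrete {a | P a}).preimage (continuous_apply i)

theorem isOpen_setOf_apply₂ {ι K : Type*} [TopologicalSpace K] [DiscreteTopology K] (i i' : ι)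
    (P : K → K → Prop) : IsOpen {y : ι → K | P (y i) (y i')} :=
  (isOpen_discrete {a : K × K | P a.1 a.2}).preimage
    (by fun_prop : Continuous fun y : ι → K => (y i, y i'))

namespace BernoulliCoding

variable {G K : Type*} [Group G]

section Anchor

variable (M : Set K)

-- Only meaningful when `y` has exactly one site in `M`.
noncomputable def anchor (y : G → K) : G := Classical.epsilon fun s => y s ∈ M

variable {M}

theorem anchor_mem {y : G → K} (h : ∃ s, y s ∈ M) : y (anchor M y) ∈ M :=
  Classical.epsilon_spec h

theorem anchor_eq {y : G → K} (h : ∃! s, y s ∈ M) {s : G} (hs : y s ∈ M) : anchor M y = s :=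
  h.unique (anchor_mem h.exists) hs

theorem existsUnique_bshift_mem {y : G → K} (h : ∃! s, y s ∈ M) (g : G) :
    ∃! s, bshift K g y s ∈ M := by
  obtain ⟨s, hs, huniq⟩ := h
  refine ⟨g * s, by simpa [bshift] using hs, fun t ht => ?_⟩
  rw [← huniq _ ht, mul_inv_cancel_left]

theorem anchor_bshift {y : G → K} (h : ∃! s, y s ∈ M) (g : G) :
    anchor M (bshift K g y) = g * anchor M y :=
  anchor_eq (existsUnique_bshift_mem h g) (by simpa [bshift] using anchor_mem h.exists)

end Anchor

variable (M B : Set K) (c : ℕ × ℕ → G)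

noncomputable def decodeAt (s : G) (y : G → K) : ℕ → ℕ :=
  fun m => sInf {j | y (s * c (m, j)) ∈ B}

def codingSet : Set (G → K) :=
  {y | (∃! s, y s ∈ M) ∧ ∀ m, ∃ j, y (anchor M y * c (m, j)) ∈ B}

noncomputable def decode {X : Type*} [SMul G X] (r : (ℕ → ℕ) → X) (y : G → K) : X :=
  anchor M y • r (decodeAt B c (anchor M y) y)

variable {M B c}

theorem decodeAt_bshift (g s : G) (y : G → K) :
    decodeAt B c (g * s) (bshift K g y) = decodeAt B c s y := by
  ext m
  simp [decodeAt, bshift, mul_assoc]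

theorem bshift_mem_codingSet {y : G → K} (hy : y ∈ codingSet M B c) (g : G) :
    bshift K g y ∈ codingSet M B c := by
  refine ⟨existsUnique_bshift_mem hy.1 g, fun m => ?_⟩
  rw [anchor_bshift hy.1]
  simpa [bshift, mul_assoc] using hy.2 m

theorem decode_bshift {X : Type*} [MulAction G X] (r : (ℕ → ℕ) → X) {y : G → K}
    (hy : ∃! s, y s ∈ M) (g : G) :
    decode M B c r (bshift K g y) = g • decode M B c r y := by
  simp only [decode, anchor_bshift hy, decodeAt_bshift, mul_smul]

theorem surjOn_decode {X : Type*} [MulAction G X] {r : (ℕ → ℕ) → X}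
    (hr : Function.Surjective r) (hc : Function.Injective c)
    (hMB : Function.Surjective fun k : K => ((k ∈ M : Prop), (k ∈ B : Prop))) :
    SurjOn (decode M B c r) (codingSet M B c) univ := by
  intro x _
  obtain ⟨z, rfl⟩ := hr x
  -- mark the identity, and write `z m` in unary along the sites `c (m, ·)`
  set y : G → K := fun t => Function.surjInv hMB (t = 1, ∃ m, t = c (m, z m))
  have hy : ∀ t, (y t ∈ M ↔ t = 1) ∧ (y t ∈ B ↔ ∃ m, t = c (m, z m)) := fun t => by
    have := Function.surjInv_eq hMB (t = 1, ∃ m, t = c (m, z m))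
    simp only [Prod.ext_iff] at this
    exact ⟨this.1.to_iff, this.2.to_iff⟩
  have hunique : ∃! s, y s ∈ M := ⟨1, (hy 1).1.2 rfl, fun t ht => (hy t).1.1 ht⟩
  have hanchor : anchor M y = 1 := anchor_eq hunique ((hy 1).1.2 rfl)
  have hbit : ∀ m j, y (c (m, j)) ∈ B ↔ j = z m := fun m j => by
    simp only [hy, hc.eq_iff, Prod.ext_iff]
    exact ⟨fun ⟨m', hm, hj⟩ => hm ▸ hj, fun hj => ⟨m, rfl, hj⟩⟩
  refine ⟨y, ⟨hunique, fun m => ⟨z m, ?_⟩⟩, ?_⟩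
  · simp [hanchor, hbit]
  · have : decodeAt B c 1 y = z := funext fun m => by simp [decodeAt, hbit]
    simp [decode, hanchor, this]

variable [TopologicalSpace K] [DiscreteTopology K]

theorem isGδ_codingSet [Countable G] : IsGδ (codingSet M B c) := by
  have hA : {y : G → K | ∃! s, y s ∈ M} =
      (⋃ s, {y | y s ∈ M}) ∩ ⋂ p : G × G, {y | y p.1 ∈ M → y p.2 ∈ M → p.1 = p.2} := by
    ext y
    simp only [mem_inter_iff, mem_iUnion, mem_iInter, Prod.forall]
    exact ⟨fun h => ⟨h.exists, fun s t hs ht => h.unique hs ht⟩,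
      fun ⟨⟨s, hs⟩, huniq⟩ => ⟨s, hs, fun t ht => huniq t s ht hs⟩⟩
  have hcoding : codingSet M B c = {y | ∃! s, y s ∈ M} ∩
      ⋂ m : ℕ, ⋃ p : G × ℕ, {y | y p.1 ∈ M ∧ y (p.1 * c (m, p.2)) ∈ B} := by
    ext y
    simp only [codingSet, mem_inter_iff, mem_iInter, mem_iUnion, Prod.exists]
    refine and_congr_right fun h => forall_congr' fun m => ⟨fun ⟨j, hj⟩ => ?_, ?_⟩
    · exact ⟨_, j, anchor_mem h.exists, hj⟩
    · rintro ⟨s, j, hs, hj⟩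
      exact ⟨j, by rwa [anchor_eq h hs]⟩
  rw [hcoding, hA]
  exact ((isOpen_iUnion fun s => (isClopen_setOf_apply s (· ∈ M)).isOpen).isGδ.inter
    (.iInter_of_isOpen fun p : G × G =>
      isOpen_setOf_apply₂ p.1 p.2 fun a b => a ∈ M → b ∈ M → p.1 = p.2)).inter
    (.iInter_of_isOpen fun m => isOpen_iUnion fun p : G × ℕ =>
      isOpen_setOf_apply₂ p.1 (p.1 * c (m, p.2)) fun a b => a ∈ M ∧ b ∈ B)

theorem continuousOn_decodeAt (s : G) :
    ContinuousOn (decodeAt B c s) {y : G → K | ∀ m, ∃ j, y (s * c (m, j)) ∈ B} :=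
  continuousOn_pi.2 fun m => (continuousOn_sInf_setOf_mem fun j =>
    isClopen_setOf_apply (s * c (m, j)) (· ∈ B)).mono fun _ hy => mem_iUnion.2 (hy m)

theorem continuousOn_decode {X : Type*} [TopologicalSpace X] [SMul G X]
    [ContinuousConstSMul G X] {r : (ℕ → ℕ) → X} (hr : Continuous r) :
    ContinuousOn (decode M B c r) (codingSet M B c) := by
  intro y₀ hy₀
  set s₀ := anchor M y₀
  have hV : {y : G → K | y s₀ ∈ M} ∈ 𝓝 y₀ :=
    (isClopen_setOf_apply s₀ (· ∈ M)).isOpen.mem_nhds (anchor_mem hy₀.1.exists)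
  have hanchor : ∀ y ∈ codingSet M B c ∩ {y | y s₀ ∈ M}, anchor M y = s₀ :=
    fun y hy => anchor_eq hy.1.1 hy.2
  have hcont : ContinuousOn (fun y => s₀ • r (decodeAt B c s₀ y))
      (codingSet M B c ∩ {y | y s₀ ∈ M}) :=
    (continuous_const_smul s₀).comp_continuousOn (hr.comp_continuousOn
      (continuousOn_decodeAt s₀ |>.mono fun y hy => by simpa [hanchor y hy] using hy.1.2))
  refine (continuousWithinAt_inter hV).1 (hcont.congr (fun y hy => ?_) y₀ ⟨hy₀, ?_⟩)
  · simp only [decode, hanchor y hy]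
  · exact anchor_mem hy₀.1.exists

end BernoulliCoding

open BernoulliCoding

theorem surjective_mem_pair_fin_four :
    Function.Surjective fun k : Fin 4 => ((k ∈ ({1, 3} : Set (Fin 4)) : Prop),
      (k ∈ ({2, 3} : Set (Fin 4)) : Prop)) := by
  rintro ⟨p, q⟩
  by_cases hp : p <;> by_cases hq : q
  exacts [⟨3, by simp [hp, hq]⟩, ⟨1, by simp [hp, hq]⟩, ⟨2, by simp [hp, hq]⟩,
    ⟨0, by simp [hp, hq]⟩]

theorem stmt6 (G : Type*) [Group G] [Countable G] [Infinite G]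
    (X : Type) [TopologicalSpace X] [PolishSpace X] [MulAction G X]
    (hcont : ∀ g : G, Continuous fun x : X => g • x) :
    ∃ Y : Set (G → Fin 4), IsGδ Y ∧
      (∀ (g : G) (x : G → Fin 4), x ∈ Y → bshift (Fin 4) g x ∈ Y) ∧
      ∃ φ : Y → X, Continuous φ ∧ Function.Surjective φ ∧
        ∀ (g : G) (x : G → Fin 4) (hx : x ∈ Y) (hgx : bshift (Fin 4) g x ∈ Y),
          φ ⟨bshift (Fin 4) g x, hgx⟩ = g • φ ⟨x, hx⟩ := by
  rcases isEmpty_or_nonempty X with _ | _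
  · exact ⟨∅, .empty, fun _ _ h => h.elim, fun y => y.2.elim, continuous_of_discreteTopology,
      isEmptyElim, fun _ _ h => h.elim⟩
  have : ContinuousConstSMul G X := ⟨hcont⟩
  obtain ⟨r, hr, hr_surj⟩ := PolishSpace.exists_nat_nat_continuous_surjective X
  set c : ℕ × ℕ ↪ G := Nat.pairEquiv.toEmbedding.trans (Infinite.natEmbedding G)
  set Y := codingSet ({1, 3} : Set (Fin 4)) {2, 3} c
  refine ⟨Y, isGδ_codingSet, fun g y hy => bshift_mem_codingSet hy g,
    Y.domRestrict (decode {1, 3} {2, 3} c r), (continuousOn_decode hr).domRestrict,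
    surjOn_iff_surjective.1 (surjOn_decode hr_surj c.injective surjective_mem_pair_fin_four),
    fun g y hy _ => decode_bshift r hy.1 g⟩
end

section
/- Let G be a countable group and let G act in a Borel way on a standard Borel space Y. Suppose there is an uncountable G-invariant subset Y₀ ⊆ Y on which the action of G is free (g·y ≠ y for all y ∈ Y₀ and all g ≠ 1_G). Then for every Borel action of G on a standard Borel space X there is a G-invariant Borel set Z ⊆ Y and a G-equivariant Borel surjection from Z onto X. Moreover, if X has a G-fixed point (a point x₀ with g·x₀ = x₀ for all g ∈ G), then there is a G-equivariant Borel surjection from Y onto X. -/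
open Set Function Topology Filter

namespace Stmt7Helper

abbrev Cb := ℕ → Bool

def cylP (x : Cb) (N : ℕ) : Set Cb := {y | ∀ i < N, y i = x i}

lemma mem_cylP_self (x : Cb) (N : ℕ) : x ∈ cylP x N := fun _ _ => rfl

lemma cylP_anti {x : Cb} {N M : ℕ} (h : N ≤ M) : cylP x M ⊆ cylP x N :=
  fun _ hy i hi => hy i (lt_of_lt_of_le hi h)

lemma isOpen_cylP (x : Cb) (N : ℕ) : IsOpen (cylP x N) := by
  have : cylP x N = ⋂ i ∈ Finset.range N, (fun y : Cb => y i) ⁻¹' {x i} := by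
    ext y; simp [cylP]
  rw [this]
  exact isOpen_biInter_finset fun i _ =>
    IsOpen.preimage (continuous_apply i) (isOpen_discrete _)

lemma isClosed_cylP (x : Cb) (N : ℕ) : IsClosed (cylP x N) := by
  have : cylP x N = ⋂ i, ⋂ (_ : i < N), (fun y : Cb => y i) ⁻¹' {x i} := by
    ext y; simp [cylP]
  rw [this]
  exact isClosed_iInter fun i => isClosed_iInter fun _ =>
    IsClosed.preimage (continuous_apply i) (isClosed_discrete _)

lemma exists_cylP_subset {U : Set Cb} (hU : IsOpen U) {x : Cb} (hx : x ∈ U) :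
    ∃ N, cylP x N ⊆ U := by
  obtain ⟨I, u, hI, hsub⟩ := isOpen_pi_iff.1 hU x hx
  refine ⟨I.sup id + 1, fun y hy => hsub fun a ha => ?_⟩
  have : y a = x a := hy a (Nat.lt_succ_of_le (Finset.le_sup (f := id) ha))
  rw [this]; exact (hI a ha).2

lemma exists_ne_mem_cylP (x : Cb) (N : ℕ) : ∃ y ∈ cylP x N, y ≠ x := by
  refine ⟨Function.update x N (!(x N)), fun i hi => Function.update_of_ne (Nat.ne_of_lt hi) _ _, ?_⟩
  intro hcon
  have := congrFun hcon N
  rw [Function.update_self] at this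
  exact (Bool.not_ne_self (x N)) this

abbrev Node := Cb × ℕ

def cylN (p : Node) : Set Cb := cylP p.1 p.2

def NExt (p q : Node) : Prop := p.2 ≤ q.2 ∧ ∀ i < p.2, q.1 i = p.1 i

lemma NExt.refl {p : Node} : NExt p p := ⟨le_rfl, fun _ _ => Eq.refl _⟩

lemma NExt.trans {p q r : Node} (h1 : NExt p q) (h2 : NExt q r) : NExt p r :=
  ⟨le_trans h1.1 h2.1, fun i hi => (h2.2 i (lt_of_lt_of_le hi h1.1)).trans (h1.2 i hi)⟩

lemma NExt.cyl_subset {p q : Node} (h : NExt p q) : cylN q ⊆ cylN p :=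
  fun z hz i hi => (hz i (lt_of_lt_of_le hi h.1)).trans (h.2 i hi)

lemma mem_cylN (p : Node) : p.1 ∈ cylN p := mem_cylP_self _ _

lemma single_shrink {V : Set (Cb × Cb)} (hV : IsOpen V) (hVd : Dense V) (p q : Node) :
    ∃ p' q' : Node, NExt p p' ∧ NExt q q' ∧ cylN p' ×ˢ cylN q' ⊆ V := by
  have hbox : IsOpen (cylN p ×ˢ cylN q) := (isOpen_cylP _ _).prod (isOpen_cylP _ _)
  obtain ⟨z, hzV, hzbox⟩ := hVd.exists_mem_open hbox ⟨(p.1, q.1), mem_cylN p, mem_cylN q⟩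
  obtain ⟨u, v, hu, hv, hzu, hzv, huv⟩ :=
    isOpen_prod_iff.1 (hV.inter hbox) z.1 z.2 (by exact ⟨hzV, hzbox⟩)
  obtain ⟨N1, hN1⟩ := exists_cylP_subset hu hzu
  obtain ⟨N2, hN2⟩ := exists_cylP_subset hv hzv
  refine ⟨(z.1, max p.2 N1), (z.2, max q.2 N2),
    ⟨le_max_left _ _, fun i hi => hzbox.1 i hi⟩,
    ⟨le_max_left _ _, fun i hi => hzbox.2 i hi⟩, ?_⟩
  rintro ⟨a, b⟩ ⟨ha, hb⟩
  have : (a, b) ∈ u ×ˢ v :=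
    ⟨hN1 (cylP_anti (le_max_right _ _) ha), hN2 (cylP_anti (le_max_right _ _) hb)⟩
  exact (huv this).1

lemma finset_shrink {ι : Type*} [DecidableEq ι] {V : Set (Cb × Cb)} (hV : IsOpen V)
    (hVd : Dense V) (R : Finset (ι × ι)) (τ : ι → Node) :
    ∃ τ' : ι → Node, (∀ i, NExt (τ i) (τ' i)) ∧
      ∀ r ∈ R, r.1 ≠ r.2 → cylN (τ' r.1) ×ˢ cylN (τ' r.2) ⊆ V := by
  classical
  induction R using Finset.induction_on with
  | empty => exact ⟨τ, fun _ => NExt.refl, fun r hr => absurd hr (Finset.notMem_empty r)⟩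
  | @insert r R hrR ih =>
    obtain ⟨τ', hext, havd⟩ := ih
    by_cases hne : r.1 ≠ r.2
    · obtain ⟨p', q', hp', hq', hpq⟩ := single_shrink hV hVd (τ' r.1) (τ' r.2)
      set τ'' : ι → Node := Function.update (Function.update τ' r.1 p') r.2 q' with hτ''
      have hext2 : ∀ i, NExt (τ' i) (τ'' i) := by
        intro i
        rw [hτ'']
        by_cases h2 : i = r.2
        · subst h2; rw [Function.update_self]; exact hq'
        · rw [Function.update_of_ne h2]
          by_cases h1 : i = r.1
          · subst h1; rw [Function.update_self]; exact hp'
          · rw [Function.update_of_ne h1]; exact NExt.refl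
      have h1 : τ'' r.1 = p' := by
        rw [hτ'', Function.update_of_ne hne, Function.update_self]
      have h2 : τ'' r.2 = q' := by rw [hτ'', Function.update_self]
      refine ⟨τ'', fun i => (hext i).trans (hext2 i), ?_⟩
      intro r' hr' hne'
      rcases Finset.mem_insert.1 hr' with h | h
      · subst h; rw [h1, h2]; exact hpq
      · intro z hz
        exact havd r' h hne' ⟨(hext2 r'.1).cyl_subset hz.1, (hext2 r'.2).cyl_subset hz.2⟩
    · exact ⟨τ', hext, fun r' hr' hne' => by
        rcases Finset.mem_insert.1 hr' with h | h
        · exact absurd (h ▸ hne') hne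
        · exact havd r' h hne'⟩


def child (p : Node) (b : Bool) : Node :=
  (fun i => if i = p.2 then b else p.1 i, p.2 + 1)

lemma NExt_child (p : Node) (b : Bool) : NExt p (child p b) :=
  ⟨Nat.le_succ _, fun i hi => if_neg (Nat.ne_of_lt hi)⟩

lemma child_disjoint (p : Node) {b b' : Bool} (h : b ≠ b') :
    Disjoint (cylN (child p b)) (cylN (child p b')) := by
  rw [Set.disjoint_left]
  intro y hy hy'
  have h1 : y p.2 = b := by
    have := hy p.2 (Nat.lt_succ_self _)
    simpa [child] using this
  have h2 : y p.2 = b' := by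
    have := hy' p.2 (Nat.lt_succ_self _)
    simpa [child] using this
  exact h (h1 ▸ h2 ▸ rfl)

lemma dense_biInter_finset {V : ℕ → Set (Cb × Cb)} (hVo : ∀ m, IsOpen (V m))
    (hVd : ∀ m, Dense (V m)) (s : Finset ℕ) : Dense (⋂ m ∈ s, V m) := by
  classical
  induction s using Finset.induction_on with
  | empty => simpa using dense_univ
  | @insert a s ha ih =>
    rw [Finset.set_biInter_insert]
    exact (hVd a).inter_of_isOpen_left ih (hVo a)

def Inv (V : ℕ → Set (Cb × Cb)) (n : ℕ) (σ : (Fin n → Bool) → Node) : Prop :=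
  (∀ s, n ≤ (σ s).2) ∧
  (∀ s t, s ≠ t → Disjoint (cylN (σ s)) (cylN (σ t))) ∧
  (∀ s t, s ≠ t → ∀ m < n, cylN (σ s) ×ˢ cylN (σ t) ⊆ V m)

lemma inv_zero (V : ℕ → Set (Cb × Cb)) :
    Inv V 0 (fun _ => ((fun _ => true), 0)) := by
  have hsub : ∀ s t : Fin 0 → Bool, s = t := fun s t => funext fun i => i.elim0
  exact ⟨fun _ => le_rfl, fun s t h => absurd (hsub s t) h,
    fun s t h => absurd (hsub s t) h⟩

lemma step (V : ℕ → Set (Cb × Cb)) (hVo : ∀ m, IsOpen (V m)) (hVd : ∀ m, Dense (V m))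
    {n : ℕ} (σ : (Fin n → Bool) → Node) (hσ : Inv V n σ) :
    ∃ σ' : (Fin (n + 1) → Bool) → Node,
      Inv V (n + 1) σ' ∧ ∀ s, NExt (σ (Fin.init s)) (σ' s) := by
  classical
  set τ : (Fin (n + 1) → Bool) → Node :=
    fun s => child (σ (Fin.init s)) (s (Fin.last n)) with hτ
  set W : Set (Cb × Cb) := ⋂ m ∈ Finset.range (n + 1), V m with hW
  have hWo : IsOpen W := isOpen_biInter_finset fun m _ => hVo m
  have hWd : Dense W := dense_biInter_finset hVo hVd _
  obtain ⟨τ', hext, havd⟩ := finset_shrink hWo hWd Finset.univ τ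
  have hext' : ∀ s, NExt (σ (Fin.init s)) (τ' s) :=
    fun s => (NExt_child _ _).trans (hext s)
  refine ⟨τ', ⟨?_, ?_, ?_⟩, hext'⟩
  · intro s
    have h1 : n + 1 ≤ (τ s).2 := Nat.succ_le_succ (hσ.1 _)
    exact le_trans h1 (hext s).1
  · intro s t hst
    by_cases hinit : Fin.init s = Fin.init t
    · have hlast : s (Fin.last n) ≠ t (Fin.last n) := by
        intro h
        apply hst
        have hs := Fin.snoc_init_self s
        have ht := Fin.snoc_init_self t
        rw [← hs, ← ht, hinit, h]
      have : Disjoint (cylN (τ s)) (cylN (τ t)) := by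
        rw [hτ]; dsimp only; rw [hinit]
        exact child_disjoint _ hlast
      exact this.mono (hext s).cyl_subset (hext t).cyl_subset
    · have : Disjoint (cylN (σ (Fin.init s))) (cylN (σ (Fin.init t))) :=
        hσ.2.1 _ _ hinit
      exact this.mono (hext' s).cyl_subset (hext' t).cyl_subset
  · intro s t hst m hm
    have := havd (s, t) (Finset.mem_univ _) hst
    refine fun z hz => ?_
    have hzW := this hz
    rw [hW] at hzW
    exact Set.mem_iInter₂.1 hzW m (Finset.mem_range.2 hm)

noncomputable def levels (V : ℕ → Set (Cb × Cb)) (hVo : ∀ m, IsOpen (V m))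
    (hVd : ∀ m, Dense (V m)) : ∀ n, {σ : (Fin n → Bool) → Node // Inv V n σ} :=
  fun n => Nat.rec ⟨fun _ => ((fun _ => true), 0), inv_zero V⟩
    (fun _ p => ⟨(step V hVo hVd p.1 p.2).choose, (step V hVo hVd p.1 p.2).choose_spec.1⟩) n

lemma levels_ext (V : ℕ → Set (Cb × Cb)) (hVo : ∀ m, IsOpen (V m))
    (hVd : ∀ m, Dense (V m)) (n : ℕ) (s : Fin (n + 1) → Bool) :
    NExt ((levels V hVo hVd n).1 (Fin.init s)) ((levels V hVo hVd (n + 1)).1 s) :=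
  (step V hVo hVd (levels V hVo hVd n).1 (levels V hVo hVd n).2).choose_spec.2 s

lemma fusion (V : ℕ → Set (Cb × Cb)) (hVo : ∀ m, IsOpen (V m)) (hVd : ∀ m, Dense (V m)) :
    ∃ h : Cb → Cb, Continuous h ∧ Injective h ∧
      ∀ a b : Cb, a ≠ b → ∀ m, (h a, h b) ∈ V m := by
  classical
  set L : ∀ n, (Fin n → Bool) → Node := fun n => (levels V hVo hVd n).1 with hL
  have hinv : ∀ n, Inv V n (L n) := fun n => (levels V hVo hVd n).2
  set A : Cb → ℕ → Set Cb := fun a n => cylN (L n (fun i : Fin n => a i)) with hA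
  have hchain : ∀ a n, A a (n + 1) ⊆ A a n := by
    intro a n
    have h1 : Fin.init (fun i : Fin (n + 1) => a i) = fun i : Fin n => a i := by
      funext i; simp [Fin.init]
    have := (levels_ext V hVo hVd n (fun i : Fin (n + 1) => a i)).cyl_subset
    rwa [h1] at this
  have hne : ∀ a, (⋂ n, A a n).Nonempty := by
    intro a
    refine IsCompact.nonempty_iInter_of_sequence_nonempty_isCompact_isClosed (A a)
      (hchain a) (fun n => ⟨_, mem_cylN _⟩) ?_ (fun n => isClosed_cylP _ _)
    exact (isClosed_cylP _ _).isCompact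
  set h : Cb → Cb := fun a => (hne a).some with hh
  have hmem : ∀ a n, h a ∈ A a n := fun a n => (Set.mem_iInter.1 (hne a).some_mem) n
  have hcoord : ∀ (a : Cb) (i : ℕ),
      h a i = (L (i + 1) (fun j : Fin (i + 1) => a j)).1 i := by
    intro a i
    have := hmem a (i + 1)
    exact this i (lt_of_lt_of_le (Nat.lt_succ_self i) ((hinv (i + 1)).1 _))
  have hcont : Continuous h := by
    rw [continuous_pi_iff]
    intro i
    have heq : (fun a => h a i) =
        (fun s : Fin (i + 1) → Bool => (L (i + 1) s).1 i) ∘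
          (fun a (j : Fin (i + 1)) => a j) := by
      funext a; exact hcoord a i
    rw [heq]
    exact (continuous_of_discreteTopology).comp
      (continuous_pi fun j => continuous_apply (j : ℕ))
  have hinj : Injective h := by
    intro a b hab
    by_contra hne'
    obtain ⟨j, hj⟩ : ∃ j, a j ≠ b j := by
      by_contra hc
      push_neg at hc
      exact hne' (funext hc)
    have hst : (fun i : Fin (j + 1) => a i) ≠ (fun i : Fin (j + 1) => b i) := by
      intro hc
      exact hj (congrFun hc ⟨j, Nat.lt_succ_self j⟩)
    have hdisj := (hinv (j + 1)).2.1 _ _ hst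
    rw [Set.disjoint_left] at hdisj
    exact hdisj (hmem a (j + 1)) (hab ▸ hmem b (j + 1))
  refine ⟨h, hcont, hinj, ?_⟩
  intro a b hab m
  obtain ⟨j, hj⟩ : ∃ j, a j ≠ b j := by
    by_contra hc
    push_neg at hc
    exact hab (funext hc)
  set n : ℕ := max (j + 1) (m + 1) with hn
  have hst : (fun i : Fin n => a i) ≠ (fun i : Fin n => b i) := by
    intro hc
    have hjn : j < n := lt_of_lt_of_le (Nat.lt_succ_self j) (le_max_left _ _)
    exact hj (congrFun hc ⟨j, hjn⟩)
  have hmn : m < n := lt_of_lt_of_le (Nat.lt_succ_self m) (le_max_right _ _)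
  exact (hinv n).2.2 _ _ hst m hmn ⟨hmem a n, hmem b n⟩


def cylL (l : List Bool) : Set Cb := {y | ∀ i < l.length, y i = l.getD i true}

lemma isOpen_cylL (l : List Bool) : IsOpen (cylL l) := by
  have : cylL l = ⋂ i ∈ Finset.range l.length, (fun y : Cb => y i) ⁻¹' {l.getD i true} := by
    ext y; simp [cylL]
  rw [this]
  exact isOpen_biInter_finset fun i _ =>
    IsOpen.preimage (continuous_apply i) (isOpen_discrete _)

lemma cylP_eq_cylL (x : Cb) (N : ℕ) : cylP x N = cylL (List.ofFn fun i : Fin N => x i) := by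
  ext y
  constructor
  · intro hy i hi
    rw [List.length_ofFn] at hi
    rw [List.getD_eq_getElem _ _ (by simpa using hi), List.getElem_ofFn]
    exact hy i hi
  · intro hy i hi
    have := hy i (by simpa using hi)
    rwa [List.getD_eq_getElem _ _ (by simpa using hi), List.getElem_ofFn] at this

lemma exists_residual_continuousOn (f : Cb → Cb) (hf : Measurable f) :
    ∃ D ∈ residual Cb, ContinuousOn f D := by
  have hbm : ∀ l : List Bool, BaireMeasurableSet (f ⁻¹' cylL l) :=
    fun l => (hf (isOpen_cylL l).measurableSet).baireMeasurableSet
  choose U hUo hUeq using fun l => (hbm l).residualEq_isOpen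
  set D : Set Cb := {x | ∀ l : List Bool, (x ∈ f ⁻¹' cylL l) = (x ∈ U l)} with hD
  have hDres : D ∈ residual Cb := by
    rw [hD]
    have : ∀ l : List Bool, ∀ᶠ x in residual Cb, (x ∈ f ⁻¹' cylL l) = (x ∈ U l) :=
      fun l => hUeq l
    exact (eventually_countable_forall.2 this)
  refine ⟨D, hDres, ?_⟩
  intro x hx
  rw [ContinuousWithinAt]
  rw [tendsto_nhds]
  intro Vo hVo hfx
  obtain ⟨N, hN⟩ := exists_cylP_subset hVo hfx
  set l : List Bool := List.ofFn fun i : Fin N => f x i with hl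
  have hcyl : cylP (f x) N = cylL l := cylP_eq_cylL _ _
  have hxS : x ∈ f ⁻¹' cylL l := by
    rw [Set.mem_preimage, ← hcyl]; exact mem_cylP_self _ _
  have hxU : x ∈ U l := by rw [← hx l]; exact hxS
  apply mem_nhdsWithin.2
  refine ⟨U l, hUo l, hxU, ?_⟩
  rintro y ⟨hyU, hyD⟩
  have : y ∈ f ⁻¹' cylL l := by rw [hyD l]; exact hyU
  exact hN (hcyl ▸ this)

lemma nwd_prod_univ {t : Set Cb} (ht : IsNowhereDense t) :
    IsNowhereDense (t ×ˢ (univ : Set Cb)) := by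
  rw [IsNowhereDense, closure_prod_eq, interior_prod_eq, closure_univ, interior_univ, ht,
    Set.empty_prod]

lemma isMeagre_union {s t : Set (Cb × Cb)} (hs : IsMeagre s) (ht : IsMeagre t) :
    IsMeagre (s ∪ t) := by
  rw [IsMeagre, Set.compl_union]
  exact Filter.inter_mem hs ht

lemma graph_meager (f : Cb → Cb) (hf : Measurable f) :
    IsMeagre {p : Cb × Cb | p.2 = f p.1} := by
  obtain ⟨D, hDres, hcont⟩ := exists_residual_continuousOn f hf
  have hDd : Dense D := dense_of_mem_residual hDres
  set Gr : Set (Cb × Cb) := {p | p.1 ∈ D ∧ p.2 = f p.1} with hGr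
  have h1 : IsMeagre ((Dᶜ : Set Cb) ×ˢ (univ : Set Cb)) := by
    have hDc : IsMeagre Dᶜ := by rw [IsMeagre, compl_compl]; exact hDres
    rcases isMeagre_iff_countable_union_isNowhereDense.1 hDc with ⟨S, hS1, hS2, hS3⟩
    apply isMeagre_iff_countable_union_isNowhereDense.2
    refine ⟨(fun t => t ×ˢ (univ : Set Cb)) '' S, ?_, hS2.image _, ?_⟩
    · rintro _ ⟨t₀, ht₀, rfl⟩
      exact nwd_prod_univ (hS1 _ ht₀)
    · rintro ⟨x, y⟩ ⟨hx, -⟩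
      obtain ⟨t₀, ht₀, hxt⟩ := hS3 hx
      exact ⟨t₀ ×ˢ (univ : Set Cb), ⟨t₀, ht₀, rfl⟩, hxt, trivial⟩
  have h2 : IsNowhereDense (closure Gr) := by
    rw [(isClosed_closure).isNowhereDense_iff]
    rw [Set.eq_empty_iff_forall_notMem]
    rintro ⟨x0, y0⟩ hp
    obtain ⟨u, v, hu, hv, hxu, hyv, huv⟩ :=
      isOpen_prod_iff.1 isOpen_interior x0 y0 hp
    have huv' : u ×ˢ v ⊆ closure Gr := huv.trans interior_subset
    obtain ⟨x, hxD, hxu'⟩ := hDd.exists_mem_open hu ⟨x0, hxu⟩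
    have hkey : ∀ w ∈ v, w = f x := by
      intro w hw
      have hmem : (x, w) ∈ closure Gr := huv' ⟨hxu', hw⟩
      obtain ⟨q, hq, hqlim⟩ := mem_closure_iff_seq_limit.1 hmem
      have hfst : Filter.Tendsto (fun k => (q k).1) Filter.atTop (𝓝 x) :=
        ((continuous_fst.tendsto _).comp hqlim)
      have hsnd : Filter.Tendsto (fun k => (q k).2) Filter.atTop (𝓝 w) :=
        ((continuous_snd.tendsto _).comp hqlim)
      have hqD : ∀ k, (q k).1 ∈ D := fun k => (hq k).1
      have hq2 : ∀ k, (q k).2 = f ((q k).1) := fun k => (hq k).2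
      have htD : Filter.Tendsto (fun k => (q k).1) Filter.atTop (𝓝[D] x) :=
        tendsto_nhdsWithin_iff.2 ⟨hfst, Filter.Eventually.of_forall hqD⟩
      have hflim : Filter.Tendsto (fun k => f ((q k).1)) Filter.atTop (𝓝 (f x)) :=
        (hcont x hxD).tendsto.comp htD
      have : Filter.Tendsto (fun k => (q k).2) Filter.atTop (𝓝 (f x)) := by
        simpa only [hq2] using hflim
      exact tendsto_nhds_unique hsnd this
    obtain ⟨N, hN⟩ := exists_cylP_subset hv hyv
    obtain ⟨w, hwmem, hwne⟩ := exists_ne_mem_cylP y0 N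
    have h1' : w = f x := hkey w (hN hwmem)
    have h2' : y0 = f x := hkey y0 hyv
    exact hwne (h1'.trans h2'.symm)
  have hsub : {p : Cb × Cb | p.2 = f p.1} ⊆ ((Dᶜ : Set Cb) ×ˢ (univ : Set Cb)) ∪ closure Gr := by
    rintro ⟨x, y⟩ hxy
    by_cases hxD : x ∈ D
    · exact Or.inr (subset_closure ⟨hxD, hxy⟩)
    · exact Or.inl ⟨hxD, trivial⟩
  have hGrm : IsMeagre (closure Gr) := by
    apply isMeagre_iff_countable_union_isNowhereDense.2
    exact ⟨{closure Gr}, by simpa using h2, countable_singleton _, by simp⟩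
  exact (isMeagre_union h1 hGrm).mono hsub

lemma avoid_meager (F : ℕ → Set (Cb × Cb)) (hF : ∀ n, IsMeagre (F n)) :
    ∃ h : Cb → Cb, Continuous h ∧ Injective h ∧
      ∀ a b : Cb, a ≠ b → ∀ n, (h a, h b) ∉ F n := by
  choose S hS1 hS2 hS3 using fun n => (isMeagre_iff_countable_union_isNowhereDense.1 (hF n))
  set T : Set (Set (Cb × Cb)) := insert ∅ (⋃ n, closure '' S n) with hT
  have hTc : T.Countable :=
    (Set.Countable.insert _ (Set.countable_iUnion fun n => (hS2 n).image _))
  obtain ⟨K, hK⟩ := hTc.exists_eq_range ⟨∅, Set.mem_insert _ _⟩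
  have hKprop : ∀ m, IsClosed (K m) ∧ IsNowhereDense (K m) := by
    intro m
    have : K m ∈ T := by rw [hK]; exact Set.mem_range_self m
    rcases Set.mem_insert_iff.1 this with h | h
    · rw [h]; exact ⟨isClosed_empty, isNowhereDense_empty⟩
    · obtain ⟨n, hn⟩ := Set.mem_iUnion.1 h
      obtain ⟨t, ht, hteq⟩ := hn
      rw [← hteq]
      exact ⟨isClosed_closure, (hS1 n t ht).closure⟩
  have hVd : ∀ m, Dense ((K m)ᶜ) :=
    fun m => (isClosed_isNowhereDense_iff_compl.1 ⟨(hKprop m).1, (hKprop m).2⟩).2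
  obtain ⟨h, hc, hi, hav⟩ := fusion (fun m => (K m)ᶜ)
    (fun m => (hKprop m).1.isOpen_compl) hVd
  refine ⟨h, hc, hi, ?_⟩
  intro a b hab n hmemF
  obtain ⟨t, ht, hmt⟩ := hS3 n hmemF
  have hclT : closure t ∈ T := by
    rw [hT]
    exact Set.mem_insert_of_mem _ (Set.mem_iUnion.2 ⟨n, Set.mem_image_of_mem _ ht⟩)
  rw [hK] at hclT
  obtain ⟨m, hm⟩ := hclT
  exact hav a b hab m (hm ▸ subset_closure hmt)


lemma not_countable_Cb : ¬ Countable Cb := by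
  intro h
  obtain ⟨u, hu⟩ := exists_surjective_nat Cb
  obtain ⟨n, hn⟩ := hu (fun k => !(u k k))
  have := congrFun hn n
  simp at this

lemma coord_set_measurable (i : ℕ) (b : Bool) : MeasurableSet {c : Cb | c i = b} := by
  have : {c : Cb | c i = b} = (fun c : Cb => c i) ⁻¹' {b} := by ext; simp
  rw [this]; exact measurable_pi_apply i (measurableSet_singleton b)

lemma exists_surj_nat : ∃ d : Cb → ℕ, Measurable d ∧ Surjective d := by
  classical
  set p : ℕ → Cb → Prop := fun n c => c n = true ∨ ∀ i, c i = false with hp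
  have hP : ∀ c, ∃ n, p n c := by
    intro c
    by_cases hc : ∃ n, c n = true
    · obtain ⟨n, hn⟩ := hc; exact ⟨n, Or.inl hn⟩
    · push_neg at hc
      exact ⟨0, Or.inr fun i => by simpa using hc i⟩
  have hpm : ∀ n, MeasurableSet {c | p n c} := by
    intro n
    have : {c | p n c} = {c : Cb | c n = true} ∪ ⋂ i, {c : Cb | c i = false} := by
      ext c; simp [hp]
    rw [this]
    exact (coord_set_measurable n true).union
      (MeasurableSet.iInter fun i => coord_set_measurable i false)
  refine ⟨fun c => Nat.find (hP c), ?_, ?_⟩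
  · exact Measurable.find (f := fun n (_ : Cb) => n) (fun n => measurable_const) hpm hP
  · intro n
    refine ⟨fun i => decide (i = n), ?_⟩
    rw [Nat.find_eq_iff]
    constructor
    · exact Or.inl (by simp)
    · intro m hm
      rw [hp]
      rintro (h1 | h2)
      · simp [Nat.ne_of_lt hm] at h1
      · have := h2 n; simp at this

lemma exists_surj (X : Type) [MeasurableSpace X] [StandardBorelSpace X] [Nonempty X] :
    ∃ f : Cb → X, Measurable f ∧ Surjective f := by
  by_cases hXc : Countable X
  · obtain ⟨u, hu⟩ := exists_surjective_nat X
    obtain ⟨d, hdm, hds⟩ := exists_surj_nat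
    exact ⟨u ∘ d, (measurable_from_top.comp hdm), hu.comp hds⟩
  · exact ⟨PolishSpace.measurableEquivOfNotCountable not_countable_Cb hXc,
      (PolishSpace.measurableEquivOfNotCountable not_countable_Cb hXc).measurable,
      (PolishSpace.measurableEquivOfNotCountable not_countable_Cb hXc).surjective⟩

end Stmt7Helper

open Stmt7Helper in
theorem stmt7 (G : Type*) [Group G] [Countable G]
    (Y : Type) [MeasurableSpace Y] [StandardBorelSpace Y] [MulAction G Y]
    (hYmeas : ∀ g : G, Measurable fun y : Y => g • y)
    (Y₀ : Set Y) (hY₀unc : ¬ Y₀.Countable)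
    (hY₀inv : ∀ (g : G) (y : Y), y ∈ Y₀ → g • y ∈ Y₀)
    (hY₀free : ∀ g : G, g ≠ 1 → ∀ y ∈ Y₀, g • y ≠ y)
    (X : Type) [MeasurableSpace X] [StandardBorelSpace X] [MulAction G X]
    (hXmeas : ∀ g : G, Measurable fun x : X => g • x) :
    (∃ Z : Set Y, MeasurableSet Z ∧ (∀ (g : G) (y : Y), y ∈ Z → g • y ∈ Z) ∧
      ∃ θ : Z → X, Measurable θ ∧ Function.Surjective θ ∧
        ∀ (g : G) (y : Y) (hy : y ∈ Z) (hgy : g • y ∈ Z),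
          θ ⟨g • y, hgy⟩ = g • θ ⟨y, hy⟩) ∧
    ((∃ x₀ : X, ∀ g : G, g • x₀ = x₀) →
      ∃ θ : Y → X, Measurable θ ∧ Function.Surjective θ ∧
        ∀ (g : G) (y : Y), θ (g • y) = g • θ y) := by
  classical
  rcases isEmpty_or_nonempty X with hX | hX
  · constructor
    · refine ⟨∅, MeasurableSet.empty, fun g y hy => absurd hy (Set.notMem_empty y), ?_⟩
      haveI hempty : IsEmpty (↥(∅ : Set Y)) := ⟨fun z => Set.notMem_empty z.1 z.2⟩
      refine ⟨fun z => (Set.notMem_empty z.1 z.2).elim, measurable_of_empty _,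
        fun x => (hX.false x).elim, fun g y hy => (Set.notMem_empty y hy).elim⟩
    · rintro ⟨x₀, -⟩
      exact (hX.false x₀).elim
  · letI := upgradeStandardBorel Y
    -- the free part
    set Yf : Set Y := {y | ∀ g : G, g ≠ 1 → g • y ≠ y} with hYfdef
    have hYfmeas : MeasurableSet Yf := by
      have hset : Yf = ⋂ g : G, {y : Y | g ≠ 1 → g • y ≠ y} := by
        ext y; simp [hYfdef, Set.mem_iInter]
      rw [hset]
      refine MeasurableSet.iInter fun g => ?_
      by_cases hg : g = 1
      · simp [hg]
      · have : {y : Y | g ≠ 1 → g • y ≠ y} = {y : Y | g • y = y}ᶜ := by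
          ext y; simp [hg]
        rw [this]
        exact (((hYmeas g).stronglyMeasurable).measurableSet_eq_fun
          (measurable_id.stronglyMeasurable)).compl
    have hY₀sub : Y₀ ⊆ Yf := fun y hy g hg => hY₀free g hg y hy
    have hYfunc : ¬ Countable (↥Yf) := by
      intro h
      exact hY₀unc ((Set.countable_coe_iff.1 h).mono hY₀sub)
    haveI : StandardBorelSpace (↥Yf) := hYfmeas.standardBorel
    have hYfinv : ∀ (g : G) (y : Y), y ∈ Yf → g • y ∈ Yf := by
      intro g y hy h hne heq
      refine hy (g⁻¹ * h * g) (fun hcon => hne ?_) ?_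
      · have := congrArg (fun z => g * z * g⁻¹) hcon
        simpa [mul_assoc] using this
      · calc (g⁻¹ * h * g) • y = g⁻¹ • h • g • y := by rw [mul_smul, mul_smul]
        _ = g⁻¹ • g • y := by rw [heq]
        _ = y := inv_smul_smul g y
    set e : ↥Yf ≃ᵐ Cb := PolishSpace.measurableEquivNatBoolOfNotCountable hYfunc with he
    set aY : G → ↥Yf → ↥Yf := fun g y => ⟨g • (y : Y), hYfinv g y y.2⟩ with haY
    have haYm : ∀ g, Measurable (aY g) :=
      fun g => ((hYmeas g).comp measurable_subtype_coe).subtype_mk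
    set T : G → Cb → Cb := fun g => e ∘ (aY g) ∘ e.symm with hT
    have hTm : ∀ g, Measurable (T g) :=
      fun g => e.measurable.comp ((haYm g).comp e.symm.measurable)
    obtain ⟨gs, hgs⟩ := exists_surjective_nat G
    obtain ⟨h, hhc, hhi, hhav⟩ := Stmt7Helper.avoid_meager
      (fun n => {p : Cb × Cb | p.2 = T (gs n) p.1})
      (fun n => Stmt7Helper.graph_meager _ (hTm (gs n)))
    set ρ : Cb → Y := fun a => ((e.symm (h a) : ↥Yf) : Y) with hρ
    have hρm : Measurable ρ :=
      measurable_subtype_coe.comp (e.symm.measurable.comp hhc.measurable)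
    have hρYf : ∀ a, ρ a ∈ Yf := fun a => (e.symm (h a)).2
    have hρkey : ∀ a b : Cb, a ≠ b → ∀ g : G, g • ρ a ≠ ρ b := by
      intro a b hab g heq
      obtain ⟨n, rfl⟩ := hgs g
      apply hhav a b hab n
      show h b = T (gs n) (h a)
      have h1 : aY (gs n) (e.symm (h a)) = e.symm (h b) := by
        apply Subtype.ext
        exact heq
      have h2 := congrArg e h1
      rw [MeasurableEquiv.apply_symm_apply] at h2
      exact h2.symm
    letI : MeasurableSpace G := ⊤
    haveI : DiscreteMeasurableSpace G := ⟨fun _ => MeasurableSpace.measurableSet_top⟩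
    set ψ : G × Cb → Y := fun p => p.1 • ρ p.2 with hψ
    have hψm : Measurable ψ := by
      have h1 : Measurable (fun p : Cb × G => p.2 • ρ p.1) :=
        measurable_from_prod_countable_left fun g => (hYmeas g).comp hρm
      exact h1.comp measurable_swap
    have hψinj : Function.Injective ψ := by
      rintro ⟨g, a⟩ ⟨g', a'⟩ hpq
      simp only [hψ] at hpq
      have h2 : (g'⁻¹ * g) • ρ a = ρ a' := by
        rw [mul_smul, hpq, inv_smul_smul]
      by_cases ha : a = a'
      · subst ha
        have h3 : g'⁻¹ * g = 1 := by
          by_contra hne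
          exact hρYf a _ hne h2
        have h4 : g = g' := by
          have := congrArg (fun z => g' * z) h3
          simpa [mul_assoc] using this
        rw [h4]
      · exact absurd h2 (hρkey a a' ha _)
    have hemb : MeasurableEmbedding ψ := hψm.measurableEmbedding hψinj
    set Z : Set Y := Set.range ψ with hZ
    have hZmeas : MeasurableSet Z := hemb.measurableSet_range
    have hZinv : ∀ (g : G) (y : Y), y ∈ Z → g • y ∈ Z := by
      rintro g y ⟨⟨g₀, a⟩, rfl⟩
      exact ⟨(g * g₀, a), by simp [hψ, mul_smul]⟩
    obtain ⟨f₀, hf₀m, hf₀s⟩ := Stmt7Helper.exists_surj X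
    set q : G × Cb → X := fun p => p.1 • f₀ p.2 with hq
    have hqm : Measurable q := by
      have h1 : Measurable (fun p : Cb × G => p.2 • f₀ p.1) :=
        measurable_from_prod_countable_left fun g => (hXmeas g).comp hf₀m
      exact h1.comp measurable_swap
    set θ : ↥Z → X := fun z => q (Function.invFun ψ (z : Y)) with hθ
    have hlinv : ∀ p : G × Cb, Function.invFun ψ (ψ p) = p :=
      Function.leftInverse_invFun hψinj
    have hrinv : ∀ y : Y, y ∈ Z → ψ (Function.invFun ψ y) = y := by
      rintro y ⟨p, rfl⟩; rw [hlinv]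
    have hθm : Measurable θ := by
      intro s hs
      have himg : MeasurableSet (ψ '' (q ⁻¹' s)) := hemb.measurableSet_image' (hqm hs)
      have heqset : θ ⁻¹' s = (fun z : ↥Z => (z : Y)) ⁻¹' (ψ '' (q ⁻¹' s)) := by
        ext z
        simp only [Set.mem_preimage, hθ]
        constructor
        · intro hqs
          exact ⟨Function.invFun ψ (z : Y), hqs, hrinv _ z.2⟩
        · rintro ⟨p, hp, hpz⟩
          have hzp : Function.invFun ψ (z : Y) = p := by rw [← hpz, hlinv]
          rw [hzp]; exact hp
      rw [heqset]
      exact measurable_subtype_coe himg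
    have hθs : Function.Surjective θ := by
      intro x
      obtain ⟨a, ha⟩ := hf₀s x
      refine ⟨⟨ψ (1, a), Set.mem_range_self _⟩, ?_⟩
      show q (Function.invFun ψ (ψ (1, a))) = x
      rw [hlinv]
      show (1 : G) • f₀ a = x
      rw [one_smul, ha]
    have hθe : ∀ (g : G) (y : Y) (hy : y ∈ Z) (hgy : g • y ∈ Z),
        θ ⟨g • y, hgy⟩ = g • θ ⟨y, hy⟩ := by
      intro g y hy hgy
      obtain ⟨⟨g₀, a⟩, hp⟩ := hy
      have h1 : Function.invFun ψ y = (g₀, a) := by rw [← hp, hlinv]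
      have h2 : g • y = ψ (g * g₀, a) := by
        rw [← hp]
        show g • (g₀ • ρ a) = (g * g₀) • ρ a
        rw [mul_smul]
      show q (Function.invFun ψ (g • y)) = g • q (Function.invFun ψ y)
      rw [h2, hlinv, h1]
      show (g * g₀) • f₀ a = g • (g₀ • f₀ a)
      rw [mul_smul]
    constructor
    · exact ⟨Z, hZmeas, hZinv, θ, hθm, hθs, hθe⟩
    · rintro ⟨x₀, hx₀⟩
      refine ⟨fun y => if hy : y ∈ Z then θ ⟨y, hy⟩ else x₀, ?_, ?_, ?_⟩
      · exact Measurable.dite hθm measurable_const hZmeas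
      · intro x
        obtain ⟨z, hz⟩ := hθs x
        refine ⟨(z : Y), ?_⟩
        dsimp only
        rw [dif_pos z.2]
        have hzz : (⟨(z : Y), z.2⟩ : ↥Z) = z := Subtype.ext rfl
        rw [hzz, hz]
      · intro g y
        by_cases hy : y ∈ Z
        · have hgy := hZinv g y hy
          dsimp only
          rw [dif_pos hgy, dif_pos hy]
          exact hθe g y hy hgy
        · have hgy : g • y ∉ Z := by
            intro hmem
            apply hy
            have := hZinv g⁻¹ _ hmem
            rwa [inv_smul_smul] at this
          dsimp only
          rw [dif_neg hgy, dif_neg hy]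
          exact (hx₀ g).symm
end

section
/- Let F = F₂ be the free group on two generators. There exist a compact metrizable abelian group K₀, a map β₀ : F × (2^ℕ)^F → Aff(K₀) (where each β₀(f,y) is a Borel affine bijection of K₀) satisfying the cocycle identity β₀(f₂f₁, y) = β₀(f₂, f₁·y) ∘ β₀(f₁, y) for all f₁, f₂ ∈ F and y ∈ (2^ℕ)^F, and a Borel bijection φ₀ : 2^F → K₀ × (2^ℕ)^F which is F-equivariant when F acts on 2^F by the left shift and on K₀ × (2^ℕ)^F by the skew product action f·(k, y) = (β₀(f,y)(k), f·y) (with the shift action on (2^ℕ)^F). Moreover, the induced projection π₀ : 2^F → (2^ℕ)^F (the composition of φ₀ with the projection onto the second coordinate) is continuous. -/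
/-- The free group on two generators. -/
abbrev F2 := FreeGroup (Fin 2)

/-!
The elements `c n = b ^ n * a * b⁻¹ ^ n` of `F₂ = ⟨a, b⟩` freely generate a subgroup `H`: the
obvious word for the image of a reduced word of `FreeGroup ℕ` is itself reduced. So the graph on
`F₂` with edges `h — h * c n` is a forest (one Cayley tree of `H` per left coset), and the
shift-equivariant homomorphism `π x h n = x (h * c n) - x h` from `2^F₂` to `(2^ℕ)^F₂` has a
continuous section: sum the labels along the path from a chosen coset representative.

Any equivariant homomorphism `π : A → B` with a section `s` identifies `A` with `ker π × B` via
`x ↦ (x - s (π x), π x)`; the action on `A` becomes the skew product over `B` with the affine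
cocycle `k ↦ g • k + (g • s y - s (g • y))` on the compact group `ker π`.
-/

open Function

namespace FreeGroup

open List

variable {α : Type*}

theorem mk_replicate_true (a : α) (n : ℕ) : mk (replicate n (a, true)) = of a ^ n := by
  rw [of, pow_mk, flatten_replicate_singleton]

theorem mk_replicate_false (a : α) (n : ℕ) : mk (replicate n (a, false)) = (of a ^ n)⁻¹ := by
  rw [← mk_replicate_true, inv_mk]
  simp [invRev]

theorem mk_singleton_false (a : α) : mk [(a, false)] = (of a)⁻¹ := by
  simpa using mk_replicate_false a 1

def zpowWord (a : α) (d : ℤ) : List (α × Bool) := replicate d.natAbs (a, decide (0 ≤ d))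

theorem mk_zpowWord (a : α) (d : ℤ) : mk (zpowWord a d) = of a ^ d := by
  cases d with
  | ofNat n => simp [zpowWord, mk_replicate_true]
  | negSucc n => simp [zpowWord, mk_replicate_false, zpow_negSucc]

theorem mk_cons (x : α × Bool) (L : List (α × Bool)) : mk (x :: L) = mk [x] * mk L := by
  rw [mul_mk]; rfl

theorem isReduced_replicate_append {i j : α} (hij : i ≠ j) (k : ℕ) (e s : Bool)
    {L : List (α × Bool)} (hL : IsReduced ((i, s) :: L)) :
    IsReduced (replicate k (j, e) ++ (i, s) :: L) := by
  refine isChain_append.mpr ⟨isChain_replicate_of_rel _ fun _ => rfl, hL, ?_⟩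
  intro x hx y hy
  simp only [head?_cons, Option.mem_def, Option.some.injEq] at hy
  rw [eq_of_mem_replicate (mem_of_mem_getLast? hx), ← hy]
  exact fun h => absurd h.symm hij

end FreeGroup

section FreeFamily

open FreeGroup List

def conjGen (n : ℕ) : F2 := of 1 ^ n * of 0 * (of 1 ^ n)⁻¹

def embedWord (p : ℕ) : List (ℕ × Bool) → List (Fin 2 × Bool)
  | [] => zpowWord 1 (-p)
  | (n, s) :: L => zpowWord 1 (n - p) ++ (0, s) :: embedWord n L

theorem mk_embedWord (p : ℕ) (L : List (ℕ × Bool)) :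
    mk (embedWord p L) = of 1 ^ (-p : ℤ) * lift conjGen (mk L) := by
  induction L generalizing p with
  | nil => simp [embedWord, mk_zpowWord, ← one_eq_mk]
  | cons x L ih =>
    obtain ⟨n, s⟩ := x
    rw [embedWord, ← mul_mk, mk_cons, ih, mk_zpowWord, mk_cons (n, s), MonoidHom.map_mul]
    cases s
    · simp only [mk_singleton_false, _root_.map_inv, lift_apply_of, conjGen]
      group
    · simp only [← of.eq_def, lift_apply_of, conjGen]
      group

theorem isReduced_cons_embedWord (L : List (ℕ × Bool)) (n : ℕ) (s : Bool)
    (hL : IsReduced ((n, s) :: L)) : IsReduced ((0, s) :: embedWord n L) := by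
  induction L generalizing n s with
  | nil =>
    refine isChain_cons.mpr ⟨fun y hy => ?_, isChain_replicate_of_rel _ fun _ => rfl⟩
    rw [eq_of_mem_replicate (mem_of_mem_head? hy)]
    exact fun h => absurd h (by simp)
  | cons x L ih =>
    obtain ⟨m, t⟩ := x
    rw [isReduced_cons_cons] at hL
    have hrest := isReduced_replicate_append Fin.zero_ne_one ((m : ℤ) - n).natAbs
      (decide (0 ≤ (m : ℤ) - n)) t (ih m t hL.2)
    rw [embedWord, zpowWord]
    rcases hk : ((m : ℤ) - n).natAbs with _ | k
    · have hmn : n = m := by omega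
      rw [hk] at hrest
      exact isReduced_cons_cons.mpr ⟨fun _ => hL.1 hmn, hrest⟩
    · rw [hk] at hrest
      exact isReduced_cons_cons.mpr ⟨fun h => absurd h (by simp), hrest⟩

theorem lift_conjGen_injective : Function.Injective (lift conjGen) := by
  rw [injective_iff_map_eq_one]
  intro w hw
  rcases hL : w.toWord with _ | ⟨⟨n, s⟩, L⟩
  · exact toWord_eq_nil_iff.mp hL
  have hred : IsReduced (embedWord 0 w.toWord) := by
    rw [hL, embedWord]
    exact isReduced_replicate_append Fin.zero_ne_one _ _ _
      (isReduced_cons_embedWord L n s (hL ▸ isReduced_toWord))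
  have hmk : mk (embedWord 0 w.toWord) = 1 := by
    rw [mk_embedWord, mk_toWord, hw]; simp
  have := congrArg toWord hmk
  rw [toWord_mk, hred.reduce_eq, toWord_one, hL, embedWord] at this
  simp at this

end FreeFamily

section Shift

variable {G : Type*} [Group G]

def shiftEnd (K : Type*) [AddMonoid K] : G →* AddMonoid.End (G → K) where
  toFun g :=
    { toFun := bshift K g
      map_zero' := rfl
      map_add' := fun _ _ => rfl }
  map_one' := by ext x h; show x (1⁻¹ * h) = x h; simp
  map_mul' g₁ g₂ := by
    ext x h; show x ((g₁ * g₂)⁻¹ * h) = x (g₂⁻¹ * (g₁⁻¹ * h)); simp [mul_assoc]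

theorem continuous_bshift (K : Type*) [TopologicalSpace K] (g : G) : Continuous (bshift K g) :=
  continuous_pi fun _ => continuous_apply _

end Shift

section EndHom

variable {G A : Type*} [Group G] [AddMonoid A] (ρ : G →* AddMonoid.End A)

theorem endHom_mul_apply (g₁ g₂ : G) (x : A) : ρ (g₁ * g₂) x = ρ g₁ (ρ g₂ x) := by
  rw [map_mul]; rfl

@[simp]
theorem endHom_inv_apply_apply (g : G) (x : A) : ρ g⁻¹ (ρ g x) = x := by
  rw [← endHom_mul_apply, inv_mul_cancel, map_one]; rfl

@[simp]
theorem endHom_apply_inv_apply (g : G) (x : A) : ρ g (ρ g⁻¹ x) = x := by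
  rw [← endHom_mul_apply, mul_inv_cancel, map_one]; rfl

end EndHom

structure SplitEquivariantHom {G A B : Type*} [Group G] [AddCommGroup A] [AddGroup B]
    (ρ : G →* AddMonoid.End A) (τ : G →* AddMonoid.End B) where
  toHom : A →+ B
  map_act : ∀ g x, toHom (ρ g x) = τ g (toHom x)
  sec : B → A
  toHom_sec : RightInverse sec toHom

namespace SplitEquivariantHom

variable {G A B : Type*} [Group G] [AddCommGroup A] [AddGroup B]
  {ρ : G →* AddMonoid.End A} {τ : G →* AddMonoid.End B} (S : SplitEquivariantHom ρ τ)

theorem act_mem_ker (g : G) {x : A} (hx : x ∈ S.toHom.ker) : ρ g x ∈ S.toHom.ker := by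
  rw [AddMonoidHom.mem_ker] at hx ⊢
  rw [S.map_act, hx, map_zero]

def kerAut (g : G) : S.toHom.ker ≃+ S.toHom.ker where
  toFun k := ⟨ρ g k, S.act_mem_ker g k.2⟩
  invFun k := ⟨ρ g⁻¹ k, S.act_mem_ker g⁻¹ k.2⟩
  left_inv k := by ext; simp
  right_inv k := by ext; simp
  map_add' k k' := by ext; simp

theorem sec_defect_mem_ker (g : G) (y : B) : ρ g (S.sec y) - S.sec (τ g y) ∈ S.toHom.ker := by
  rw [AddMonoidHom.mem_ker, map_sub, S.map_act, S.toHom_sec, S.toHom_sec, sub_self]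

def cocycle (g : G) (y : B) (k : S.toHom.ker) : S.toHom.ker :=
  S.kerAut g k + ⟨_, S.sec_defect_mem_ker g y⟩

theorem cocycle_mul (g₁ g₂ : G) (y : B) :
    S.cocycle (g₂ * g₁) y = S.cocycle g₂ (τ g₁ y) ∘ S.cocycle g₁ y := by
  ext k
  simp only [cocycle, kerAut, map_mul, AddMonoid.End.coe_mul, comp_apply, AddEquiv.coe_mk,
    Equiv.coe_fn_mk, AddMemClass.mk_add_mk, map_add, map_sub]
  abel

def kerProdEquiv : A ≃ S.toHom.ker × B where
  toFun x := (⟨x - S.sec (S.toHom x), by simp [S.toHom_sec _]⟩, S.toHom x)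
  invFun p := p.1 + S.sec p.2
  left_inv x := by simp
  right_inv p := by
    obtain ⟨⟨k, hk⟩, y⟩ := p
    rw [AddMonoidHom.mem_ker] at hk
    ext <;> simp [hk, S.toHom_sec _]

theorem kerProdEquiv_act (g : G) (x : A) :
    S.kerProdEquiv (ρ g x) =
      (S.cocycle g (S.kerProdEquiv x).2 (S.kerProdEquiv x).1, τ g (S.kerProdEquiv x).2) := by
  ext <;> simp [kerProdEquiv, cocycle, kerAut, S.map_act]

theorem continuous_kerProdEquiv [TopologicalSpace A] [TopologicalSpace B]
    [IsTopologicalAddGroup A]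
    (hπ : Continuous S.toHom) (hs : Continuous S.sec) : Continuous S.kerProdEquiv :=
  ((continuous_id.sub (hs.comp hπ)).subtype_mk _).prodMk hπ

theorem continuous_kerAut [TopologicalSpace A] {g : G} (hρ : Continuous (ρ g)) :
    Continuous (S.kerAut g) :=
  (hρ.comp continuous_subtype_val).subtype_mk _

end SplitEquivariantHom

section Coboundary

open FreeGroup Multiplicative

variable {G α K : Type*} [Group G] [AddCommGroup K]

def coboundary (c : α → G) : (G → K) →+ (G → α → K) where
  toFun x h n := x (h * c n) - x h
  map_zero' := by ext; simp
  map_add' x y := by ext; simp only [Pi.add_apply]; abel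

theorem coboundary_bshift (c : α → G) (g : G) (x : G → K) :
    coboundary c (bshift K g x) = bshift (α → K) g (coboundary c x) := by
  ext h n
  simp [coboundary, bshift, mul_assoc]

theorem continuous_coboundary [TopologicalSpace K] [IsTopologicalAddGroup K] (c : α → G) :
    Continuous (coboundary c : (G → K) → G → α → K) :=
  continuous_pi fun _ => continuous_pi fun _ => (continuous_apply _).sub (continuous_apply _)

variable (G) in
def rightTranslate (M : Type*) [Monoid M] : G →* MulAut (G → M) where
  toFun g :=
    { toFun := fun f r => f (r * g)
      invFun := fun f r => f (r * g⁻¹)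
      left_inv := fun f => by simp
      right_inv := fun f => by simp
      map_mul' := fun _ _ => rfl }
  map_one' := by ext; simp
  map_mul' g₁ g₂ := by ext; simp [mul_assoc]

@[simp]
theorem rightTranslate_apply {M : Type*} [Monoid M] (g : G) (f : G → M) (r : G) :
    rightTranslate G M g f r = f (r * g) := rfl

/-- The cocycle of `FreeGroup α` whose left component at `r` sums the labels `z` along the path
from `r` to `r * lift c w` in the graph with edges `h — h * c n`. -/
def pathSum (c : α → G) (z : G → α → K) :
    FreeGroup α →* (G → Multiplicative K) ⋊[rightTranslate G _] G :=
  lift fun n => ⟨fun r => ofAdd (z r n), c n⟩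

theorem pathSum_right (c : α → G) (z : G → α → K) (w : FreeGroup α) :
    (pathSum c z w).right = lift c w := by
  rw [← SemidirectProduct.rightHom_eq_right, ← MonoidHom.comp_apply]
  congr 1
  ext n
  rfl

theorem pathSum_of (c : α → G) (z : G → α → K) (n : α) :
    pathSum c z (of n) = ⟨fun r => ofAdd (z r n), c n⟩ :=
  lift_apply_of

theorem pathSum_mul_of_left (c : α → G) (z : G → α → K) (w : FreeGroup α) (n : α) (r : G) :
    toAdd ((pathSum c z (w * of n)).left r) =
      toAdd ((pathSum c z w).left r) + z (r * lift c w) n := by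
  simp only [_root_.map_mul, SemidirectProduct.mul_left, pathSum_right, Pi.mul_apply,
    rightTranslate_apply, toAdd_mul, pathSum_of, toAdd_ofAdd]

theorem continuous_pathSum_left [TopologicalSpace K] [IsTopologicalAddGroup K] (c : α → G)
    (w : FreeGroup α) (r : G) :
    Continuous fun z : G → α → K => toAdd ((pathSum c z w).left r) := by
  induction w generalizing r with
  | C1 => simpa using continuous_const
  | of n =>
    simp only [pathSum_of, toAdd_ofAdd]
    exact continuous_apply_apply (ρ := fun _ _ => K) r n
  | inv_of n ih =>
    simp only [_root_.map_inv]
    simp only [SemidirectProduct.inv_left, rightTranslate_apply, Pi.inv_apply, toAdd_inv,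
      pathSum_right]
    exact (ih _).neg
  | mul w₁ w₂ ih₁ ih₂ =>
    simp only [_root_.map_mul, SemidirectProduct.mul_left, Pi.mul_apply, toAdd_mul,
      rightTranslate_apply, pathSum_right]
    exact (ih₁ r).add (ih₂ _)

theorem exists_continuous_rightInverse_coboundary [TopologicalSpace K] [IsTopologicalAddGroup K]
    {c : α → G} (hc : Injective (lift c)) :
    ∃ s : (G → α → K) → (G → K), Continuous s ∧ RightInverse s (coboundary c) := by
  obtain ⟨rep, hrep_mul, hrep_mem⟩ : ∃ rep : G → G,
      (∀ h n, rep (h * c n) = rep h) ∧ ∀ h, (rep h)⁻¹ * h ∈ (lift c).range :=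
    ⟨fun h => (h : G ⧸ (lift c).range).out,
      fun h n => congrArg Quotient.out
        (QuotientGroup.mk_mul_of_mem h (MonoidHom.mem_range.mpr ⟨of n, lift_apply_of⟩)),
      fun h => QuotientGroup.eq.mp (QuotientGroup.out_eq' _)⟩
  choose word hword using hrep_mem
  refine ⟨fun z h => toAdd ((pathSum c z (word h)).left (rep h)),
    continuous_pi fun h => continuous_pathSum_left c _ _, fun z => ?_⟩
  ext h n
  have hword_mul : word (h * c n) = word h * of n :=
    hc (by rw [hword, _root_.map_mul, hword, lift_apply_of, hrep_mul, mul_assoc])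
  simp only [coboundary, AddMonoidHom.coe_mk, ZeroHom.coe_mk]
  rw [hword_mul, hrep_mul, pathSum_mul_of_left, hword, mul_inv_cancel_left, add_sub_cancel_left]

end Coboundary

theorem stmt9 :
    ∃ (K₀ : Type) (_ : TopologicalSpace K₀) (_ : MeasurableSpace K₀) (_ : AddCommGroup K₀),
      BorelSpace K₀ ∧ CompactSpace K₀ ∧ TopologicalSpace.MetrizableSpace K₀ ∧
      IsTopologicalAddGroup K₀ ∧
      ∃ β₀ : F2 → (F2 → (ℕ → Bool)) → K₀ → K₀,
        -- each β₀(f, y) is a Borel affine bijection of K₀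
        (∀ (f : F2) (y : F2 → (ℕ → Bool)), ∃ (σ : K₀ ≃+ K₀) (t : K₀),
          Measurable (⇑σ) ∧ ∀ k : K₀, β₀ f y k = σ k + t) ∧
        -- the cocycle identity
        (∀ (f₁ f₂ : F2) (y : F2 → (ℕ → Bool)),
          β₀ (f₂ * f₁) y = (β₀ f₂ (bshift (ℕ → Bool) f₁ y)) ∘ (β₀ f₁ y)) ∧
        -- the equivariant Borel bijection
        ∃ φ₀ : (F2 → Bool) → K₀ × (F2 → (ℕ → Bool)),
          Measurable φ₀ ∧ Function.Bijective φ₀ ∧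
          (∀ (f : F2) (x : F2 → Bool),
            φ₀ (bshift Bool f x) =
              (β₀ f (φ₀ x).2 (φ₀ x).1, bshift (ℕ → Bool) f (φ₀ x).2)) ∧
          -- the induced projection is continuous
          Continuous fun x : F2 → Bool => (φ₀ x).2 := by
  obtain ⟨s, hs_cont, hs⟩ :=
    exists_continuous_rightInverse_coboundary (K := Bool) lift_conjGen_injective
  let S : SplitEquivariantHom (shiftEnd (G := F2) Bool) (shiftEnd (ℕ → Bool)) :=
    ⟨coboundary conjGen, coboundary_bshift conjGen, s, hs⟩
  have hπ : Continuous S.toHom := continuous_coboundary conjGen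
  have hK : CompactSpace S.toHom.ker :=
    isCompact_iff_compactSpace.mp (isClosed_singleton.preimage hπ).isCompact
  refine ⟨S.toHom.ker, inferInstance, inferInstance, inferInstance, inferInstance, hK,
    Topology.IsEmbedding.subtypeVal.metrizableSpace, inferInstance, S.cocycle,
    fun g y => ⟨S.kerAut g, _, (S.continuous_kerAut (continuous_bshift Bool g)).measurable,
      fun _ => rfl⟩,
    S.cocycle_mul, S.kerProdEquiv, (S.continuous_kerProdEquiv hπ hs_cont).measurable,
    S.kerProdEquiv.bijective, S.kerProdEquiv_act, hπ⟩
end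

section
/- Let G be a countably infinite group and let F₂ be the free group on two generators. Let G and F₂ both act in a Borel way on a standard Borel space Z (not necessarily freely), with every F₂-orbit contained in a G-orbit. Assume there is a Borel cocycle α : F₂ × Z → G (i.e. α(f₂f₁, z) = α(f₂, f₁·z)·α(f₁, z)) satisfying α(f, z)·z = f·z for all f ∈ F₂ and z ∈ Z, and such that for each z ∈ Z the map f ↦ α(f, z) is injective. Then there exist a compact metrizable abelian group K, a map β : G × (2^ℕ)^G × Z → Aff(K) (each β(g, y, z) a Borel affine bijection of K) satisfying the cocycle identity β(g₂g₁, y, z) = β(g₂, g₁·y, g₁·z) ∘ β(g₁, y, z), and a Borel bijection φ : 2^G × Z → K × (2^ℕ)^G × Z which is G-equivariant when G acts on 2^G × Z diagonally (shift on 2^G) and on K × (2^ℕ)^G × Z by the skew product g·(k, y, z) = (β(g, y, z)(k), g·y, g·z). Moreover, if Z is a Polish space on which G and F₂ act continuously and α is continuous (G and F₂ discrete), then the induced projection π : 2^G × Z → (2^ℕ)^G (the (2^ℕ)^G-component of φ) is continuous. -/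
open Function

/-- `Bool` as `ℤ/2`; the group `K` of the theorem is `ℕ → Bool`. -/
instance : AddCommGroup Bool where
  add := xor
  zero := false
  neg := id
  add_assoc := Bool.xor_assoc
  zero_add := Bool.false_xor
  add_zero := Bool.xor_false
  neg_add_cancel := Bool.xor_self
  add_comm := Bool.xor_comm
  nsmul := nsmulRec
  zsmul := zsmulRec

namespace F2

def u : F2 := FreeGroup.of 0
def v : F2 := FreeGroup.of 1

def conjFamily (n : ℕ) : F2 := u ^ n * v * (u ^ n)⁻¹

def conjFamilyHom : FreeGroup ℕ →* F2 := FreeGroup.lift conjFamily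

def shiftAut : MulAut (FreeGroup ℤ) := FreeGroup.freeGroupCongr (Equiv.addRight 1)

def modelAction : F2 →* Equiv.Perm (FreeGroup ℤ) :=
  FreeGroup.lift ![MulAut.toPerm _ shiftAut, MulAction.toPerm (FreeGroup.of (0 : ℤ))]

theorem shiftAut_pow_apply_of (n : ℕ) (k : ℤ) : (shiftAut ^ n) (.of k) = .of (k + n) := by
  induction n with
  | zero => simp
  | succ n ih =>
    rw [pow_succ', MulAut.mul_apply, ih]
    simp [shiftAut, add_assoc]

theorem modelAction_conjFamily (n : ℕ) (ξ : FreeGroup ℤ) :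
    modelAction (conjFamily n) ξ = .of (n : ℤ) * ξ := by
  have hu : ∀ m : ℕ, modelAction (u ^ m) = MulAut.toPerm _ (shiftAut ^ m) := by
    simp [modelAction, u]
  have hv : modelAction v = MulAction.toPerm (FreeGroup.of (0 : ℤ)) := by simp [modelAction, v]
  rw [conjFamily, map_mul, map_mul, map_inv, hu, hv, ← map_inv, Equiv.Perm.mul_apply,
    Equiv.Perm.mul_apply]
  change (shiftAut ^ n) (.of 0 * (shiftAut ^ n)⁻¹ ξ) = _
  rw [map_mul, MulAut.apply_inv_self, shiftAut_pow_apply_of, zero_add]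

theorem conjFamilyHom_injective : Injective conjFamilyHom := by
  have hcomp : modelAction.comp conjFamilyHom =
      (MulAction.toPermHom _ _).comp (FreeGroup.map (Nat.cast : ℕ → ℤ)) :=
    FreeGroup.ext_hom _ _ fun n => Equiv.ext fun ξ => by
      simp [conjFamilyHom, modelAction_conjFamily]
  have hinj : Injective ((MulAction.toPermHom (FreeGroup ℤ) (FreeGroup ℤ)).comp
      (FreeGroup.map (Nat.cast : ℕ → ℤ))) := fun W W' h =>
    FreeGroup.map_injective Nat.cast_injective (by simpa using congr($h 1))
  rw [← hcomp] at hinj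
  exact fun W W' h => hinj (by rw [MonoidHom.comp_apply, MonoidHom.comp_apply, h])

def uExponent : F2 →* Multiplicative ℤ := FreeGroup.lift ![Multiplicative.ofAdd 1, 1]

theorem uExponent_conjFamilyHom (W : FreeGroup ℕ) : uExponent (conjFamilyHom W) = 1 := by
  have : uExponent.comp conjFamilyHom = 1 :=
    FreeGroup.ext_hom _ _ fun n => by simp [conjFamilyHom, conjFamily, uExponent, u, v]
  exact DFunLike.congr_fun this W

theorem uExponent_u_pow (k : ℕ) : uExponent (u ^ k) = Multiplicative.ofAdd (k : ℤ) := by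
  simp [uExponent, u, ← ofAdd_nsmul]

theorem eq_of_conjFamilyHom_apply_u_pow {X : Type*} {ρ : F2 →* Equiv.Perm X}
    (hfree : ∀ f x, ρ f x = x → f = 1) {x : X} {j k : ℕ} {W : FreeGroup ℕ}
    (h : ρ (conjFamilyHom W) (ρ (u ^ j) x) = ρ (u ^ k) x) : j = k := by
  have hW : conjFamilyHom W * u ^ j = u ^ k := by
    refine (inv_mul_eq_one.1 (hfree _ x ?_)).symm
    rw [map_mul, map_inv, Equiv.Perm.mul_apply, map_mul, Equiv.Perm.mul_apply, h]
    simp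
  have := congrArg uExponent hW
  simp only [map_mul, uExponent_conjFamilyHom, uExponent_u_pow, one_mul] at this
  exact_mod_cast Multiplicative.ofAdd.injective this

end F2

section Transversal

variable {H X : Type*} [Group H] (ρ : H →* Equiv.Perm X) (e : ℕ ≃ X)

def IsFreeTransversal {J : Type*} (s : J → X) : Prop := Bijective fun p : J × H => ρ p.2 (s p.1)

variable {ρ} in
noncomputable def IsFreeTransversal.equiv {J : Type*} {s : J → X} (hs : IsFreeTransversal ρ s) :
    J × H ≃ X :=
  Equiv.ofBijective _ hs

variable {ρ} in
theorem IsFreeTransversal.equiv_symm_apply {J : Type*} {s : J → X} (hs : IsFreeTransversal ρ s)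
    (j : J) (w : H) : hs.equiv.symm (ρ w (s j)) = (j, w) :=
  hs.equiv.symm_apply_apply (j, w)

def IsLeastInOrbit (n : ℕ) : Prop := ∀ m < n, ∀ w, ρ w (e n) ≠ e m

theorem exists_isLeastInOrbit (x : X) : ∃ n w, IsLeastInOrbit ρ e n ∧ ρ w x = e n := by
  classical
  have hex : ∃ n w, ρ w x = e n := ⟨e.symm x, 1, by simp⟩
  obtain ⟨w, hw⟩ := Nat.find_spec hex
  refine ⟨Nat.find hex, w, fun m hm w' hw' => Nat.find_min hex hm ⟨w' * w, ?_⟩, hw⟩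
  rw [map_mul, Equiv.Perm.mul_apply, hw, hw']

theorem IsLeastInOrbit.eq {ρ : H →* Equiv.Perm X} {e : ℕ ≃ X} {n m : ℕ}
    (hn : IsLeastInOrbit ρ e n) (hm : IsLeastInOrbit ρ e m) {w : H} (h : ρ w (e n) = e m) :
    n = m := by
  rcases lt_trichotomy n m with hlt | heq | hgt
  · exact absurd (by rw [← h]; simp) (hm n hlt w⁻¹)
  · exact heq
  · exact absurd h (hn m hgt w)

theorem infinite_setOf_isLeastInOrbit (q : ℕ → X) (hq : ∀ j k w, ρ w (q j) = q k → j = k) :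
    {n | IsLeastInOrbit ρ e n}.Infinite := by
  choose n w hn hw using fun k => exists_isLeastInOrbit ρ e (q k)
  refine Set.infinite_of_injective_forall_mem (fun j k hjk => hq j k ((w k)⁻¹ * w j) ?_) hn
  rw [map_mul, Equiv.Perm.mul_apply, hw, hjk, ← hw, map_inv]
  simp

theorem isFreeTransversal_nth_isLeastInOrbit (hfree : ∀ w x, ρ w x = x → w = 1)
    (hinf : {n | IsLeastInOrbit ρ e n}.Infinite) :
    IsFreeTransversal ρ fun i => e (Nat.nth (IsLeastInOrbit ρ e) i) := by
  classical
  refine ⟨fun ⟨i, w⟩ ⟨i', w'⟩ h => ?_, fun x => ?_⟩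
  · have hback : ρ (w'⁻¹ * w) (e (Nat.nth (IsLeastInOrbit ρ e) i)) =
        e (Nat.nth (IsLeastInOrbit ρ e) i') := by
      simp only [map_mul, map_inv, Equiv.Perm.mul_apply] at h ⊢
      rw [h]
      simp
    obtain rfl : i = i' := Nat.nth_injective hinf
      (IsLeastInOrbit.eq (Nat.nth_mem_of_infinite hinf i) (Nat.nth_mem_of_infinite hinf i') hback)
    rw [inv_mul_eq_one.1 (hfree _ _ hback)]
  · obtain ⟨n, w, hn, hw⟩ := exists_isLeastInOrbit ρ e x
    exact ⟨(Nat.count (IsLeastInOrbit ρ e) n, w⁻¹), by simp [Nat.nth_count hn, ← hw]⟩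

end Transversal

namespace FreeGroup

variable {ι X A J : Type*} [AddCommGroup A] (ρ : FreeGroup ι →* Equiv.Perm X)

def coboundary (x : X → A) (h : X) (i : ι) : A := x (ρ (of i) h) - x h

def skewPerm (y : X → ι → A) (i : ι) : Equiv.Perm (X × A) where
  toFun p := (ρ (of i) p.1, p.2 + y p.1 i)
  invFun p := ((ρ (of i)).symm p.1, p.2 - y ((ρ (of i)).symm p.1) i)
  left_inv p := by simp
  right_inv p := by simp

theorem exists_lift_skewPerm_apply (y : X → ι → A) (w : FreeGroup ι) :
    ∃ c : X → A, ∀ h a, lift (skewPerm ρ y) w (h, a) = (ρ w h, a + c h) := by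
  induction w with
  | C1 => exact ⟨0, by simp⟩
  | of i => exact ⟨fun h => y h i, by simp [skewPerm]⟩
  | inv_of i _ =>
    refine ⟨fun h => -y ((ρ (of i)).symm h) i, fun h a => ?_⟩
    simp [skewPerm, Equiv.Perm.inv_def, sub_eq_add_neg]
  | mul w₁ w₂ ih₁ ih₂ =>
    obtain ⟨c₁, hc₁⟩ := ih₁
    obtain ⟨c₂, hc₂⟩ := ih₂
    exact ⟨fun h => c₂ h + c₁ (ρ w₂ h), by simp [hc₁, hc₂, add_assoc]⟩

/-- The sum of `y` along the path from `h` to `w • h` in the Cayley graph of the action. -/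
def pathSum (y : X → ι → A) (w : FreeGroup ι) (h : X) : A := (lift (skewPerm ρ y) w (h, 0)).2

theorem lift_skewPerm_apply (y : X → ι → A) (w : FreeGroup ι) (h : X) (a : A) :
    lift (skewPerm ρ y) w (h, a) = (ρ w h, a + pathSum ρ y w h) := by
  obtain ⟨c, hc⟩ := exists_lift_skewPerm_apply ρ y w
  simp [pathSum, hc]

@[simp] theorem pathSum_one (y : X → ι → A) (h : X) : pathSum ρ y 1 h = 0 := by
  simp [pathSum]

theorem pathSum_of (y : X → ι → A) (i : ι) (h : X) : pathSum ρ y (of i) h = y h i := by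
  simp [pathSum, skewPerm]

theorem pathSum_mul (y : X → ι → A) (w₁ w₂ : FreeGroup ι) (h : X) :
    pathSum ρ y (w₁ * w₂) h = pathSum ρ y w₁ (ρ w₂ h) + pathSum ρ y w₂ h := by
  calc pathSum ρ y (w₁ * w₂) h = (lift (skewPerm ρ y) w₁ (lift (skewPerm ρ y) w₂ (h, 0))).2 := by
        simp [pathSum]
    _ = _ := by rw [lift_skewPerm_apply ρ y w₂, lift_skewPerm_apply, zero_add, add_comm]

theorem apply_eq_of_coboundary_eq_zero {x : X → A} (hx : coboundary ρ x = 0)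
    (w : FreeGroup ι) (h : X) : x (ρ w h) = x h := by
  induction w generalizing h with
  | C1 => simp
  | of i => exact sub_eq_zero.1 (congr_fun (congr_fun hx h) i)
  | inv_of i ih => rw [← ih (ρ (of i)⁻¹ h)]; simp
  | mul w₁ w₂ ih₁ ih₂ => simp [ih₁, ih₂]

def coboundaryHom (s : J → X) : (X → A) →+ (J → A) × (X → ι → A) where
  toFun x := (x ∘ s, coboundary ρ x)
  map_zero' := by ext <;> simp [coboundary]
  map_add' x x' := by ext <;> simp [coboundary]; abel

theorem coboundaryHom_apply (s : J → X) (x : X → A) :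
    coboundaryHom ρ s x = (x ∘ s, coboundary ρ x) := rfl

variable {ρ} {s : J → X}

/-- Solve `coboundary ρ x = y` by summing `y` along paths issuing from the transversal. -/
theorem bijective_coboundaryHom (hs : IsFreeTransversal ρ s) :
    Bijective (coboundaryHom (A := A) ρ s) := by
  refine ⟨(injective_iff_map_eq_zero _).2 fun x hx => ?_, fun ⟨k, y⟩ => ?_⟩
  · rw [coboundaryHom_apply, Prod.mk_eq_zero] at hx
    obtain ⟨hxs, hdx⟩ := hx
    funext h
    obtain ⟨⟨j, w⟩, rfl⟩ := hs.2 h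
    simpa [apply_eq_of_coboundary_eq_zero ρ hdx] using congr_fun hxs j
  · set x : X → A := fun h =>
      k (hs.equiv.symm h).1 + pathSum ρ y (hs.equiv.symm h).2 (s (hs.equiv.symm h).1)
    have hx : ∀ j w, x (ρ w (s j)) = k j + pathSum ρ y w (s j) := fun j w => by
      simp only [x, hs.equiv_symm_apply]
    refine ⟨x, ?_⟩
    rw [coboundaryHom_apply]
    refine Prod.ext (funext fun j => by simpa using hx j 1) (funext fun h => funext fun i => ?_)
    obtain ⟨⟨j, w⟩, rfl⟩ := hs.2 h
    change x (ρ (of i) (ρ w (s j))) - x (ρ w (s j)) = y (ρ w (s j)) i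
    rw [← Equiv.Perm.mul_apply, ← _root_.map_mul, hx, hx, pathSum_mul, pathSum_of]
    abel

noncomputable def coboundaryEquiv (hs : IsFreeTransversal ρ s) :
    (X → A) ≃+ (J → A) × (X → ι → A) :=
  AddEquiv.ofBijective (coboundaryHom ρ s) (bijective_coboundaryHom hs)

theorem coboundaryEquiv_apply (hs : IsFreeTransversal ρ s) (x : X → A) :
    coboundaryEquiv hs x = (x ∘ s, coboundary ρ x) := rfl

theorem coboundaryEquiv_symm_apply_zero (hs : IsFreeTransversal ρ s) (k : J → A) :
    (coboundaryEquiv hs).symm (k, 0) = fun h => k (hs.equiv.symm h).1 := by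
  rw [AddEquiv.symm_apply_eq, coboundaryEquiv_apply]
  refine Prod.ext (funext fun j => by simpa using (congrArg (k ∘ Prod.fst) (hs.equiv_symm_apply j 1)).symm)
    (funext fun h => funext fun i => ?_)
  obtain ⟨⟨j, w⟩, rfl⟩ := hs.2 h
  simp only [coboundary, Pi.zero_apply]
  rw [← Equiv.Perm.mul_apply, ← _root_.map_mul, hs.equiv_symm_apply, hs.equiv_symm_apply, sub_self]

end FreeGroup

section Measurability

variable {Z : Type*} [MeasurableSpace Z]

theorem measurable_nat_nth {p : Z → ℕ → Prop} (hp : ∀ n, MeasurableSet {z | p z n})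
    (hinf : ∀ z, {n | p z n}.Infinite) (i : ℕ) : Measurable fun z => Nat.nth (p z) i := by
  classical
  have hcount : ∀ n, Measurable fun z => Nat.count (p z) n := fun n => by
    simp_rw [Nat.count_eq_card_filter_range, Finset.card_filter]
    exact Finset.measurable_sum _ fun m _ => Measurable.ite (hp m) measurable_const measurable_const
  refine measurable_to_countable' fun n => ?_
  have hfiber : (fun z => Nat.nth (p z) i) ⁻¹' {n} =
      {z | p z n} ∩ (fun z => Nat.count (p z) n) ⁻¹' {i} := by
    ext z
    simp only [Set.mem_preimage, Set.mem_singleton_iff, Set.mem_inter_iff, Set.mem_ofPred_eq]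
    constructor
    · rintro rfl
      exact ⟨Nat.nth_mem_of_infinite (hinf z) i, Nat.count_nth_of_infinite (hinf z) i⟩
    · rintro ⟨hn, rfl⟩
      exact Nat.nth_count hn
  rw [hfiber]
  exact (hp n).inter (hcount n (measurableSet_singleton i))

theorem measurableSet_isLeastInOrbit {H X : Type*} [Group H] [Countable H] [MeasurableSpace X]
    [MeasurableSingletonClass X] {ρ : Z → H →* Equiv.Perm X}
    (hρ : ∀ w x, Measurable fun z => ρ z w x) (e : ℕ ≃ X) (n : ℕ) :
    MeasurableSet {z | IsLeastInOrbit (ρ z) e n} := by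
  simp only [IsLeastInOrbit, Set.ofPred_forall]
  exact .iInter fun m => .iInter fun _ => .iInter fun w =>
    (hρ w (e n) (measurableSet_singleton (e m))).compl

theorem measurable_eval_comp {G A : Type*} [Countable G] [MeasurableSpace G]
    [MeasurableSingletonClass G] [MeasurableSpace A] {c : Z → G} (hc : Measurable c) :
    Measurable fun p : (G → A) × Z => p.1 (c p.2) :=
  (measurable_from_prod_countable_left (f := fun q : (G → A) × G => q.1 q.2)
    fun g => measurable_pi_apply g).comp
    (measurable_fst.prodMk (hc.comp measurable_snd))

end Measurability

theorem continuous_eval_comp {G Z A : Type*} [TopologicalSpace Z] [TopologicalSpace A]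
    {c : Z → G} (hc : IsLocallyConstant c) : Continuous fun p : (G → A) × Z => p.1 (c p.2) := by
  refine continuous_iff_continuousAt.2 fun p => ?_
  have hnear : (fun q : (G → A) × Z => q.1 (c p.2)) =ᶠ[nhds p] fun q => q.1 (c q.2) :=
    ((continuous_snd.tendsto p).eventually (hc.eventually_eq p.2)).mono fun q hq => by
      simp only [hq]
  exact ((continuous_apply _).comp continuous_fst).continuousAt.congr hnear

section SkewProduct

variable {G Z V K Y : Type*} [AddCommGroup V] [AddCommGroup K] [AddCommGroup Y]
  {a : G → Z → Z} {L : G → V ≃+ V} {M : G → Y ≃+ Y} {E : Z → V ≃+ K × Y}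

variable (a L E) in
def skewCocycle (g : G) (y : Y) (z : Z) (k : K) : K := (E (a g z) (L g ((E z).symm (k, y)))).1

theorem skewCocycle_add (g : G) (y y' : Y) (z : Z) (k k' : K) :
    skewCocycle a L E g (y + y') z (k + k') =
      skewCocycle a L E g y z k + skewCocycle a L E g y' z k' := by
  simp only [skewCocycle, ← Prod.mk_add_mk, map_add, Prod.fst_add]

theorem skewCocycle_eq_add (g : G) (y : Y) (z : Z) (k : K) :
    skewCocycle a L E g y z k = skewCocycle a L E g 0 z k + skewCocycle a L E g y z 0 := by
  simpa using skewCocycle_add g 0 y z k 0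

theorem map_act_eq_skewCocycle (hE : ∀ g z v, (E (a g z) (L g v)).2 = M g (E z v).2)
    (g : G) (z : Z) (v : V) :
    E (a g z) (L g v) = (skewCocycle a L E g (E z v).2 z (E z v).1, M g (E z v).2) :=
  Prod.ext (by simp [skewCocycle]) (hE g z v)

theorem skewCocycle_mul [Group G] (ha : ∀ g g', a (g * g') = a g ∘ a g')
    (hL : ∀ g g' v, L (g * g') v = L g (L g' v))
    (hE : ∀ g z v, (E (a g z) (L g v)).2 = M g (E z v).2) (g₁ g₂ : G) (y : Y) (z : Z) :
    skewCocycle a L E (g₂ * g₁) y z =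
      skewCocycle a L E g₂ (M g₁ y) (a g₁ z) ∘ skewCocycle a L E g₁ y z := by
  funext k
  have h₁ : E (a g₁ z) (L g₁ ((E z).symm (k, y))) = (skewCocycle a L E g₁ y z k, M g₁ y) := by
    simpa using map_act_eq_skewCocycle hE g₁ z ((E z).symm (k, y))
  change (E (a (g₂ * g₁) z) (L (g₂ * g₁) ((E z).symm (k, y)))).1 =
    (E (a g₂ (a g₁ z)) (L g₂ ((E (a g₁ z)).symm (skewCocycle a L E g₁ y z k, M g₁ y)))).1
  rw [← h₁, AddEquiv.symm_apply_apply, ha, hL, comp_apply]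

theorem skewCocycle_one [Group G] (ha : a 1 = id) (hL : ∀ v, L 1 v = v) (y : Y) (z : Z) (k : K) :
    skewCocycle a L E 1 y z k = k := by
  simp [skewCocycle, ha, hL]

theorem exists_addEquiv_eq_skewCocycle [Group G] (ha₁ : a 1 = id)
    (ha : ∀ g g', a (g * g') = a g ∘ a g') (hL₁ : ∀ v, L 1 v = v) (hL : ∀ g g' v, L (g * g') v = L g (L g' v))
    (hE : ∀ g z v, (E (a g z) (L g v)).2 = M g (E z v).2) (g : G) (z : Z) :
    ∃ σ : K ≃+ K, ⇑σ = skewCocycle a L E g 0 z := by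
  have hinv : ∀ g z, LeftInverse (skewCocycle a L E g⁻¹ 0 (a g z)) (skewCocycle a L E g 0 z) :=
    fun g z k => by
      have h := congr_fun (skewCocycle_mul ha hL hE g g⁻¹ 0 z) k
      rwa [inv_mul_cancel, skewCocycle_one ha₁ hL₁, map_zero, comp_apply, eq_comm] at h
  refine ⟨{ toFun := skewCocycle a L E g 0 z
            invFun := skewCocycle a L E g⁻¹ 0 (a g z)
            left_inv := hinv g z
            right_inv := fun k => ?_
            map_add' := fun k k' => by
              simpa using skewCocycle_add (a := a) (L := L) (E := E) g 0 0 z k k' }, rfl⟩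
  have h := hinv g⁻¹ (a g z) k
  rwa [inv_inv, ← comp_apply (f := a g⁻¹), ← ha, inv_mul_cancel, ha₁, id] at h

theorem bijective_skewProduct : Bijective fun p : V × Z => ((E p.2 p.1).1, (E p.2 p.1).2, p.2) :=
  bijective_iff_has_inverse.2
    ⟨fun q => ((E q.2.2).symm (q.1, q.2.1), q.2.2), fun p => by simp, fun q => by simp⟩

end SkewProduct

section BernoulliShift

variable {G : Type*} [Group G]

theorem bshift_mul (A : Type*) (g g' : G) (x : G → A) :
    bshift A (g * g') x = bshift A g (bshift A g' x) := by
  funext h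
  simp [bshift, mul_assoc]

theorem bshift_one (A : Type*) (x : G → A) : bshift A 1 x = x := by
  funext h
  simp [bshift]

def bshiftAddEquiv (A : Type*) [Add A] (g : G) : (G → A) ≃+ (G → A) where
  toFun := bshift A g
  invFun := bshift A g⁻¹
  left_inv x := by rw [← bshift_mul, inv_mul_cancel, bshift_one]
  right_inv x := by rw [← bshift_mul, mul_inv_cancel, bshift_one]
  map_add' _ _ := rfl

@[simp] theorem bshiftAddEquiv_apply (A : Type*) [Add A] (g : G) (x : G → A) :
    bshiftAddEquiv A g x = bshift A g x := rfl

end BernoulliShift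

structure OrbitCocycle (G : Type*) [Group G] (Z : Type*) where
  a : G → Z → Z
  b : F2 → Z → Z
  α : F2 → Z → G
  a_one : a 1 = id
  a_mul : ∀ g g' : G, a (g * g') = a g ∘ a g'
  b_one : b 1 = id
  α_mul : ∀ (f₁ f₂ : F2) (z : Z), α (f₂ * f₁) z = α f₂ (b f₁ z) * α f₁ z
  a_α : ∀ (f : F2) (z : Z), a (α f z) z = b f z

namespace OrbitCocycle

variable {G Z : Type*} [Group G] (S : OrbitCocycle G Z)

theorem a_a (g g' : G) (z : Z) : S.a g (S.a g' z) = S.a (g * g') z := by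
  rw [S.a_mul]; rfl

theorem α_one (z : Z) : S.α 1 z = 1 := by
  have h := S.α_mul 1 1 z
  rw [mul_one, S.b_one, id] at h
  exact right_eq_mul.1 h

/-- The action of `F₂` on the fibre `G` over `z`, transported from the `b`-action on the orbit
of `z` through `h ↦ h⁻¹ • z`. -/
abbrev fiberMulAction (z : Z) : MulAction F2 G where
  smul f h := h * (S.α f (S.a h⁻¹ z))⁻¹
  one_smul h := by
    change h * (S.α 1 _)⁻¹ = h
    rw [S.α_one, inv_one, mul_one]
  mul_smul f₁ f₂ h := by
    change h * (S.α (f₁ * f₂) (S.a h⁻¹ z))⁻¹ =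
      h * (S.α f₂ (S.a h⁻¹ z))⁻¹ * (S.α f₁ (S.a (h * (S.α f₂ (S.a h⁻¹ z))⁻¹)⁻¹ z))⁻¹
    rw [mul_inv_rev, inv_inv, ← S.a_a, S.a_α, S.α_mul, mul_inv_rev, mul_assoc]

def fiberAction (z : Z) : F2 →* Equiv.Perm G :=
  @MulAction.toPermHom F2 G _ (S.fiberMulAction z)

theorem fiberAction_apply (z : Z) (f : F2) (h : G) :
    S.fiberAction z f h = h * (S.α f (S.a h⁻¹ z))⁻¹ := rfl

theorem fiberAction_mul_left (g : G) (z : Z) (f : F2) (h : G) :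
    S.fiberAction (S.a g z) f (g * h) = g * S.fiberAction z f h := by
  rw [fiberAction_apply, fiberAction_apply, S.a_a, mul_inv_rev, inv_mul_cancel_right, mul_assoc]

theorem fiberAction_eq_one (hinj : ∀ z, Injective fun f => S.α f z) {z : Z} {f : F2} {h : G}
    (hfix : S.fiberAction z f h = h) : f = 1 := by
  rw [fiberAction_apply, mul_eq_left, inv_eq_one] at hfix
  exact hinj _ (hfix.trans (S.α_one _).symm)

theorem measurable_fiberAction_apply [MeasurableSpace Z] [MeasurableSpace G]
    [DiscreteMeasurableSpace G] (hameas : ∀ g, Measurable (S.a g))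
    (hαmeas : ∀ f, Measurable (S.α f)) (f : F2) (h : G) :
    Measurable fun z => S.fiberAction z f h :=
  (Measurable.of_discrete (f := fun g : G => h * g⁻¹)).comp ((hαmeas f).comp (hameas h⁻¹))

theorem isLocallyConstant_fiberAction_apply [TopologicalSpace Z]
    (hacont : ∀ g, Continuous (S.a g)) (hαlc : ∀ f, IsLocallyConstant (S.α f)) (f : F2) (h : G) :
    IsLocallyConstant fun z => S.fiberAction z f h :=
  ((hαlc f).comp_continuous (hacont h⁻¹)).comp fun g => h * g⁻¹

def treeAction (z : Z) : FreeGroup ℕ →* Equiv.Perm G := (S.fiberAction z).comp F2.conjFamilyHom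

theorem treeAction_mul_left (g : G) (z : Z) (w : FreeGroup ℕ) (h : G) :
    S.treeAction (S.a g z) w (g * h) = g * S.treeAction z w h :=
  S.fiberAction_mul_left g z _ h

theorem coboundary_treeAction_bshift {A : Type*} [AddCommGroup A] (g : G) (z : Z) (x : G → A) :
    FreeGroup.coboundary (S.treeAction (S.a g z)) (bshift A g x) =
      bshift (ℕ → A) g (FreeGroup.coboundary (S.treeAction z) x) := by
  funext h n
  have hh : S.treeAction (S.a g z) (.of n) h = g * S.treeAction z (.of n) (g⁻¹ * h) := by
    rw [← S.treeAction_mul_left, mul_inv_cancel_left]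
  simp only [FreeGroup.coboundary, bshift, hh, inv_mul_cancel_left]

variable {S}

theorem treeAction_eq_one (hinj : ∀ z, Injective fun f => S.α f z) {z : Z} {w : FreeGroup ℕ}
    {h : G} (hfix : S.treeAction z w h = h) : w = 1 :=
  F2.conjFamilyHom_injective ((S.fiberAction_eq_one hinj hfix).trans (map_one _).symm)

theorem infinite_setOf_isLeastInOrbit_treeAction (hinj : ∀ z, Injective fun f => S.α f z)
    (e : ℕ ≃ G) (z : Z) : {n | IsLeastInOrbit (S.treeAction z) e n}.Infinite :=
  infinite_setOf_isLeastInOrbit _ e (fun k => S.fiberAction z (F2.u ^ k) 1)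
    fun _ _ _ h => F2.eq_of_conjFamilyHom_apply_u_pow (fun _ _ => S.fiberAction_eq_one hinj) h

variable (S) in
noncomputable def transversal (e : ℕ ≃ G) (z : Z) (i : ℕ) : G :=
  e (Nat.nth (IsLeastInOrbit (S.treeAction z) e) i)

theorem isFreeTransversal_transversal (hinj : ∀ z, Injective fun f => S.α f z) (e : ℕ ≃ G)
    (z : Z) : IsFreeTransversal (S.treeAction z) (S.transversal e z) :=
  isFreeTransversal_nth_isLeastInOrbit _ e (fun _ _ => S.treeAction_eq_one hinj)
    (infinite_setOf_isLeastInOrbit_treeAction hinj e z)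

theorem measurable_transversal [MeasurableSpace Z] [MeasurableSpace G] [DiscreteMeasurableSpace G]
    [Countable G] (hameas : ∀ g, Measurable (S.a g)) (hαmeas : ∀ f, Measurable (S.α f))
    (hinj : ∀ z, Injective fun f => S.α f z) (e : ℕ ≃ G) (i : ℕ) :
    Measurable fun z => S.transversal e z i :=
  Measurable.of_discrete.comp <| measurable_nat_nth
    (measurableSet_isLeastInOrbit (ρ := S.treeAction)
      (fun _ h => S.measurable_fiberAction_apply hameas hαmeas _ h) e)
    (infinite_setOf_isLeastInOrbit_treeAction hinj e) i

variable (S) in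
noncomputable def coboundaryEquiv (A : Type*) [AddCommGroup A]
    (hinj : ∀ z, Injective fun f => S.α f z) (e : ℕ ≃ G) (z : Z) :
    (G → A) ≃+ (ℕ → A) × (G → ℕ → A) :=
  FreeGroup.coboundaryEquiv (S.isFreeTransversal_transversal hinj e z)

variable {A : Type*} [AddCommGroup A] {hinj : ∀ z, Injective fun f => S.α f z} {e : ℕ ≃ G}

theorem measurable_coboundaryEquiv [MeasurableSpace Z] [MeasurableSpace G]
    [DiscreteMeasurableSpace G] [Countable G] [MeasurableSpace A] [MeasurableSub₂ A]
    (hameas : ∀ g, Measurable (S.a g)) (hαmeas : ∀ f, Measurable (S.α f)) :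
    Measurable fun p : (G → A) × Z => S.coboundaryEquiv A hinj e p.2 p.1 :=
  (measurable_pi_lambda _ fun i =>
      measurable_eval_comp (S.measurable_transversal hameas hαmeas hinj e i)).prodMk
    (measurable_pi_lambda _ fun h => measurable_pi_lambda _ fun _ =>
      (measurable_eval_comp (S.measurable_fiberAction_apply hameas hαmeas _ h)).sub
        ((measurable_pi_apply h).comp measurable_fst))

theorem continuous_snd_coboundaryEquiv [TopologicalSpace Z] [TopologicalSpace A] [ContinuousSub A]
    (hacont : ∀ g, Continuous (S.a g)) (hαlc : ∀ f, IsLocallyConstant (S.α f)) :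
    Continuous fun p : (G → A) × Z => (S.coboundaryEquiv A hinj e p.2 p.1).2 :=
  continuous_pi fun h => continuous_pi fun _ =>
    (continuous_eval_comp (S.isLocallyConstant_fiberAction_apply hacont hαlc _ h)).sub
      ((continuous_apply h).comp continuous_fst)

/-- The linear part of the cocycle permutes coordinates: a solution with zero coboundary is
constant on orbits, and the shift by `g` carries orbits at `z` to orbits at `g • z`. -/
theorem measurable_skewCocycle_zero [MeasurableSpace A] (g : G) (z : Z) :
    Measurable (skewCocycle S.a (bshiftAddEquiv A) (S.coboundaryEquiv A hinj e) g 0 z) := by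
  have hperm : skewCocycle S.a (bshiftAddEquiv A) (S.coboundaryEquiv A hinj e) g 0 z = fun k i =>
      k ((S.isFreeTransversal_transversal hinj e z).equiv.symm
        (g⁻¹ * S.transversal e (S.a g z) i)).1 := by
    funext k i
    simp [skewCocycle, coboundaryEquiv, FreeGroup.coboundaryEquiv_symm_apply_zero,
      FreeGroup.coboundaryEquiv_apply, bshift]
  rw [hperm]
  exact measurable_pi_lambda _ fun i => measurable_pi_apply _

end OrbitCocycle

theorem stmt10_general (G : Type*) [Group G] [Countable G] [Infinite G]
    [MeasurableSpace G] [DiscreteMeasurableSpace G]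
    (Z : Type) [MeasurableSpace Z]
    -- a Borel action of G on Z
    (a : G → Z → Z) (ha1 : a 1 = id) (hamul : ∀ g g' : G, a (g * g') = a g ∘ a g')
    (hameas : ∀ g : G, Measurable (a g))
    -- a Borel action of F₂ on Z
    (b : F2 → Z → Z) (hb1 : b 1 = id)
    -- a Borel cocycle α : F₂ × Z → G relating the actions
    (α : F2 → Z → G) (hαmeas : ∀ f : F2, Measurable (α f))
    (hαcoc : ∀ (f₁ f₂ : F2) (z : Z), α (f₂ * f₁) z = α f₂ (b f₁ z) * α f₁ z)
    (hα : ∀ (f : F2) (z : Z), a (α f z) z = b f z)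
    (hαinj : ∀ z : Z, Function.Injective fun f : F2 => α f z) :
    ∃ (K : Type) (_ : TopologicalSpace K) (_ : MeasurableSpace K) (_ : AddCommGroup K),
      BorelSpace K ∧ CompactSpace K ∧ TopologicalSpace.MetrizableSpace K ∧
      IsTopologicalAddGroup K ∧
      ∃ β : G → (G → (ℕ → Bool)) → Z → K → K,
        -- each β(g, y, z) is a Borel affine bijection of K
        (∀ (g : G) (y : G → (ℕ → Bool)) (z : Z), ∃ (σ : K ≃+ K) (t : K),
          Measurable (⇑σ) ∧ ∀ k : K, β g y z k = σ k + t) ∧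
        -- the cocycle identity
        (∀ (g₁ g₂ : G) (y : G → (ℕ → Bool)) (z : Z),
          β (g₂ * g₁) y z = (β g₂ (bshift (ℕ → Bool) g₁ y) (a g₁ z)) ∘ (β g₁ y z)) ∧
        -- the equivariant Borel bijection
        ∃ φ : (G → Bool) × Z → K × (G → (ℕ → Bool)) × Z,
          Measurable φ ∧ Function.Bijective φ ∧
          (∀ (g : G) (p : (G → Bool) × Z),
            φ (bshift Bool g p.1, a g p.2) =
              (β g (φ p).2.1 (φ p).2.2 (φ p).1,
               bshift (ℕ → Bool) g (φ p).2.1, a g (φ p).2.2)) ∧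
          -- moreover: continuity of the induced projection in the topological setting
          (∀ (tZ : TopologicalSpace Z), BorelSpace Z → PolishSpace Z →
            (∀ g : G, Continuous (a g)) →
            (∀ f : F2, Continuous (b f)) →
            (∀ f : F2, IsLocallyConstant (α f)) →
            Continuous fun p : (G → Bool) × Z => (φ p).2.1) := by
  let S : OrbitCocycle G Z := ⟨a, b, α, ha1, hamul, hb1, hαcoc, hα⟩
  obtain ⟨e⟩ : Nonempty (ℕ ≃ G) := nonempty_equiv_of_countable
  let E := S.coboundaryEquiv Bool hαinj e
  have hL₁ : ∀ x, bshiftAddEquiv Bool (1 : G) x = x := bshift_one Bool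
  have hL : ∀ (g g' : G) (x : G → Bool), bshiftAddEquiv Bool (g * g') x =
      bshiftAddEquiv Bool g (bshiftAddEquiv Bool g' x) := bshift_mul Bool
  have hE : ∀ (g : G) (z : Z) (x : G → Bool), (E (a g z) (bshiftAddEquiv Bool g x)).2 =
      bshiftAddEquiv (ℕ → Bool) g (E z x).2 := S.coboundary_treeAction_bshift
  have hEmeas := OrbitCocycle.measurable_coboundaryEquiv (S := S) (A := Bool) (hinj := hαinj)
    (e := e) hameas hαmeas
  refine ⟨ℕ → Bool, inferInstance, inferInstance, inferInstance, inferInstance, inferInstance,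
    inferInstance, inferInstance, skewCocycle a (bshiftAddEquiv Bool) E, fun g y z => ?_,
    skewCocycle_mul hamul hL hE, fun p => ((E p.2 p.1).1, (E p.2 p.1).2, p.2),
    hEmeas.fst.prodMk (hEmeas.snd.prodMk measurable_snd), bijective_skewProduct,
    fun g p => congrArg (fun q => (q.1, q.2, a g p.2)) (map_act_eq_skewCocycle hE g p.2 p.1),
    fun _ _ _ hacont _ hαlc =>
      OrbitCocycle.continuous_snd_coboundaryEquiv (hinj := hαinj) (e := e) hacont hαlc⟩
  obtain ⟨σ, hσ⟩ := exists_addEquiv_eq_skewCocycle ha1 hamul hL₁ hL hE g z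
  exact ⟨σ, _, hσ ▸ OrbitCocycle.measurable_skewCocycle_zero g z,
    fun k => hσ ▸ skewCocycle_eq_add g y z k⟩

theorem stmt10 (G : Type*) [Group G] [Countable G] [Infinite G]
    [MeasurableSpace G] [DiscreteMeasurableSpace G]
    (Z : Type) [MeasurableSpace Z] [StandardBorelSpace Z]
    -- a Borel action of G on Z
    (a : G → Z → Z) (ha1 : a 1 = id) (hamul : ∀ g g' : G, a (g * g') = a g ∘ a g')
    (hameas : ∀ g : G, Measurable (a g))
    -- a Borel action of F₂ on Z
    (b : F2 → Z → Z) (hb1 : b 1 = id) (hbmul : ∀ f f' : F2, b (f * f') = b f ∘ b f')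
    (hbmeas : ∀ f : F2, Measurable (b f))
    -- every F₂-orbit is contained in a G-orbit
    (horbit : ∀ (f : F2) (z : Z), ∃ g : G, b f z = a g z)
    -- a Borel cocycle α : F₂ × Z → G relating the actions
    (α : F2 → Z → G) (hαmeas : ∀ f : F2, Measurable (α f))
    (hαcoc : ∀ (f₁ f₂ : F2) (z : Z), α (f₂ * f₁) z = α f₂ (b f₁ z) * α f₁ z)
    (hα : ∀ (f : F2) (z : Z), a (α f z) z = b f z)
    (hαinj : ∀ z : Z, Function.Injective fun f : F2 => α f z) :
    ∃ (K : Type) (_ : TopologicalSpace K) (_ : MeasurableSpace K) (_ : AddCommGroup K),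
      BorelSpace K ∧ CompactSpace K ∧ TopologicalSpace.MetrizableSpace K ∧
      IsTopologicalAddGroup K ∧
      ∃ β : G → (G → (ℕ → Bool)) → Z → K → K,
        -- each β(g, y, z) is a Borel affine bijection of K
        (∀ (g : G) (y : G → (ℕ → Bool)) (z : Z), ∃ (σ : K ≃+ K) (t : K),
          Measurable (⇑σ) ∧ ∀ k : K, β g y z k = σ k + t) ∧
        -- the cocycle identity
        (∀ (g₁ g₂ : G) (y : G → (ℕ → Bool)) (z : Z),
          β (g₂ * g₁) y z = (β g₂ (bshift (ℕ → Bool) g₁ y) (a g₁ z)) ∘ (β g₁ y z)) ∧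
        -- the equivariant Borel bijection
        ∃ φ : (G → Bool) × Z → K × (G → (ℕ → Bool)) × Z,
          Measurable φ ∧ Function.Bijective φ ∧
          (∀ (g : G) (p : (G → Bool) × Z),
            φ (bshift Bool g p.1, a g p.2) =
              (β g (φ p).2.1 (φ p).2.2 (φ p).1,
               bshift (ℕ → Bool) g (φ p).2.1, a g (φ p).2.2)) ∧
          -- moreover: continuity of the induced projection in the topological setting
          (∀ (tZ : TopologicalSpace Z), BorelSpace Z → PolishSpace Z →
            (∀ g : G, Continuous (a g)) →
            (∀ f : F2, Continuous (b f)) →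
            (∀ f : F2, IsLocallyConstant (α f)) →
            Continuous fun p : (G → Bool) × Z => (φ p).2.1) :=
  stmt10_general G Z a ha1 hamul hameas b hb1 α hαmeas hαcoc hα hαinj
end
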